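/- arXiv:2307.15180 — 11 statements merged into one kernel-verified Lean document; each statement's English description precedes it below -/
import Mathlib

section
/- Let M be a positive integer, N ≥ 2 an integer, and k an integer with 1 ≤ k ≤ M. If X is a binomial random variable with M trials and success probability 1/N, then P(X ≥ k) < C(M,⌊M/2⌋) / (N^{k-1} · (N−1)). -/
open MeasureTheory Finset

/-- Binomial tail bound (Lemma 5 applied to a binomial random variable): if `X` is a
binomial random variable with `M` trials and success probability `1/N` (with `N ≥ 2` an
integer), and `1 ≤ k ≤ M`, then `P(X ≥ k) < C(M,⌊M/2⌋) / (N^{k-1} (N-1))`. -/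
theorem binomial_tail_lt {Ω : Type*} [MeasurableSpace Ω]
    (μ : Measure Ω) [IsProbabilityMeasure μ]
    (M k N : ℕ) (hM : 0 < M) (hN : 2 ≤ N) (hk1 : 1 ≤ k) (hkM : k ≤ M)
    (X : Ω → ℕ) (hX : Measurable X)
    (hbin : ∀ i : ℕ, μ {ω | X ω = i}
      = ENNReal.ofReal ((M.choose i : ℝ) * (1 / N) ^ i * (1 - 1 / N) ^ (M - i))) :
    (μ {ω | k ≤ X ω}).toReal
      < (M.choose (M / 2) : ℝ) / ((N : ℝ) ^ (k - 1) * ((N : ℝ) - 1)) := by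
  have hN2 : (2:ℝ) ≤ (N:ℝ) := by exact_mod_cast hN
  set p : ℝ := 1 / (N:ℝ) with hp
  have hN0 : (0:ℝ) < N := by linarith
  have hp0 : 0 < p := by positivity
  have hp1 : p < 1 := by
    rw [hp, div_lt_one hN0]; linarith
  set C : ℝ := (M.choose (M / 2) : ℝ) with hC
  have hC1 : (1:ℝ) ≤ C := by
    rw [hC]
    exact_mod_cast Nat.choose_pos (Nat.div_le_self M 2)
  set a : ℕ → ℝ := fun i => (M.choose (k+i) : ℝ) * p ^ (k+i) * (1-p) ^ (M-(k+i)) with ha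
  set b : ℕ → ℝ := fun i => (C * p ^ k) * p ^ i with hb
  have ha0 : ∀ i, 0 ≤ a i := by
    intro i
    have h1 : (0:ℝ) ≤ 1 - p := by linarith
    positivity
  have hab : ∀ i, a i ≤ b i := by
    intro i
    have h1 : (0:ℝ) ≤ 1 - p := by linarith
    have h2 : (1-p) ^ (M-(k+i)) ≤ 1 := pow_le_one₀ h1 (by linarith)
    have h3 : (M.choose (k+i) : ℝ) ≤ C := by
      rw [hC]
      exact_mod_cast Nat.choose_le_middle (k+i) M
    calc a i ≤ C * p ^ (k+i) * 1 := by
          apply mul_le_mul (mul_le_mul h3 le_rfl (by positivity) (by linarith)) h2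
            (by positivity) (by positivity)
      _ = (C * p ^ k) * p ^ i := by rw [pow_add]; ring
  have hbsum : Summable b := (summable_geometric_of_lt_one hp0.le hp1).mul_left _
  have hasum : Summable a := Summable.of_nonneg_of_le ha0 hab hbsum
  have hstrict : a (M+1-k) < b (M+1-k) := by
    have hk : k + (M+1-k) = M+1 := by omega
    have : a (M+1-k) = 0 := by
      simp only [ha, hk, Nat.choose_eq_zero_of_lt (Nat.lt_succ_self M)]
      simp
    rw [this, hb]
    positivity
  have hlt : ∑' i, a i < ∑' i, b i := Summable.tsum_lt_tsum hab hstrict hasum hbsum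
  have hbsum_eq : ∑' i, b i = C / ((N:ℝ) ^ (k-1) * ((N:ℝ) - 1)) := by
    rw [hb, tsum_mul_left, tsum_geometric_of_lt_one hp0.le hp1]
    have hk' : k - 1 + 1 = k := by omega
    have hNne : (N:ℝ) ≠ 0 := ne_of_gt hN0
    have hN1 : (N:ℝ) - 1 ≠ 0 := by intro h; nlinarith
    have : C * p ^ k * (1-p)⁻¹ = C * (p ^ (k-1) * p) * (1-p)⁻¹ := by
      rw [← pow_succ, hk']
    rw [this, hp]
    field_simp
    ring_nf
    rw [← mul_pow, mul_inv_cancel₀ hNne, one_pow]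
  -- measure bound
  have hsub : {ω | k ≤ X ω} ⊆ ⋃ i : ℕ, {ω | X ω = k + i} := by
    intro ω hω
    have hω' : k ≤ X ω := hω
    exact Set.mem_iUnion.2 ⟨X ω - k, by simp; omega⟩
  have hmeas : μ {ω | k ≤ X ω} ≤ ENNReal.ofReal (∑' i, a i) := by
    calc μ {ω | k ≤ X ω} ≤ μ (⋃ i : ℕ, {ω | X ω = k + i}) := measure_mono hsub
      _ ≤ ∑' i : ℕ, μ {ω | X ω = k + i} := measure_iUnion_le _
      _ = ∑' i : ℕ, ENNReal.ofReal (a i) := by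
          apply tsum_congr; intro i; rw [hbin (k+i)]
      _ = ENNReal.ofReal (∑' i, a i) := (ENNReal.ofReal_tsum_of_nonneg ha0 hasum).symm
  have hto : (μ {ω | k ≤ X ω}).toReal ≤ ∑' i, a i := by
    have := ENNReal.toReal_mono (by simp) hmeas
    rwa [ENNReal.toReal_ofReal (tsum_nonneg ha0)] at this
  calc (μ {ω | k ≤ X ω}).toReal ≤ ∑' i, a i := hto
    _ < ∑' i, b i := hlt
    _ = C / ((N:ℝ) ^ (k-1) * ((N:ℝ) - 1)) := hbsum_eq
end

section
/- Out-of-distribution error bound (Lemma 2): Let M independent random variables Y_1,…,Y_M each take values uniformly in a finite set S of size N ≥ 2, let k be an integer with 1 ≤ k ≤ M, and fix s_x ∈ S. Then the probability that there exists some s ∈ S with s ≠ s_x such that at least k of the Y_i equal s is strictly less than E = C(M,⌊M/2⌋)/N^{k−1}. -/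
open MeasureTheory ProbabilityTheory Finset

/-- The number of the `Y i` (votes) equal to `s` at sample point `ω`. -/
def voteCount {Ω S : Type*} [DecidableEq S] {M : ℕ} (Y : Fin M → Ω → S) (s : S) (ω : Ω) : ℕ :=
  (Finset.univ.filter fun i => Y i ω = s).card

/-- Out-of-distribution error bound (Lemma 2): if `Y_1, …, Y_M` are independent random
variables each uniform on a finite set `S` of size `N ≥ 2`, `1 ≤ k ≤ M`, and `s_x ∈ S`,
then the probability that some `s ≠ s_x` receives at least `k` votes is strictly less than
`E = C(M,⌊M/2⌋) / N^{k-1}`. -/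
theorem ood_error_bound {Ω S : Type*} [MeasurableSpace Ω] [MeasurableSpace S]
    [MeasurableSingletonClass S] [Fintype S] [DecidableEq S]
    (μ : Measure Ω) [IsProbabilityMeasure μ]
    (M N k : ℕ) (hN : 2 ≤ N) (hcard : Fintype.card S = N) (hk1 : 1 ≤ k) (hkM : k ≤ M)
    (Y : Fin M → Ω → S) (hYm : ∀ i, Measurable (Y i))
    (hind : iIndepFun Y μ)
    (hunif : ∀ i s, μ {ω | Y i ω = s} = (N : ENNReal)⁻¹)
    (sx : S) :
    (μ {ω | ∃ s, s ≠ sx ∧ k ≤ voteCount Y s ω}).toReal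
      < (M.choose (M / 2) : ℝ) / (N : ℝ) ^ (k - 1) := by
  -- decompose the event
  have hev : {ω | ∃ s, s ≠ sx ∧ k ≤ voteCount Y s ω}
      = ⋃ s ∈ (Finset.univ.erase sx), {ω | k ≤ voteCount Y s ω} := by
    ext ω; simp [Finset.mem_erase, and_comm]
  -- each single-candidate event as union over k-subsets
  have hA : ∀ s : S, {ω | k ≤ voteCount Y s ω}
      = ⋃ T ∈ Finset.powersetCard k (Finset.univ : Finset (Fin M)),
          ⋂ i ∈ T, Y i ⁻¹' {s} := by
    intro s
    ext ω
    simp only [Set.mem_setOf_eq, Set.mem_iUnion, Finset.mem_powersetCard_univ,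
      Set.mem_iInter, Set.mem_preimage, Set.mem_singleton_iff]
    constructor
    · intro h
      obtain ⟨T, hT, hcardT⟩ := Finset.exists_subset_card_eq h
      exact ⟨T, hcardT, fun i hi => by simpa using (Finset.mem_filter.mp (hT hi)).2⟩
    · rintro ⟨T, hcardT, hT⟩
      calc k = T.card := hcardT.symm
        _ ≤ _ := Finset.card_le_card (fun i hi => Finset.mem_filter.mpr ⟨Finset.mem_univ i, hT i hi⟩)
  -- intersection measure via independence
  have hinter : ∀ (s : S) (T : Finset (Fin M)),
      μ (⋂ i ∈ T, Y i ⁻¹' {s}) = ((N : ENNReal)⁻¹) ^ T.card := by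
    intro s T
    have := hind.meas_biInter (S := T) (s := fun i => Y i ⁻¹' {s})
      (fun i _ => ⟨{s}, measurableSet_singleton s, rfl⟩)
    rw [this]
    have : ∀ i : Fin M, μ (Y i ⁻¹' {s}) = (N : ENNReal)⁻¹ := by
      intro i; simpa [Set.preimage, Set.mem_singleton_iff] using hunif i s
    simp [this]
  -- bound for a single s
  have hAs : ∀ s : S, μ {ω | k ≤ voteCount Y s ω}
      ≤ (M.choose k : ENNReal) * ((N : ENNReal)⁻¹) ^ k := by
    intro s
    rw [hA s]
    calc μ (⋃ T ∈ Finset.powersetCard k (Finset.univ : Finset (Fin M)), ⋂ i ∈ T, Y i ⁻¹' {s})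
        ≤ ∑ T ∈ Finset.powersetCard k (Finset.univ : Finset (Fin M)),
            μ (⋂ i ∈ T, Y i ⁻¹' {s}) := measure_biUnion_finset_le _ _
      _ = ∑ T ∈ Finset.powersetCard k (Finset.univ : Finset (Fin M)),
            ((N : ENNReal)⁻¹) ^ k := by
          refine Finset.sum_congr rfl fun T hT => ?_
          rw [hinter s T, (Finset.mem_powersetCard_univ.mp hT)]
      _ = (M.choose k : ENNReal) * ((N : ENNReal)⁻¹) ^ k := by
          rw [Finset.sum_const, Finset.card_powersetCard, Finset.card_univ, Fintype.card_fin,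
            nsmul_eq_mul]
  -- global union bound
  have hbound : μ {ω | ∃ s, s ≠ sx ∧ k ≤ voteCount Y s ω}
      ≤ ((N - 1 : ℕ) : ENNReal) * ((M.choose k : ENNReal) * ((N : ENNReal)⁻¹) ^ k) := by
    rw [hev]
    calc μ (⋃ s ∈ (Finset.univ.erase sx), {ω | k ≤ voteCount Y s ω})
        ≤ ∑ s ∈ Finset.univ.erase sx, μ {ω | k ≤ voteCount Y s ω} :=
          measure_biUnion_finset_le _ _
      _ ≤ ∑ s ∈ Finset.univ.erase sx,
            (M.choose k : ENNReal) * ((N : ENNReal)⁻¹) ^ k :=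
          Finset.sum_le_sum fun s _ => hAs s
      _ = ((N - 1 : ℕ) : ENNReal) * ((M.choose k : ENNReal) * ((N : ENNReal)⁻¹) ^ k) := by
          rw [Finset.sum_const, Finset.card_erase_of_mem (Finset.mem_univ sx),
            Finset.card_univ, hcard, nsmul_eq_mul]
  have hN0 : (N : ℝ) ≠ 0 := by positivity
  have hNpos : (0 : ℝ) < N := by positivity
  -- pass to reals
  have hfin : ((N - 1 : ℕ) : ENNReal) * ((M.choose k : ENNReal) * ((N : ENNReal)⁻¹) ^ k) ≠ ⊤ := by
    apply ENNReal.mul_ne_top (ENNReal.natCast_ne_top _)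
    exact ENNReal.mul_ne_top (ENNReal.natCast_ne_top _)
      (ENNReal.pow_ne_top (by simp; omega))
  have h1 : (μ {ω | ∃ s, s ≠ sx ∧ k ≤ voteCount Y s ω}).toReal
      ≤ ((N - 1 : ℕ) : ℝ) * ((M.choose k : ℝ) * ((N : ℝ)⁻¹) ^ k) := by
    have := ENNReal.toReal_mono hfin hbound
    refine this.trans_eq ?_
    rw [ENNReal.toReal_mul, ENNReal.toReal_mul, ENNReal.toReal_pow, ENNReal.toReal_inv,
      ENNReal.toReal_natCast, ENNReal.toReal_natCast, ENNReal.toReal_natCast]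
  refine h1.trans_lt ?_
  -- the real arithmetic
  have hnat : (N - 1) * M.choose k < N * M.choose (M / 2) := by
    have h2 : M.choose k ≤ M.choose (M / 2) := Nat.choose_le_middle k M
    have h3 : 0 < M.choose (M / 2) := Nat.choose_pos (Nat.div_le_self M 2)
    calc (N - 1) * M.choose k ≤ (N - 1) * M.choose (M / 2) := Nat.mul_le_mul_left _ h2
      _ < N * M.choose (M / 2) := mul_lt_mul_of_pos_right (by omega) h3
  have hNk : (N : ℝ) ^ k = (N : ℝ) ^ (k - 1) * N := by
    rw [← pow_succ]
    congr 1
    omega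
  rw [inv_pow, ← div_eq_mul_inv, ← mul_div_assoc, hNk, div_lt_div_iff₀ (by positivity) (by positivity)]
  have hcast : ((N - 1 : ℕ) : ℝ) * (M.choose k : ℝ) < (M.choose (M / 2) : ℝ) * N := by
    have := hnat
    have h := (Nat.cast_lt (α := ℝ)).mpr hnat
    push_cast at h
    linarith [h]
  calc ((N - 1 : ℕ) : ℝ) * (M.choose k : ℝ) * (N : ℝ) ^ (k - 1)
      < ((M.choose (M / 2) : ℝ) * N) * (N : ℝ) ^ (k - 1) := by
        apply mul_lt_mul_of_pos_right hcast (by positivity)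
    _ = (M.choose (M / 2) : ℝ) * ((N : ℝ) ^ (k - 1) * N) := by ring
end

section
/- In-distribution wrong-consensus bound (Lemma 3): Let Y_1,…,Y_M be independent random variables taking values in a finite set S of size N ≥ 2 with a distinguished element s_x. Suppose each Y_i satisfies P(Y_i = s_x) = β_i and P(Y_i = s) = (1−β_i)/(N−1) for every s ≠ s_x, where each β_i > 1/N. Then for any integer k with 1 ≤ k ≤ M, the probability that there exists s ≠ s_x such that at least k of the Y_i equal s is strictly less than E = C(M,⌊M/2⌋)/N^{k−1}. -/
open MeasureTheory ProbabilityTheory Finset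
open scoped ENNReal

/-- In-distribution wrong-consensus bound (Lemma 3): if `Y_1, …, Y_M` are independent with
`P(Y_i = s_x) = β_i > 1/N` and `P(Y_i = s) = (1-β_i)/(N-1)` for `s ≠ s_x`, over a finite set
`S` of size `N ≥ 2`, then for `1 ≤ k ≤ M` the probability that some `s ≠ s_x` receives at
least `k` votes is strictly less than `E = C(M,⌊M/2⌋) / N^{k-1}`. -/
theorem ind_wrong_consensus_bound {Ω S : Type*} [MeasurableSpace Ω] [MeasurableSpace S]
    [MeasurableSingletonClass S] [Fintype S] [DecidableEq S]
    (μ : Measure Ω) [IsProbabilityMeasure μ]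
    (M N k : ℕ) (hN : 2 ≤ N) (hcard : Fintype.card S = N) (hk1 : 1 ≤ k) (hkM : k ≤ M)
    (Y : Fin M → Ω → S) (hYm : ∀ i, Measurable (Y i))
    (hind : iIndepFun Y μ)
    (sx : S) (β : Fin M → ℝ)
    (hβ : ∀ i, 1 / (N : ℝ) < β i)
    (hsx : ∀ i, μ {ω | Y i ω = sx} = ENNReal.ofReal (β i))
    (hother : ∀ i s, s ≠ sx →
      μ {ω | Y i ω = s} = ENNReal.ofReal ((1 - β i) / ((N : ℝ) - 1))) :
    (μ {ω | ∃ s, s ≠ sx ∧ k ≤ voteCount Y s ω}).toReal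
      < (M.choose (M / 2) : ℝ) / (N : ℝ) ^ (k - 1) := by
  have hN0 : (0:ℝ) < N := by positivity
  have hN1 : (1:ℝ) < N := by exact_mod_cast hN.trans_lt' one_lt_two
  set q : ℝ≥0∞ := ENNReal.ofReal (1 / N) with hq
  -- single-vote bound
  have hsingle : ∀ i s, s ≠ sx → μ {ω | Y i ω = s} ≤ q := by
    intro i s hs
    rw [hother i s hs]
    apply ENNReal.ofReal_le_ofReal
    rw [div_le_div_iff₀ (by linarith) hN0]
    have := hβ i
    rw [div_lt_iff₀ hN0] at this
    nlinarith
  -- union bound over subsets of size k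
  have hBsub : ∀ s : S, {ω | k ≤ voteCount Y s ω} ⊆
      ⋃ T ∈ Finset.powersetCard k (univ : Finset (Fin M)), ⋂ i ∈ T, {ω | Y i ω = s} := by
    intro s ω hω
    obtain ⟨T, hTsub, hTcard⟩ :=
      Finset.exists_subset_card_eq (s := Finset.univ.filter fun i => Y i ω = s) (n := k) hω
    refine Set.mem_iUnion₂.2 ⟨T, Finset.mem_powersetCard.2 ⟨Finset.subset_univ _, hTcard⟩, ?_⟩
    exact Set.mem_iInter₂.2 fun i hi => (Finset.mem_filter.1 (hTsub hi)).2
  have hBs : ∀ s : S, s ≠ sx → μ {ω | k ≤ voteCount Y s ω} ≤ (M.choose k : ℝ≥0∞) * q ^ k := by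
    intro s hs
    calc μ {ω | k ≤ voteCount Y s ω}
        ≤ μ (⋃ T ∈ Finset.powersetCard k (univ : Finset (Fin M)), ⋂ i ∈ T, {ω | Y i ω = s}) :=
          measure_mono (hBsub s)
      _ ≤ ∑ T ∈ Finset.powersetCard k (univ : Finset (Fin M)),
            μ (⋂ i ∈ T, {ω | Y i ω = s}) := measure_biUnion_finset_le _ _
      _ ≤ ∑ T ∈ Finset.powersetCard k (univ : Finset (Fin M)), q ^ k := by
          refine Finset.sum_le_sum fun T hT => ?_
          have hcardT : T.card = k := (Finset.mem_powersetCard.1 hT).2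
          have := hind.meas_biInter (S := T) (s := fun i => {ω | Y i ω = s})
            (fun i _ => ⟨{s}, measurableSet_singleton s, rfl⟩)
          rw [this]
          calc ∏ i ∈ T, μ {ω | Y i ω = s} ≤ ∏ _i ∈ T, q :=
                Finset.prod_le_prod' fun i _ => hsingle i s hs
            _ = q ^ k := by rw [Finset.prod_const, hcardT]
      _ = (M.choose k : ℝ≥0∞) * q ^ k := by
          rw [Finset.sum_const, Finset.card_powersetCard, Finset.card_univ, Fintype.card_fin,
            nsmul_eq_mul]
  -- total bound
  have htotal : μ {ω | ∃ s, s ≠ sx ∧ k ≤ voteCount Y s ω}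
      ≤ ((N - 1 : ℕ) : ℝ≥0∞) * ((M.choose k : ℝ≥0∞) * q ^ k) := by
    calc μ {ω | ∃ s, s ≠ sx ∧ k ≤ voteCount Y s ω}
        ≤ μ (⋃ s ∈ Finset.univ.erase sx, {ω | k ≤ voteCount Y s ω}) := by
          refine measure_mono fun ω hω => ?_
          obtain ⟨s, hs, hks⟩ := hω
          exact Set.mem_biUnion (Finset.mem_erase.2 ⟨hs, Finset.mem_univ s⟩) hks
      _ ≤ ∑ s ∈ Finset.univ.erase sx, μ {ω | k ≤ voteCount Y s ω} :=
          measure_biUnion_finset_le _ _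
      _ ≤ ∑ s ∈ Finset.univ.erase sx, (M.choose k : ℝ≥0∞) * q ^ k :=
          Finset.sum_le_sum fun s hs => hBs s (Finset.mem_erase.1 hs).1
      _ = ((N - 1 : ℕ) : ℝ≥0∞) * ((M.choose k : ℝ≥0∞) * q ^ k) := by
          rw [Finset.sum_const, nsmul_eq_mul, Finset.card_erase_of_mem (Finset.mem_univ sx),
            Finset.card_univ, hcard]
  -- pass to reals
  have hfin : ((N - 1 : ℕ) : ℝ≥0∞) * ((M.choose k : ℝ≥0∞) * q ^ k) ≠ ⊤ := by
    apply ENNReal.mul_ne_top (ENNReal.natCast_ne_top _)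
    exact ENNReal.mul_ne_top (ENNReal.natCast_ne_top _) (ENNReal.pow_ne_top ENNReal.ofReal_ne_top)
  have hto : (μ {ω | ∃ s, s ≠ sx ∧ k ≤ voteCount Y s ω}).toReal
      ≤ ((N - 1 : ℕ) : ℝ) * ((M.choose k : ℝ) * (1 / N) ^ k) := by
    have := ENNReal.toReal_mono hfin htotal
    rwa [ENNReal.toReal_mul, ENNReal.toReal_mul, ENNReal.toReal_pow,
      ENNReal.toReal_natCast, ENNReal.toReal_natCast, hq,
      ENNReal.toReal_ofReal (by positivity)] at this
  refine hto.trans_lt ?_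
  -- final real arithmetic
  have hC1 : (1:ℝ) ≤ (M.choose k : ℝ) := by exact_mod_cast (Nat.choose_pos hkM)
  have hCC' : (M.choose k : ℝ) ≤ (M.choose (M / 2) : ℝ) := by
    exact_mod_cast Nat.choose_le_middle k M
  have hNN : ((N - 1 : ℕ) : ℝ) = (N : ℝ) - 1 := by
    have : (1:ℕ) ≤ N := by omega
    push_cast [this]; ring
  rw [hNN, one_div, inv_pow, ← div_eq_mul_inv, mul_div_assoc']
  rw [div_lt_div_iff₀ (by positivity) (by positivity)]
  have hpowk : (N:ℝ) ^ k = (N:ℝ) ^ (k - 1) * N := by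
    rw [← pow_succ]; congr 1; omega
  rw [hpowk]
  have hpp : (0:ℝ) < (N:ℝ) ^ (k - 1) := by positivity
  have h1 : ((N:ℝ) - 1) * (M.choose k : ℝ) < (M.choose (M / 2) : ℝ) * N := by nlinarith
  nlinarith [mul_lt_mul_of_pos_right h1 hpp]
end

section
/- Majority-prediction lower bound: Under assumptions (A1)–(A2), for an in-distribution input the probability that the ensemble's plurality prediction equals the correct string s_x with plurality count at least k is strictly greater than ∑_{i=k}^{M} C(M,i) β_min^i (1−β_max)^{M−i} − E, where E = C(M,⌊M/2⌋)/N^{k−1}. -/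
open MeasureTheory ProbabilityTheory Finset

/-- Majority-prediction lower bound: under assumptions (A1)–(A2), for an in-distribution
input, the probability that the correct string `s_x` receives at least `k` votes and
strictly more votes than every other string is strictly greater than
`∑_{i=k}^{M} C(M,i) β_min^i (1-β_max)^{M-i} - E`, where `E = C(M,⌊M/2⌋)/N^{k-1}`. -/
theorem majority_prediction_lower_bound {Ω S : Type*} [MeasurableSpace Ω] [MeasurableSpace S]
    [MeasurableSingletonClass S] [Fintype S] [DecidableEq S]
    (μ : Measure Ω) [IsProbabilityMeasure μ]
    (M N k : ℕ) (hN : 2 ≤ N) (hcard : Fintype.card S = N) (hk1 : 1 ≤ k) (hkM : k ≤ M)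
    (Y : Fin M → Ω → S) (hYm : ∀ i, Measurable (Y i))
    (hind : iIndepFun Y μ)
    (sx : S) (β : Fin M → ℝ) (βmin βmax : ℝ)
    (hA1 : 1 / (N : ℝ) < βmin)
    (hsx : ∀ i, μ {ω | Y i ω = sx} = ENNReal.ofReal (β i))
    (hother : ∀ i s, s ≠ sx →
      μ {ω | Y i ω = s} = ENNReal.ofReal ((1 - β i) / ((N : ℝ) - 1)))
    (hminle : ∀ i, βmin ≤ β i) (hminmem : ∃ i, β i = βmin)
    (hmaxle : ∀ i, β i ≤ βmax) (hmaxmem : ∃ i, β i = βmax) :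
    (μ {ω | k ≤ voteCount Y sx ω ∧ ∀ s, s ≠ sx → voteCount Y s ω < voteCount Y sx ω}).toReal
      > ∑ i ∈ Finset.Icc k M, (M.choose i : ℝ) * βmin ^ i * (1 - βmax) ^ (M - i)
        - (M.choose (M / 2) : ℝ) / (N : ℝ) ^ (k - 1) := by
  classical
  have hN0 : (0:ℝ) < N := by
    have : (0:ℕ) < N := by omega
    exact_mod_cast this
  have hN1 : (1:ℝ) < N := by
    have : (1:ℕ) < N := by omega
    exact_mod_cast this
  have hβmin0 : 0 < βmin := lt_trans (by positivity) hA1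
  have hβi1 : ∀ i, β i ≤ 1 := by
    intro i
    have h1 : μ {ω | Y i ω = sx} ≤ 1 := prob_le_one
    rw [hsx i] at h1
    exact ENNReal.ofReal_le_one.mp h1
  have hβi0 : ∀ i, 0 ≤ β i := fun i => le_trans hβmin0.le (hminle i)
  have hβmax1 : βmax ≤ 1 := by
    obtain ⟨i, hi⟩ := hmaxmem
    exact hi ▸ hβi1 i
  set A : Set Ω := {ω | k ≤ voteCount Y sx ω} with hAdef
  set B : Set Ω := ⋃ s ∈ Finset.univ.erase sx, {ω | k ≤ voteCount Y s ω} with hBdef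
  set E0 : Set Ω :=
    {ω | k ≤ voteCount Y sx ω ∧ ∀ s, s ≠ sx → voteCount Y s ω < voteCount Y sx ω} with hE0def
  -- A ⊆ E0 ∪ B
  have hsub : A ⊆ E0 ∪ B := by
    intro ω hω
    by_cases hb : ω ∈ B
    · exact Or.inr hb
    · refine Or.inl ⟨hω, fun s hs => ?_⟩
      have hlt : ¬ k ≤ voteCount Y s ω := by
        intro hks
        exact hb (Set.mem_iUnion₂.mpr ⟨s, Finset.mem_erase.mpr ⟨hs, Finset.mem_univ s⟩, hks⟩)
      have hωA : k ≤ voteCount Y sx ω := hω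
      omega
  -- upper bound on individual wrong-string probabilities
  have hq : ∀ (i : Fin M) (s : S), s ≠ sx →
      μ {ω | Y i ω = s} ≤ ENNReal.ofReal (1 / (N:ℝ)) := by
    intro i s hs
    rw [hother i s hs]
    apply ENNReal.ofReal_le_ofReal
    rw [div_le_div_iff₀ (by linarith) hN0]
    have h1 : 1 / (N:ℝ) ≤ β i := le_of_lt (lt_of_lt_of_le hA1 (hminle i))
    have h2 : (1 / (N:ℝ)) * N ≤ β i * N := mul_le_mul_of_nonneg_right h1 hN0.le
    have h3 : (1 / (N:ℝ)) * N = 1 := by field_simp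
    nlinarith
  -- upper bound on μ {k ≤ voteCount s} for s ≠ sx
  have hVs : ∀ s : S, s ≠ sx → μ {ω | k ≤ voteCount Y s ω}
      ≤ (M.choose k : ENNReal) * ENNReal.ofReal ((1 / (N:ℝ)) ^ k) := by
    intro s hs
    have hcover : {ω | k ≤ voteCount Y s ω} ⊆
        ⋃ T ∈ Finset.powersetCard k (Finset.univ : Finset (Fin M)),
          ⋂ i ∈ T, {ω | Y i ω = s} := by
      intro ω hω
      have hω' : k ≤ (Finset.univ.filter fun i => Y i ω = s).card := hω
      obtain ⟨T, hTsub, hTcard⟩ := Finset.exists_subset_card_eq hω'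
      refine Set.mem_iUnion₂.mpr ⟨T, Finset.mem_powersetCard.mpr ⟨Finset.subset_univ _, hTcard⟩, ?_⟩
      exact Set.mem_iInter₂.mpr fun i hi => (Finset.mem_filter.mp (hTsub hi)).2
    calc μ {ω | k ≤ voteCount Y s ω}
        ≤ ∑ T ∈ Finset.powersetCard k (Finset.univ : Finset (Fin M)),
            μ (⋂ i ∈ T, {ω | Y i ω = s}) :=
          (measure_mono hcover).trans (measure_biUnion_finset_le _ _)
      _ ≤ ∑ T ∈ Finset.powersetCard k (Finset.univ : Finset (Fin M)),
            ENNReal.ofReal ((1 / (N:ℝ)) ^ k) := by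
          apply Finset.sum_le_sum
          intro T hT
          have hTcard := (Finset.mem_powersetCard.mp hT).2
          have hmeq : μ (⋂ i ∈ T, {ω | Y i ω = s}) = ∏ i ∈ T, μ {ω | Y i ω = s} := by
            refine hind.meas_biInter (fun i _ => ?_)
            exact ⟨{s}, measurableSet_singleton s, rfl⟩
          rw [hmeq]
          calc ∏ i ∈ T, μ {ω | Y i ω = s}
              ≤ ∏ i ∈ T, ENNReal.ofReal (1 / (N:ℝ)) :=
                Finset.prod_le_prod' fun i _ => hq i s hs
            _ = ENNReal.ofReal ((1 / (N:ℝ)) ^ k) := by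
                rw [Finset.prod_const, hTcard, ← ENNReal.ofReal_pow (by positivity)]
      _ = (M.choose k : ENNReal) * ENNReal.ofReal ((1 / (N:ℝ)) ^ k) := by
          rw [Finset.sum_const, Finset.card_powersetCard, Finset.card_univ, Fintype.card_fin,
            nsmul_eq_mul]
  -- upper bound on μ B
  have hB_le : μ B ≤ ((N - 1 : ℕ) : ENNReal) *
      ((M.choose k : ENNReal) * ENNReal.ofReal ((1 / (N:ℝ)) ^ k)) := by
    calc μ B ≤ ∑ s ∈ Finset.univ.erase sx, μ {ω | k ≤ voteCount Y s ω} :=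
          measure_biUnion_finset_le _ _
      _ ≤ ∑ _s ∈ Finset.univ.erase sx,
            ((M.choose k : ENNReal) * ENNReal.ofReal ((1 / (N:ℝ)) ^ k)) :=
          Finset.sum_le_sum fun s hs => hVs s (Finset.ne_of_mem_erase hs)
      _ = _ := by
          rw [Finset.sum_const, Finset.card_erase_of_mem (Finset.mem_univ sx),
            Finset.card_univ, hcard, nsmul_eq_mul]
  -- product of ite
  have hprodite : ∀ (a b : ℝ) (T : Finset (Fin M)),
      (∏ i : Fin M, (if i ∈ T then a else b)) = a ^ T.card * b ^ (M - T.card) := by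
    intro a b T
    rw [Finset.prod_ite, Finset.prod_const, Finset.prod_const]
    congr 2
    · simp [Finset.filter_mem_eq_inter]
    · have : Finset.univ.filter (fun i => ¬ i ∈ T) = Tᶜ := by
        ext i; simp [Finset.mem_compl]
      rw [this, Finset.card_compl, Fintype.card_fin]
  -- lower bound on each elementary event
  have hEA : ∀ T : Finset (Fin M),
      ENNReal.ofReal (βmin ^ T.card * (1 - βmax) ^ (M - T.card)) ≤
        μ (⋂ i, Y i ⁻¹' (if i ∈ T then ({sx} : Set S) else {sx}ᶜ)) := by
    intro T
    have hmeq : μ (⋂ i, Y i ⁻¹' (if i ∈ T then ({sx} : Set S) else {sx}ᶜ))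
        = ∏ i, μ (Y i ⁻¹' (if i ∈ T then ({sx} : Set S) else {sx}ᶜ)) := by
      refine hind.meas_iInter (fun i => ?_)
      exact ⟨if i ∈ T then ({sx} : Set S) else {sx}ᶜ,
        by split <;> [exact measurableSet_singleton sx; exact (measurableSet_singleton sx).compl],
        rfl⟩
    rw [hmeq]
    have hfac : ∀ i : Fin M, μ (Y i ⁻¹' (if i ∈ T then ({sx} : Set S) else {sx}ᶜ))
        = ENNReal.ofReal (if i ∈ T then β i else 1 - β i) := by
      intro i
      by_cases hi : i ∈ T
      · simp only [hi, if_true]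
        exact hsx i
      · simp only [hi, if_false]
        rw [Set.preimage_compl,
          measure_compl ((hYm i) (measurableSet_singleton sx)) (measure_ne_top μ _)]
        have : μ (Y i ⁻¹' {sx}) = ENNReal.ofReal (β i) := hsx i
        rw [this, ENNReal.ofReal_sub _ (hβi0 i), ENNReal.ofReal_one, measure_univ]
    calc ENNReal.ofReal (βmin ^ T.card * (1 - βmax) ^ (M - T.card))
        = ENNReal.ofReal (∏ i : Fin M, (if i ∈ T then βmin else 1 - βmax)) := by
          rw [hprodite]
      _ ≤ ENNReal.ofReal (∏ i : Fin M, (if i ∈ T then β i else 1 - β i)) := by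
          apply ENNReal.ofReal_le_ofReal
          apply Finset.prod_le_prod
          · intro i _
            split
            · exact hβmin0.le
            · linarith
          · intro i _
            split
            · exact hminle i
            · linarith [hmaxle i]
      _ = ∏ i : Fin M, ENNReal.ofReal (if i ∈ T then β i else 1 - β i) := by
          rw [ENNReal.ofReal_prod_of_nonneg]
          intro i _
          split
          · exact hβi0 i
          · linarith [hβi1 i]
      _ = ∏ i, μ (Y i ⁻¹' (if i ∈ T then ({sx} : Set S) else {sx}ᶜ)) :=
          Finset.prod_congr rfl fun i _ => (hfac i).symm
  -- the family of vote-configurations with at least k correct votes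
  set 𝒯 : Finset (Finset (Fin M)) :=
    (Finset.Icc k M).biUnion (fun j => Finset.powersetCard j Finset.univ) with h𝒯def
  have hTdisj : (↑(Finset.Icc k M) : Set ℕ).PairwiseDisjoint
      (fun j => Finset.powersetCard j (Finset.univ : Finset (Fin M))) := by
    intro a _ b _ hab
    refine Finset.disjoint_left.mpr fun T hTa hTb => hab ?_
    rw [← (Finset.mem_powersetCard.mp hTa).2, ← (Finset.mem_powersetCard.mp hTb).2]
  have hdisjU : (↑𝒯 : Set (Finset (Fin M))).PairwiseDisjoint
      (fun T => ⋂ i, Y i ⁻¹' (if i ∈ T then ({sx} : Set S) else {sx}ᶜ)) := by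
    intro T _ T' _ hne
    refine Set.disjoint_left.mpr fun ω hω hω' => hne ?_
    ext i
    have h1 := Set.mem_iInter.mp hω i
    have h2 := Set.mem_iInter.mp hω' i
    by_cases hi : i ∈ T <;> by_cases hi' : i ∈ T' <;>
      simp only [hi, hi', if_true, if_false, Set.mem_preimage, Set.mem_singleton_iff,
        Set.mem_compl_iff] at h1 h2 ⊢ <;> tauto
  have hmeasE : ∀ T ∈ 𝒯, MeasurableSet
      (⋂ i, Y i ⁻¹' (if i ∈ T then ({sx} : Set S) else {sx}ᶜ)) := by
    intro T _
    refine MeasurableSet.iInter fun i => (hYm i) ?_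
    split
    · exact measurableSet_singleton sx
    · exact (measurableSet_singleton sx).compl
  have hUsub : (⋃ T ∈ 𝒯, ⋂ i, Y i ⁻¹' (if i ∈ T then ({sx} : Set S) else {sx}ᶜ)) ⊆ A := by
    intro ω hω
    obtain ⟨T, hT, hωT⟩ := Set.mem_iUnion₂.mp hω
    have hfil : Finset.univ.filter (fun i => Y i ω = sx) = T := by
      ext i
      simp only [Finset.mem_filter, Finset.mem_univ, true_and]
      have hmem := Set.mem_iInter.mp hωT i
      constructor
      · intro h
        by_contra hi
        simp only [hi, if_false, Set.mem_preimage, Set.mem_compl_iff,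
          Set.mem_singleton_iff] at hmem
        exact hmem h
      · intro hi
        simpa only [hi, if_true, Set.mem_preimage, Set.mem_singleton_iff] using hmem
    obtain ⟨j, hj, hTj⟩ := Finset.mem_biUnion.mp hT
    have hjk : k ≤ j := (Finset.mem_Icc.mp hj).1
    have hTcard : T.card = j := (Finset.mem_powersetCard.mp hTj).2
    show k ≤ voteCount Y sx ω
    unfold voteCount
    rw [hfil, hTcard]
    exact hjk
  -- lower bound on μ A
  set S1 : ℝ := ∑ i ∈ Finset.Icc k M, (M.choose i : ℝ) * βmin ^ i * (1 - βmax) ^ (M - i)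
    with hS1def
  have hterm0 : ∀ j, (0:ℝ) ≤ (M.choose j : ℝ) * βmin ^ j * (1 - βmax) ^ (M - j) := by
    intro j
    have h1 : (0:ℝ) ≤ 1 - βmax := by linarith
    positivity
  have hS1nonneg : 0 ≤ S1 := Finset.sum_nonneg fun j _ => hterm0 j
  have hA_ge : ENNReal.ofReal S1 ≤ μ A := by
    have hsum : ∑ T ∈ 𝒯, ENNReal.ofReal (βmin ^ T.card * (1 - βmax) ^ (M - T.card))
        = ENNReal.ofReal S1 := by
      rw [h𝒯def, Finset.sum_biUnion hTdisj, hS1def]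
      rw [ENNReal.ofReal_sum_of_nonneg fun j _ => hterm0 j]
      apply Finset.sum_congr rfl
      intro j _
      have : ∀ T ∈ Finset.powersetCard j (Finset.univ : Finset (Fin M)),
          ENNReal.ofReal (βmin ^ T.card * (1 - βmax) ^ (M - T.card))
            = ENNReal.ofReal (βmin ^ j * (1 - βmax) ^ (M - j)) := by
        intro T hT
        rw [(Finset.mem_powersetCard.mp hT).2]
      rw [Finset.sum_congr rfl this, Finset.sum_const, Finset.card_powersetCard,
        Finset.card_univ, Fintype.card_fin, nsmul_eq_mul, ← ENNReal.ofReal_natCast,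
        ← ENNReal.ofReal_mul (by positivity)]
      congr 1
      ring
    calc ENNReal.ofReal S1
        = ∑ T ∈ 𝒯, ENNReal.ofReal (βmin ^ T.card * (1 - βmax) ^ (M - T.card)) := hsum.symm
      _ ≤ ∑ T ∈ 𝒯, μ (⋂ i, Y i ⁻¹' (if i ∈ T then ({sx} : Set S) else {sx}ᶜ)) :=
          Finset.sum_le_sum fun T _ => hEA T
      _ = μ (⋃ T ∈ 𝒯, ⋂ i, Y i ⁻¹' (if i ∈ T then ({sx} : Set S) else {sx}ᶜ)) :=
          (measure_biUnion_finset hdisjU hmeasE).symm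
      _ ≤ μ A := measure_mono hUsub
  -- convert to real numbers
  have h1 : S1 ≤ (μ A).toReal := by
    have := ENNReal.toReal_mono (measure_ne_top μ A) hA_ge
    rwa [ENNReal.toReal_ofReal hS1nonneg] at this
  have h2 : (μ B).toReal ≤ ((N - 1 : ℕ) : ℝ) * (M.choose k : ℝ) * (1 / (N:ℝ)) ^ k := by
    have hne : ((N - 1 : ℕ) : ENNReal) *
        ((M.choose k : ENNReal) * ENNReal.ofReal ((1 / (N:ℝ)) ^ k)) ≠ ⊤ := by
      apply ENNReal.mul_ne_top (ENNReal.natCast_ne_top _)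
      exact ENNReal.mul_ne_top (ENNReal.natCast_ne_top _) ENNReal.ofReal_ne_top
    have := ENNReal.toReal_mono hne hB_le
    rwa [ENNReal.toReal_mul, ENNReal.toReal_mul, ENNReal.toReal_natCast,
      ENNReal.toReal_natCast, ENNReal.toReal_ofReal (by positivity), ← mul_assoc] at this
  have h3 : ((N - 1 : ℕ) : ℝ) * (M.choose k : ℝ) * (1 / (N:ℝ)) ^ k
      < (M.choose (M / 2) : ℝ) / (N:ℝ) ^ (k - 1) := by
    have hchoosepos : 0 < M.choose k := Nat.choose_pos hkM
    have hnat : (N - 1) * M.choose k < N * M.choose (M / 2) := by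
      calc (N - 1) * M.choose k < N * M.choose k := by
            apply Nat.mul_lt_mul_of_lt_of_le (by omega) (le_refl _) hchoosepos
        _ ≤ N * M.choose (M / 2) := Nat.mul_le_mul_left _ (Nat.choose_le_middle k M)
    have hpow : (0:ℝ) < (1 / (N:ℝ)) ^ k := by positivity
    have hcast : ((N - 1 : ℕ) : ℝ) * (M.choose k : ℝ) < (N:ℝ) * (M.choose (M / 2) : ℝ) := by
      have h : (((N - 1) * M.choose k : ℕ) : ℝ) < ((N * M.choose (M / 2) : ℕ) : ℝ) := by
        exact_mod_cast hnat
      simpa [Nat.cast_mul] using h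
    calc ((N - 1 : ℕ) : ℝ) * (M.choose k : ℝ) * (1 / (N:ℝ)) ^ k
        < ((N:ℝ) * (M.choose (M / 2) : ℝ)) * (1 / (N:ℝ)) ^ k := by
          exact mul_lt_mul_of_pos_right hcast hpow
      _ = (M.choose (M / 2) : ℝ) / (N:ℝ) ^ (k - 1) := by
          obtain ⟨k', rfl⟩ : ∃ k', k = k' + 1 := ⟨k - 1, by omega⟩
          simp only [Nat.add_sub_cancel]
          rw [one_div, inv_pow]
          field_simp
          ring
  have h4 : (μ A).toReal ≤ (μ E0).toReal + (μ B).toReal := by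
    have hle : μ A ≤ μ E0 + μ B := (measure_mono hsub).trans (measure_union_le _ _)
    have := ENNReal.toReal_mono
      (ENNReal.add_ne_top.mpr ⟨measure_ne_top μ E0, measure_ne_top μ B⟩) hle
    rwa [ENNReal.toReal_add (measure_ne_top μ E0) (measure_ne_top μ B)] at this
  have hgoal : (μ E0).toReal > S1 - (M.choose (M / 2) : ℝ) / (N:ℝ) ^ (k - 1) := by
    linarith
  exact hgoal
end

section
/- Right decision rate lower bound (Theorem 4): Under assumptions (A1)–(A3), the EnSolver m with ensemble size M, output domain size N, uncertainty threshold τ (with k = M(1−τ)+1 a positive integer ≤ M), and in-distribution proportion α ∈ [0,1] satisfies R_rd(m) > α·∑_{i=k}^{M} C(M,i) β_min^i (1−β_max)^{M−i} + (1−α) − E(M,N,τ), where E(M,N,τ) = C(M,⌊M/2⌋)/N^{M(1−τ)}. -/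
open MeasureTheory ProbabilityTheory Finset

open scoped ENNReal
set_option linter.unusedSectionVars false

section Aux
variable {Ω S : Type*} [MeasurableSpace Ω] [MeasurableSpace S] [MeasurableSingletonClass S]
  [DecidableEq S] {M : ℕ}

lemma measurable_voteCount (Y : Fin M → Ω → S) (hYm : ∀ i, Measurable (Y i)) (s : S) :
    Measurable (voteCount Y s) := by
  have h : voteCount Y s = fun ω => ∑ i : Fin M, if Y i ω = s then 1 else 0 := by
    funext ω; rw [voteCount, Finset.card_filter]
  rw [h]
  exact Finset.measurable_sum _ fun i _ =>
    Measurable.ite ((hYm i) (measurableSet_singleton s)) measurable_const measurable_const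

lemma vs_eq (Y : Fin M → Ω → S) (s : S) (T : Finset (Fin M)) :
    {ω | Finset.univ.filter (fun i => Y i ω = s) = T}
      = ⋂ i, Y i ⁻¹' (if i ∈ T then {s} else {s}ᶜ) := by
  ext ω
  simp only [Set.mem_setOf_eq, Set.mem_iInter, Finset.ext_iff, Finset.mem_filter,
    Finset.mem_univ, true_and]
  constructor
  · intro h i
    by_cases hi : i ∈ T <;> simp only [hi, if_true, if_false] <;>
      simp [Set.mem_preimage, h i, hi]
  · intro h i
    have := h i
    by_cases hi : i ∈ T <;> simp only [hi, if_true, if_false] at this ⊢ <;>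
      simp_all [Set.mem_preimage]

lemma vs_measurable (Y : Fin M → Ω → S) (hYm : ∀ i, Measurable (Y i)) (s : S)
    (T : Finset (Fin M)) :
    MeasurableSet {ω | Finset.univ.filter (fun i => Y i ω = s) = T} := by
  rw [vs_eq]
  refine MeasurableSet.iInter fun i => (hYm i) ?_
  split
  · exact measurableSet_singleton s
  · exact (measurableSet_singleton s).compl

lemma meas_vs (ν : Measure Ω) [IsProbabilityMeasure ν] (Y : Fin M → Ω → S)
    (hYm : ∀ i, Measurable (Y i))
    (hind : iIndepFun Y ν) (s : S) (T : Finset (Fin M)) :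
    ν {ω | Finset.univ.filter (fun i => Y i ω = s) = T}
      = ∏ i, (if i ∈ T then ν {ω | Y i ω = s} else 1 - ν {ω | Y i ω = s}) := by
  rw [vs_eq, hind.meas_iInter (fun i => ⟨if i ∈ T then {s} else {s}ᶜ, by
      split
      · exact measurableSet_singleton s
      · exact (measurableSet_singleton s).compl, rfl⟩)]
  refine Finset.prod_congr rfl fun i _ => ?_
  by_cases hi : i ∈ T
  · simp only [hi, if_true]; rfl
  · simp only [hi, if_false]
    rw [show Y i ⁻¹' {s}ᶜ = (Y i ⁻¹' {s})ᶜ from rfl,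
      measure_compl ((hYm i) (measurableSet_singleton s)) (measure_ne_top _ _), measure_univ]
    rfl

lemma meas_ge_eq (ν : Measure Ω) [IsProbabilityMeasure ν] (Y : Fin M → Ω → S)
    (hYm : ∀ i, Measurable (Y i))
    (hind : iIndepFun Y ν) (s : S) (k : ℕ) :
    ν {ω | k ≤ voteCount Y s ω}
      = ∑ T ∈ (Finset.univ : Finset (Finset (Fin M))).filter (fun T => k ≤ T.card),
          ∏ i, (if i ∈ T then ν {ω | Y i ω = s} else 1 - ν {ω | Y i ω = s}) := by
  have hdec : {ω | k ≤ voteCount Y s ω}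
      = ⋃ T ∈ (Finset.univ : Finset (Finset (Fin M))).filter (fun T => k ≤ T.card),
          {ω | Finset.univ.filter (fun i => Y i ω = s) = T} := by
    ext ω
    simp only [Set.mem_setOf_eq, Set.mem_iUnion, Finset.mem_filter, Finset.mem_univ, true_and,
      exists_prop]
    constructor
    · intro h; exact ⟨_, h, rfl⟩
    · rintro ⟨T, hT, h⟩; unfold voteCount; rw [h]; exact hT
  rw [hdec, measure_biUnion_finset ?_ (fun T _ => vs_measurable Y hYm s T)]
  · exact Finset.sum_congr rfl fun T _ => meas_vs ν Y hYm hind s T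
  · intro T _ T' _ hne
    rw [Function.onFun]
    refine Set.disjoint_left.2 fun ω h1 h2 => hne ?_
    rw [Set.mem_setOf_eq] at h1 h2
    rw [← h1, ← h2]

lemma sum_card_regroup (M k : ℕ) (f : ℕ → ℝ≥0∞) :
    ∑ T ∈ (Finset.univ : Finset (Finset (Fin M))).filter (fun T => k ≤ T.card), f T.card
      = ∑ i ∈ Finset.Icc k M, (M.choose i : ℝ≥0∞) * f i := by
  have hU : (Finset.univ : Finset (Finset (Fin M))).filter (fun T => k ≤ T.card)
      = (Finset.Icc k M).biUnion (fun i => Finset.powersetCard i Finset.univ) := by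
    ext T
    simp only [Finset.mem_filter, Finset.mem_univ, true_and, Finset.mem_biUnion,
      Finset.mem_Icc, Finset.mem_powersetCard]
    constructor
    · intro h
      exact ⟨T.card, ⟨h, by simpa using Finset.card_le_univ T⟩, Finset.subset_univ T, rfl⟩
    · rintro ⟨i, hi, -, rfl⟩; exact hi.1
  rw [hU, Finset.sum_biUnion]
  · refine Finset.sum_congr rfl fun i hi => ?_
    rw [Finset.sum_congr rfl (fun T hT => by rw [(Finset.mem_powersetCard.1 hT).2]),
      Finset.sum_const, Finset.card_powersetCard, Finset.card_univ, Fintype.card_fin,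
      nsmul_eq_mul]
  · intro a ha b hb hab
    rw [Function.onFun]
    refine Finset.disjoint_left.2 fun T h1 h2 => hab ?_
    rw [← (Finset.mem_powersetCard.1 h1).2, ← (Finset.mem_powersetCard.1 h2).2]

lemma prod_ite_card (T : Finset (Fin M)) (a b : ℝ≥0∞) :
    ∏ i, (if i ∈ T then a else b) = a ^ T.card * b ^ (M - T.card) := by
  rw [Finset.prod_ite, Finset.prod_const, Finset.prod_const]
  congr 2
  · simp
  · rw [show (Finset.univ.filter (fun i => ¬ i ∈ T)) = Tᶜ from by ext i; simp,
      Finset.card_compl, Fintype.card_fin]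

lemma lower_bound (ν : Measure Ω) [IsProbabilityMeasure ν] (Y : Fin M → Ω → S)
    (hYm : ∀ i, Measurable (Y i))
    (hind : iIndepFun Y ν) (sx : S) (β : Fin M → ℝ)
    (βmin βmax : ℝ) (h0 : 0 ≤ βmin) (hmax1 : βmax ≤ 1)
    (hmin : ∀ i, βmin ≤ β i) (hmax : ∀ i, β i ≤ βmax)
    (hp : ∀ i, ν {ω | Y i ω = sx} = ENNReal.ofReal (β i)) (k : ℕ) :
    ENNReal.ofReal (∑ i ∈ Finset.Icc k M, (M.choose i : ℝ) * βmin ^ i * (1 - βmax) ^ (M - i))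
      ≤ ν {ω | k ≤ voteCount Y sx ω} := by
  have hb0 : ∀ i, (0:ℝ) ≤ β i := fun i => h0.trans (hmin i)
  have h1b : (0:ℝ) ≤ 1 - βmax := by linarith
  rw [meas_ge_eq ν Y hYm hind sx k]
  have step1 : ∀ T : Finset (Fin M),
      ENNReal.ofReal (βmin ^ T.card * (1 - βmax) ^ (M - T.card))
        ≤ ∏ i, (if i ∈ T then ν {ω | Y i ω = sx} else 1 - ν {ω | Y i ω = sx}) := by
    intro T
    calc ENNReal.ofReal (βmin ^ T.card * (1 - βmax) ^ (M - T.card))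
        = (ENNReal.ofReal βmin) ^ T.card * (ENNReal.ofReal (1 - βmax)) ^ (M - T.card) := by
          rw [ENNReal.ofReal_mul (by positivity), ENNReal.ofReal_pow h0,
            ENNReal.ofReal_pow (by linarith)]
      _ = ∏ i, (if i ∈ T then ENNReal.ofReal βmin else ENNReal.ofReal (1 - βmax)) :=
          (prod_ite_card T _ _).symm
      _ ≤ _ := by
          refine Finset.prod_le_prod' fun i _ => ?_
          rw [hp i]
          by_cases hi : i ∈ T
          · simp only [hi, if_true]
            exact ENNReal.ofReal_le_ofReal (hmin i)
          · simp only [hi, if_false]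
            rw [show (1:ℝ≥0∞) - ENNReal.ofReal (β i) = ENNReal.ofReal (1 - β i) from by
              rw [ENNReal.ofReal_sub _ (hb0 i), ENNReal.ofReal_one]]
            exact ENNReal.ofReal_le_ofReal (by linarith [hmax i])
  calc ENNReal.ofReal (∑ i ∈ Finset.Icc k M, (M.choose i : ℝ) * βmin ^ i * (1 - βmax) ^ (M - i))
      = ∑ i ∈ Finset.Icc k M, (M.choose i : ℝ≥0∞) *
          ENNReal.ofReal (βmin ^ i * (1 - βmax) ^ (M - i)) := by
        rw [ENNReal.ofReal_sum_of_nonneg (fun i _ => by positivity)]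
        refine Finset.sum_congr rfl fun i _ => ?_
        rw [mul_assoc, ENNReal.ofReal_mul (by positivity), ENNReal.ofReal_natCast]
    _ = ∑ T ∈ (Finset.univ : Finset (Finset (Fin M))).filter (fun T => k ≤ T.card),
          ENNReal.ofReal (βmin ^ T.card * (1 - βmax) ^ (M - T.card)) :=
        (sum_card_regroup M k fun i => ENNReal.ofReal (βmin ^ i * (1 - βmax) ^ (M - i))).symm
    _ ≤ _ := Finset.sum_le_sum fun T _ => step1 T

lemma upper_bound (ν : Measure Ω) [IsProbabilityMeasure ν] (Y : Fin M → Ω → S)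
    (hYm : ∀ i, Measurable (Y i))
    (hind : iIndepFun Y ν) (s : S) (r : ℝ≥0∞)
    (hp : ∀ i, ν {ω | Y i ω = s} ≤ r) (k : ℕ) :
    ν {ω | k ≤ voteCount Y s ω} ≤ ∑ i ∈ Finset.Icc k M, (M.choose i : ℝ≥0∞) * r ^ i := by
  rw [meas_ge_eq ν Y hYm hind s k, ← sum_card_regroup M k (fun i => r ^ i)]
  refine Finset.sum_le_sum fun T _ => ?_
  calc ∏ i, (if i ∈ T then ν {ω | Y i ω = s} else 1 - ν {ω | Y i ω = s})
      ≤ ∏ i, (if i ∈ T then r else 1) := by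
        refine Finset.prod_le_prod' fun i _ => ?_
        by_cases hi : i ∈ T
        · simp only [hi, if_true]; exact hp i
        · simp only [hi, if_false]
          exact (tsub_le_self : (1:ℝ≥0∞) - ν {ω | Y i ω = s} ≤ 1)
    _ = r ^ T.card := by rw [prod_ite_card, one_pow, mul_one]

lemma geom_bound (M N k : ℕ) (hN : 2 ≤ N) (hk1 : 1 ≤ k) (hkM : k ≤ M) :
    ((N:ℝ) - 1) * ∑ i ∈ Finset.Icc k M, (M.choose i : ℝ) * ((N:ℝ)⁻¹) ^ i
      < (M.choose (M / 2) : ℝ) / (N:ℝ) ^ (k - 1) := by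
  obtain ⟨k', rfl⟩ : ∃ k', k = k' + 1 := ⟨k - 1, by omega⟩
  obtain ⟨n, hn⟩ : ∃ x:ℝ, (N:ℝ) = x := ⟨_, rfl⟩
  rw [hn]
  have hn2 : (2:ℝ) ≤ n := by rw [← hn]; exact_mod_cast hN
  have hn0 : (0:ℝ) < n := by linarith
  have hr0 : (0:ℝ) < n⁻¹ := by positivity
  have hr1 : n⁻¹ < 1 := by
    rw [inv_lt_one_iff₀]; right; linarith
  have hC1 : (1:ℝ) ≤ (M.choose (M / 2) : ℝ) := by
    exact_mod_cast Nat.succ_le_of_lt (Nat.choose_pos (Nat.div_le_self M 2))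
  have hsum : ∑ i ∈ Finset.Icc (k' + 1) M, (n⁻¹) ^ i < (n⁻¹) ^ (k' + 1) / (1 - n⁻¹) := by
    rw [← Finset.Ico_add_one_right_eq_Icc, geom_sum_Ico (ne_of_lt hr1) (by omega)]
    rw [show (n⁻¹) ^ (M + 1) - (n⁻¹) ^ (k' + 1) = -((n⁻¹) ^ (k' + 1) - (n⁻¹) ^ (M + 1)) by ring,
      show n⁻¹ - 1 = -(1 - n⁻¹) by ring, neg_div_neg_eq]
    have hx : (0:ℝ) < (n⁻¹) ^ (M + 1) := pow_pos hr0 _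
    apply div_lt_div_of_pos_right ?_ (by linarith)
    linarith
  calc (n - 1) * ∑ i ∈ Finset.Icc (k' + 1) M, (M.choose i : ℝ) * (n⁻¹) ^ i
      ≤ (n - 1) * ((M.choose (M / 2) : ℝ) * ∑ i ∈ Finset.Icc (k' + 1) M, (n⁻¹) ^ i) := by
        have h0n : (0:ℝ) ≤ n - 1 := by linarith
        refine mul_le_mul_of_nonneg_left ?_ h0n
        rw [Finset.mul_sum]
        refine Finset.sum_le_sum fun i _ => ?_
        exact mul_le_mul_of_nonneg_right
          (by exact_mod_cast Nat.choose_le_middle i M) (by positivity)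
    _ < (n - 1) * ((M.choose (M / 2) : ℝ) * ((n⁻¹) ^ (k' + 1) / (1 - n⁻¹))) := by
        have hCpos : (0:ℝ) < (M.choose (M / 2) : ℝ) := by linarith
        exact mul_lt_mul_of_pos_left (mul_lt_mul_of_pos_left hsum hCpos) (by linarith)
    _ = (M.choose (M / 2) : ℝ) / n ^ (k' + 1 - 1) := by
        rw [show k' + 1 - 1 = k' from rfl]
        have hne : n ≠ 0 := ne_of_gt hn0
        have hne1 : n - 1 ≠ 0 := by intro h; nlinarith
        field_simp
        rw [one_div, inv_pow, pow_succ]; field_simp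

end Aux

/-- Right decision rate lower bound (Theorem 4): under assumptions (A1)–(A3), with
in-distribution proportion `α`, ensemble size `M`, output domain size `N`, and vote
threshold `k = M(1-τ)+1`, the right decision rate
`R_rd(m) = P(m(x) = s_x, x ∈ X_in) + P(m(x) ∈ {s_x, s_skip}, x ∈ X_out)` satisfies
`R_rd(m) > α ∑_{i=k}^{M} C(M,i) β_min^i (1-β_max)^{M-i} + (1-α) - C(M,⌊M/2⌋)/N^{k-1}`.
Here the EnSolver outputs `s_x` when `s_x` has at least `k` votes and strictly more votes
than any other string, and skips when every string has fewer than `k` votes. -/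
theorem right_decision_rate_lower_bound {Ω S : Type*} [MeasurableSpace Ω] [MeasurableSpace S]
    [MeasurableSingletonClass S] [Fintype S] [DecidableEq S]
    (μ : Measure Ω) [IsProbabilityMeasure μ]
    (M N k : ℕ) (hM : 0 < M) (hN : 2 ≤ N) (hcard : Fintype.card S = N)
    (hk1 : 1 ≤ k) (hkM : k ≤ M)
    (Xin : Set Ω) (hXinM : MeasurableSet Xin)
    (α : ℝ) (hα0 : 0 ≤ α) (hα1 : α ≤ 1) (hμXin : μ Xin = ENNReal.ofReal α)
    (Y : Fin M → Ω → S) (hYm : ∀ i, Measurable (Y i))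
    (sx : S) (β : Fin M → ℝ) (βmin βmax : ℝ)
    (hindin : iIndepFun Y (μ[|Xin]))
    (hindout : iIndepFun Y (μ[|Xinᶜ]))
    (hin_sx : ∀ i, (μ[|Xin]) {ω | Y i ω = sx} = ENNReal.ofReal (β i))
    (hin_other : ∀ i s, s ≠ sx →
      (μ[|Xin]) {ω | Y i ω = s} = ENNReal.ofReal ((1 - β i) / ((N : ℝ) - 1)))
    (hout : ∀ i s, (μ[|Xinᶜ]) {ω | Y i ω = s} = (N : ENNReal)⁻¹)
    (hA1 : 1 / (N : ℝ) < βmin)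
    (hminle : ∀ i, βmin ≤ β i) (hminmem : ∃ i, β i = βmin)
    (hmaxle : ∀ i, β i ≤ βmax) (hmaxmem : ∃ i, β i = βmax) :
    (μ ({ω | k ≤ voteCount Y sx ω ∧
          ∀ s, s ≠ sx → voteCount Y s ω < voteCount Y sx ω} ∩ Xin)).toReal
      + (μ (({ω | k ≤ voteCount Y sx ω ∧
            ∀ s, s ≠ sx → voteCount Y s ω < voteCount Y sx ω}
          ∪ {ω | ∀ s, voteCount Y s ω < k}) ∩ Xinᶜ)).toReal
      > α * ∑ i ∈ Finset.Icc k M, (M.choose i : ℝ) * βmin ^ i * (1 - βmax) ^ (M - i)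
        + (1 - α) - (M.choose (M / 2) : ℝ) / (N : ℝ) ^ (k - 1) := by   classical
  have hNR : (2:ℝ) ≤ (N:ℝ) := by exact_mod_cast hN
  have hNpos : (0:ℝ) < (N:ℝ) := by linarith
  have hβmin0 : (0:ℝ) < βmin := lt_trans (by positivity) hA1
  have i0 : Fin M := ⟨0, hM⟩
  have hXin0 : μ Xin ≠ 0 := by
    intro h
    have h1 := hin_sx i0
    rw [cond_apply hXinM, measure_mono_null Set.inter_subset_left h, mul_zero] at h1
    have hb : (0:ℝ) < β i0 := lt_of_lt_of_le hβmin0 (hminle i0)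
    exact absurd h1.symm (ne_of_gt (ENNReal.ofReal_pos.2 hb))
  have hXinc0 : μ Xinᶜ ≠ 0 := by
    intro h
    have h1 := hout i0 sx
    rw [cond_apply hXinM.compl, measure_mono_null Set.inter_subset_left h, mul_zero] at h1
    have hNne : ((N:ℝ≥0∞))⁻¹ ≠ 0 := ENNReal.inv_ne_zero.2 (ENNReal.natCast_ne_top N)
    exact hNne h1.symm
  haveI hPin : IsProbabilityMeasure (μ[|Xin]) := cond_isProbabilityMeasure hXin0
  haveI hPout : IsProbabilityMeasure (μ[|Xinᶜ]) := cond_isProbabilityMeasure hXinc0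
  have hα0' : 0 < α := by
    by_contra h
    push_neg at h
    exact hXin0 (by rw [hμXin]; exact ENNReal.ofReal_eq_zero.2 h)
  have hμXinc : μ Xinᶜ = ENNReal.ofReal (1 - α) := by
    rw [prob_compl_eq_one_sub hXinM, hμXin, ENNReal.ofReal_sub _ hα0, ENNReal.ofReal_one]
  have hα1' : α < 1 := by
    by_contra h
    push_neg at h
    exact hXinc0 (by rw [hμXinc]; exact ENNReal.ofReal_eq_zero.2 (by linarith))
  have hβ1 : ∀ i, β i ≤ 1 := by
    intro i
    have hle := prob_le_one (μ := μ[|Xin]) (s := {ω | Y i ω = sx})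
    rw [hin_sx i] at hle
    exact ENNReal.ofReal_le_one.1 hle
  have hβmax1 : βmax ≤ 1 := by obtain ⟨j, hj⟩ := hmaxmem; rw [← hj]; exact hβ1 j
  have hcm : ∀ s : S, Measurable (voteCount Y s) := fun s => measurable_voteCount Y hYm s
  set W : Set Ω := {ω | k ≤ voteCount Y sx ω ∧
      ∀ s, s ≠ sx → voteCount Y s ω < voteCount Y sx ω} with hWdef
  set K : Set Ω := {ω | ∀ s, voteCount Y s ω < k} with hKdef
  set F : Finset S := Finset.univ.filter (fun s => s ≠ sx) with hF
  have hFcard : F.card = N - 1 := by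
    rw [hF, Finset.filter_ne', Finset.card_erase_of_mem (Finset.mem_univ sx),
      Finset.card_univ, hcard]
  set Bad : Set Ω := ⋃ s ∈ F, {ω | k ≤ voteCount Y s ω} with hBadDef
  have hsub1 : {ω | k ≤ voteCount Y sx ω} ⊆ W ∪ Bad := by
    intro ω hω
    by_cases hb : ∃ s, s ≠ sx ∧ k ≤ voteCount Y s ω
    · obtain ⟨s, hs, hks⟩ := hb
      exact Or.inr (Set.mem_biUnion (Finset.mem_filter.2 ⟨Finset.mem_univ s, hs⟩) hks)
    · push_neg at hb
      exact Or.inl ⟨hω, fun s hs => lt_of_lt_of_le (hb s hs) hω⟩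
  have hsub2 : (Set.univ : Set Ω) ⊆ (W ∪ K) ∪ Bad := by
    intro ω _
    by_cases hb : ∃ s, s ≠ sx ∧ k ≤ voteCount Y s ω
    · obtain ⟨s, hs, hks⟩ := hb
      exact Or.inr (Set.mem_biUnion (Finset.mem_filter.2 ⟨Finset.mem_univ s, hs⟩) hks)
    · push_neg at hb
      by_cases hsx : k ≤ voteCount Y sx ω
      · exact Or.inl (Or.inl ⟨hsx, fun s hs => lt_of_lt_of_le (hb s hs) hsx⟩)
      · refine Or.inl (Or.inr fun s => ?_)
        by_cases h : s = sx
        · rw [h]; exact not_le.1 hsx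
        · exact hb s h
  set B : ℝ≥0∞ := ∑ i ∈ Finset.Icc k M, (M.choose i : ℝ≥0∞) * ((N:ℝ≥0∞)⁻¹) ^ i with hBdef
  have hterm_ne_top : ∀ i : ℕ, (M.choose i : ℝ≥0∞) * ((N:ℝ≥0∞)⁻¹) ^ i ≠ ∞ := fun i =>
    ENNReal.mul_ne_top (ENNReal.natCast_ne_top _)
      (ENNReal.pow_ne_top (ENNReal.inv_ne_top.2 (Nat.cast_ne_zero.2 (by omega))))
  have hBtop : B ≠ ∞ := by
    rw [hBdef]
    exact (ENNReal.sum_lt_top.2 fun i _ => (hterm_ne_top i).lt_top).ne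
  have hNinv : (N:ℝ≥0∞)⁻¹ = ENNReal.ofReal ((N:ℝ)⁻¹) := by
    rw [ENNReal.ofReal_inv_of_pos hNpos, ENNReal.ofReal_natCast]
  have hin_upper : ∀ s, s ≠ sx → ∀ i, (μ[|Xin]) {ω | Y i ω = s} ≤ (N:ℝ≥0∞)⁻¹ := by
    intro s hs i
    rw [hin_other i s hs, hNinv]
    apply ENNReal.ofReal_le_ofReal
    rw [div_le_iff₀ (by linarith : (0:ℝ) < (N:ℝ) - 1)]
    have h1 : 1/(N:ℝ) < β i := lt_of_lt_of_le hA1 (hminle i)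
    have heq : (N:ℝ)⁻¹ * ((N:ℝ) - 1) = 1 - (N:ℝ)⁻¹ := by
      field_simp
    rw [heq, one_div] at *
    linarith
  have hbound : ∀ (ν : Measure Ω), IsProbabilityMeasure ν →
      iIndepFun Y ν →
      (∀ s, s ≠ sx → ∀ i, ν {ω | Y i ω = s} ≤ (N:ℝ≥0∞)⁻¹) →
      ν Bad ≤ ((N - 1 : ℕ) : ℝ≥0∞) * B := by
    intro ν hν hind hub
    haveI := hν
    calc ν Bad ≤ ∑ s ∈ F, ν {ω | k ≤ voteCount Y s ω} := measure_biUnion_finset_le F _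
      _ ≤ ∑ s ∈ F, B := by
          refine Finset.sum_le_sum fun s hs => ?_
          have hs' : s ≠ sx := by simpa [hF] using hs
          exact upper_bound ν Y hYm hind s _ (hub s hs') k
      _ = F.card • B := (Finset.sum_const B)
      _ = ((N - 1 : ℕ) : ℝ≥0∞) * B := by rw [hFcard, nsmul_eq_mul]
  have hchain_in : ENNReal.ofReal (∑ i ∈ Finset.Icc k M,
        (M.choose i : ℝ) * βmin ^ i * (1 - βmax) ^ (M - i))
      ≤ (μ[|Xin]) W + ((N - 1 : ℕ) : ℝ≥0∞) * B := by
    calc ENNReal.ofReal (∑ i ∈ Finset.Icc k M,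
          (M.choose i : ℝ) * βmin ^ i * (1 - βmax) ^ (M - i))
        ≤ (μ[|Xin]) {ω | k ≤ voteCount Y sx ω} :=
          lower_bound (μ[|Xin]) Y hYm hindin sx β βmin βmax hβmin0.le hβmax1 hminle hmaxle
            hin_sx k
      _ ≤ (μ[|Xin]) (W ∪ Bad) := measure_mono hsub1
      _ ≤ (μ[|Xin]) W + (μ[|Xin]) Bad := measure_union_le W Bad
      _ ≤ (μ[|Xin]) W + ((N - 1 : ℕ) : ℝ≥0∞) * B :=
          add_le_add_right (hbound _ hPin hindin hin_upper) _
  have hchain_out : (1:ℝ≥0∞) ≤ (μ[|Xinᶜ]) (W ∪ K) + ((N - 1 : ℕ) : ℝ≥0∞) * B := by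
    calc (1:ℝ≥0∞) = (μ[|Xinᶜ]) Set.univ := measure_univ.symm
      _ ≤ (μ[|Xinᶜ]) ((W ∪ K) ∪ Bad) := measure_mono hsub2
      _ ≤ (μ[|Xinᶜ]) (W ∪ K) + (μ[|Xinᶜ]) Bad := measure_union_le _ _
      _ ≤ (μ[|Xinᶜ]) (W ∪ K) + ((N - 1 : ℕ) : ℝ≥0∞) * B :=
          add_le_add_right (hbound _ hPout hindout (fun s _ i => (hout i s).le)) _
  set b : ℝ := (((N - 1 : ℕ) : ℝ≥0∞) * B).toReal with hbdef
  have hbtop : ((N - 1 : ℕ) : ℝ≥0∞) * B ≠ ∞ := ENNReal.mul_ne_top (ENNReal.natCast_ne_top _) hBtop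
  have h1b : (0:ℝ) ≤ 1 - βmax := by linarith
  have hSβ0 : 0 ≤ ∑ i ∈ Finset.Icc k M, (M.choose i : ℝ) * βmin ^ i * (1 - βmax) ^ (M - i) := by
    refine Finset.sum_nonneg fun i _ => ?_
    positivity
  have hw1 : ∑ i ∈ Finset.Icc k M, (M.choose i : ℝ) * βmin ^ i * (1 - βmax) ^ (M - i)
      ≤ ((μ[|Xin]) W).toReal + b := by
    have h := ENNReal.toReal_mono
      (ENNReal.add_ne_top.2 ⟨measure_ne_top _ _, hbtop⟩) hchain_in
    rwa [ENNReal.toReal_add (measure_ne_top _ _) hbtop, ENNReal.toReal_ofReal hSβ0] at h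
  have hw2 : (1:ℝ) ≤ ((μ[|Xinᶜ]) (W ∪ K)).toReal + b := by
    have h := ENNReal.toReal_mono
      (ENNReal.add_ne_top.2 ⟨measure_ne_top _ _, hbtop⟩) hchain_out
    rwa [ENNReal.toReal_add (measure_ne_top _ _) hbtop, ENNReal.toReal_one] at h
  have hbeq : b = ((N:ℝ) - 1) * ∑ i ∈ Finset.Icc k M, (M.choose i : ℝ) * ((N:ℝ)⁻¹) ^ i := by
    rw [hbdef, ENNReal.toReal_mul, hBdef, ENNReal.toReal_sum (fun i _ => hterm_ne_top i)]
    congr 1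
    · rw [ENNReal.toReal_natCast, Nat.cast_sub (by omega), Nat.cast_one]
    · refine Finset.sum_congr rfl fun i _ => ?_
      rw [ENNReal.toReal_mul, ENNReal.toReal_pow, ENNReal.toReal_inv, ENNReal.toReal_natCast,
        ENNReal.toReal_natCast]
  have hbE : b < (M.choose (M / 2) : ℝ) / (N : ℝ) ^ (k - 1) := by
    rw [hbeq]; exact geom_bound M N k hN hk1 hkM
  have hg1 : (μ (W ∩ Xin)).toReal = ((μ[|Xin]) W).toReal * α := by
    rw [Set.inter_comm, ← cond_mul_eq_inter hXinM W μ, hμXin, ENNReal.toReal_mul,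
      ENNReal.toReal_ofReal hα0]
  have hg2 : (μ ((W ∪ K) ∩ Xinᶜ)).toReal = ((μ[|Xinᶜ]) (W ∪ K)).toReal * (1 - α) := by
    rw [Set.inter_comm, ← cond_mul_eq_inter hXinM.compl (W ∪ K) μ, hμXinc, ENNReal.toReal_mul,
      ENNReal.toReal_ofReal (by linarith)]
  rw [hg1, hg2]
  set Sb : ℝ := ∑ i ∈ Finset.Icc k M, (M.choose i : ℝ) * βmin ^ i * (1 - βmax) ^ (M - i)
    with hSbdef
  set w1 : ℝ := ((μ[|Xin]) W).toReal with hw1def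
  set w2 : ℝ := ((μ[|Xinᶜ]) (W ∪ K)).toReal with hw2def
  have hq1 : (Sb - b) * α ≤ w1 * α := mul_le_mul_of_nonneg_right (by linarith) hα0
  have hq2 : (1 - b) * (1 - α) ≤ w2 * (1 - α) :=
    mul_le_mul_of_nonneg_right (by linarith) (by linarith)
  nlinarith [hq1, hq2, hbE]
end

section
/- Correct prediction rate lower bound (Lemma 7): Under assumptions (A1)–(A3) and with k = M(1−τ)+1, the EnSolver m satisfies P(m(x) = s_x) > α·∑_{i=k}^{M} C(M,i) β_min^i (1−β_max)^{M−i} − α·E(M,N,τ). -/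
open MeasureTheory ProbabilityTheory Finset

lemma ens_prod_biInter {Ω S : Type*} [MeasurableSpace Ω] [MeasurableSpace S]
    [MeasurableSingletonClass S] [Fintype S] {M : ℕ}
    {ν : Measure Ω} {Y : Fin M → Ω → S}
    (hind : iIndepFun Y ν)
    (B : Fin M → Set S) (t : Finset (Fin M)) :
    ν (⋂ j ∈ t, Y j ⁻¹' B j) = ∏ j ∈ t, ν (Y j ⁻¹' B j) :=
  hind.meas_biInter fun i _ => ⟨B i, (Set.toFinite (B i)).measurableSet, rfl⟩

lemma ens_prod_iInter {Ω S : Type*} [MeasurableSpace Ω] [MeasurableSpace S]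
    [MeasurableSingletonClass S] [Fintype S] {M : ℕ}
    {ν : Measure Ω} {Y : Fin M → Ω → S}
    (hind : iIndepFun Y ν)
    (B : Fin M → Set S) :
    ν (⋂ j, Y j ⁻¹' B j) = ∏ j : Fin M, ν (Y j ⁻¹' B j) :=
  hind.meas_iInter fun i => ⟨B i, (Set.toFinite (B i)).measurableSet, rfl⟩

lemma ens_voteEvent_eq {Ω S : Type*} [DecidableEq S] {M : ℕ} (Y : Fin M → Ω → S) (sx : S)
    (I : Finset (Fin M)) :
    {ω | Finset.univ.filter (fun j => Y j ω = sx) = I}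
      = ⋂ j, Y j ⁻¹' (if j ∈ I then ({sx} : Set S) else {sx}ᶜ) := by
  ext ω
  simp only [Set.mem_setOf_eq, Finset.ext_iff, Finset.mem_filter, Finset.mem_univ, true_and,
    Set.mem_iInter, Set.mem_preimage]
  refine forall_congr' fun j => ?_
  by_cases hj : j ∈ I <;> simp [hj]

/-- Correct prediction rate lower bound (Lemma 7): under assumptions (A1)–(A3) and with
`k = M(1-τ)+1`, the EnSolver `m` satisfies
`P(m(x) = s_x) > α ∑_{i=k}^{M} C(M,i) β_min^i (1-β_max)^{M-i} - α E(M,N,τ)`,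
where `E(M,N,τ) = C(M,⌊M/2⌋)/N^{k-1}` and the EnSolver outputs `s_x` exactly when `s_x`
has at least `k` votes and strictly more votes than any other string. -/
theorem correct_prediction_rate_lower_bound {Ω S : Type*} [MeasurableSpace Ω] [MeasurableSpace S]
    [MeasurableSingletonClass S] [Fintype S] [DecidableEq S]
    (μ : Measure Ω) [IsProbabilityMeasure μ]
    (M N k : ℕ) (hM : 0 < M) (hN : 2 ≤ N) (hcard : Fintype.card S = N)
    (hk1 : 1 ≤ k) (hkM : k ≤ M)
    (Xin : Set Ω) (hXinM : MeasurableSet Xin)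
    (α : ℝ) (hα0 : 0 ≤ α) (hα1 : α ≤ 1) (hμXin : μ Xin = ENNReal.ofReal α)
    (Y : Fin M → Ω → S) (hYm : ∀ i, Measurable (Y i))
    (sx : S) (β : Fin M → ℝ) (βmin βmax : ℝ)
    (hindin : iIndepFun Y (μ[|Xin]))
    (hindout : iIndepFun Y (μ[|Xinᶜ]))
    (hin_sx : ∀ i, (μ[|Xin]) {ω | Y i ω = sx} = ENNReal.ofReal (β i))
    (hin_other : ∀ i s, s ≠ sx →
      (μ[|Xin]) {ω | Y i ω = s} = ENNReal.ofReal ((1 - β i) / ((N : ℝ) - 1)))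
    (hout : ∀ i s, (μ[|Xinᶜ]) {ω | Y i ω = s} = (N : ENNReal)⁻¹)
    (hA1 : 1 / (N : ℝ) < βmin)
    (hminle : ∀ i, βmin ≤ β i) (hminmem : ∃ i, β i = βmin)
    (hmaxle : ∀ i, β i ≤ βmax) (hmaxmem : ∃ i, β i = βmax) :
    (μ {ω | k ≤ voteCount Y sx ω ∧
          ∀ s, s ≠ sx → voteCount Y s ω < voteCount Y sx ω}).toReal
      > α * ∑ i ∈ Finset.Icc k M, (M.choose i : ℝ) * βmin ^ i * (1 - βmax) ^ (M - i)
        - α * ((M.choose (M / 2) : ℝ) / (N : ℝ) ^ (k - 1)) := by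
  classical
  set A : Set Ω := {ω | k ≤ voteCount Y sx ω ∧
      ∀ s, s ≠ sx → voteCount Y s ω < voteCount Y sx ω} with hA
  have hN0 : (0:ℝ) < N := by positivity
  have hN1 : (1:ℝ) < N := by exact_mod_cast Nat.lt_of_lt_of_le one_lt_two hN
  have hβmin0 : 0 < βmin := lt_trans (by positivity) hA1
  -- the all-correct event is contained in A
  have hBsubA : (⋂ j, Y j ⁻¹' ({sx} : Set S)) ⊆ A := by
    intro ω hω
    simp only [Set.mem_iInter, Set.mem_preimage, Set.mem_singleton_iff] at hω
    have hcnt : voteCount Y sx ω = M := by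
      simp [voteCount, Finset.filter_true_of_mem (fun i _ => hω i)]
    constructor
    · omega
    · intro s hs
      have : voteCount Y s ω = 0 := by
        have : ∀ i ∈ Finset.univ, ¬ (Y i ω = s) := fun i _ h => hs (h.symm.trans (hω i))
        simp [voteCount, Finset.filter_false_of_mem this]
      omega
  have hpre : ∀ (j : Fin M) (s : S), Y j ⁻¹' ({s} : Set S) = {ω | Y j ω = s} := by
    intro j s; rfl
  rcases hα0.eq_or_lt with h0 | h0
  · -- α = 0 : RHS is 0 and LHS is positive thanks to the out-of-distribution part
    subst h0
    simp only [zero_mul, sub_zero, gt_iff_lt]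
    have hXc : μ Xinᶜ = 1 := by
      rw [measure_compl hXinM (measure_ne_top μ _), hμXin]; simp
    have hρB : (μ[|Xinᶜ]) (⋂ j, Y j ⁻¹' ({sx} : Set S)) = ((N : ENNReal)⁻¹) ^ M := by
      rw [ens_prod_iInter hindout,
        Finset.prod_congr rfl (fun j (_ : j ∈ Finset.univ) => by rw [hpre, hout])]
      simp
    have hkey : μ (Xinᶜ ∩ (⋂ j, Y j ⁻¹' ({sx} : Set S))) = ((N : ENNReal)⁻¹) ^ M := by
      have := cond_apply hXinM.compl μ (⋂ j, Y j ⁻¹' ({sx} : Set S))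
      rw [hXc] at this
      simpa using this.symm.trans hρB
    have hle : ((N : ENNReal)⁻¹) ^ M ≤ μ A := by
      rw [← hkey]
      exact measure_mono fun ω hω => hBsubA hω.2
    have hpos : μ A ≠ 0 := by
      intro h
      rw [h, nonpos_iff_eq_zero, pow_eq_zero_iff (by omega)] at hle
      simp only [ENNReal.inv_eq_zero] at hle
      exact (ENNReal.natCast_ne_top N) hle
    exact ENNReal.toReal_pos hpos (measure_ne_top μ A)
  · -- α > 0
    have hμXin0 : μ Xin ≠ 0 := by rw [hμXin]; exact (ENNReal.ofReal_pos.2 h0).ne'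
    haveI : IsProbabilityMeasure (μ[|Xin]) := cond_isProbabilityMeasure hμXin0
    set ν := μ[|Xin] with hν
    -- basic bounds on β
    have hβ1 : ∀ j, β j ≤ 1 := by
      intro j
      have h := prob_le_one (μ := ν) (s := {ω | Y j ω = sx})
      rw [hin_sx j] at h
      exact ENNReal.ofReal_le_one.1 h
    have hβpos : ∀ j, 0 < β j := fun j => lt_of_lt_of_le hβmin0 (hminle j)
    have hβmax1 : βmax ≤ 1 := by obtain ⟨j, hj⟩ := hmaxmem; exact hj ▸ hβ1 j
    have hβminmax : βmin ≤ βmax := by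
      obtain ⟨j, hj⟩ := hminmem; exact hj ▸ hmaxle j
    -- vote events
    set EV : Finset (Fin M) → Set Ω :=
      fun I => {ω | Finset.univ.filter (fun j => Y j ω = sx) = I} with hEV
    have hEVmeas : ∀ I, MeasurableSet (EV I) := by
      intro I
      have heq : EV I = ⋂ j, Y j ⁻¹' (if j ∈ I then ({sx} : Set S) else {sx}ᶜ) :=
        ens_voteEvent_eq Y sx I
      rw [heq]
      exact MeasurableSet.iInter fun j => (hYm j) (Set.toFinite _).measurableSet
    have hfac : ∀ (I : Finset (Fin M)) (j : Fin M),
        (ν (Y j ⁻¹' (if j ∈ I then ({sx} : Set S) else {sx}ᶜ))).toReal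
          = if j ∈ I then β j else 1 - β j := by
      intro I j
      by_cases hj : j ∈ I
      · simp only [hj, if_true]
        rw [hpre, hin_sx j, ENNReal.toReal_ofReal (hβpos j).le]
      · simp only [hj, if_false]
        rw [Set.preimage_compl, prob_compl_eq_one_sub ((hYm j) (measurableSet_singleton sx)),
          hpre, hin_sx j,
          ENNReal.toReal_sub_of_le (ENNReal.ofReal_le_one.2 (hβ1 j)) ENNReal.one_ne_top]
        simp [ENNReal.toReal_ofReal (hβpos j).le]
    have hEVtoReal : ∀ I : Finset (Fin M),
        (ν (EV I)).toReal = (∏ j ∈ I, β j) * ∏ j ∈ Iᶜ, (1 - β j) := by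
      intro I
      have heq : EV I = ⋂ j, Y j ⁻¹' (if j ∈ I then ({sx} : Set S) else {sx}ᶜ) :=
        ens_voteEvent_eq Y sx I
      rw [heq, ens_prod_iInter hindin, ENNReal.toReal_prod]
      rw [← Finset.prod_mul_prod_compl I]
      congr 1
      · exact Finset.prod_congr rfl fun j hj => by rw [hfac]; simp [hj]
      · exact Finset.prod_congr rfl fun j hj => by
          rw [hfac]; simp [Finset.mem_compl.1 hj]
    have hEVge : ∀ I : Finset (Fin M),
        βmin ^ I.card * (1 - βmax) ^ (M - I.card) ≤ (ν (EV I)).toReal := by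
      intro I
      rw [hEVtoReal I]
      have h1 : βmin ^ I.card ≤ ∏ j ∈ I, β j := by
        rw [← Finset.prod_const]
        exact Finset.prod_le_prod (fun j _ => hβmin0.le) (fun j _ => hminle j)
      have h2 : (1 - βmax) ^ (M - I.card) ≤ ∏ j ∈ Iᶜ, (1 - β j) := by
        have hc : Iᶜ.card = M - I.card := by
          rw [Finset.card_compl, Fintype.card_fin]
        rw [← hc, ← Finset.prod_const]
        exact Finset.prod_le_prod (fun j _ => by linarith [hβmax1])
          (fun j _ => by linarith [hmaxle j])
      exact mul_le_mul h1 h2 (pow_nonneg (by linarith) _)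
        (Finset.prod_nonneg fun j _ => (hβpos j).le)
    -- the good part: sum over vote sets of size ≥ k
    set T : Finset (Finset (Fin M)) :=
      Finset.univ.filter (fun I => k ≤ I.card) with hT
    have hTeq : T = (Finset.Icc k M).biUnion (fun i => Finset.powersetCard i Finset.univ) := by
      ext I
      simp only [hT, Finset.mem_filter, Finset.mem_univ, true_and, Finset.mem_biUnion,
        Finset.mem_Icc, Finset.mem_powersetCard]
      constructor
      · intro h
        exact ⟨I.card, ⟨h, by simpa using Finset.card_le_univ I⟩, Finset.subset_univ I, rfl⟩
      · rintro ⟨i, ⟨hki, _⟩, _, rfl⟩; exact hki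
    have hGsub : (⋃ I ∈ T, EV I) ⊆ {ω | k ≤ voteCount Y sx ω} := by
      intro ω hω
      simp only [Set.mem_iUnion] at hω
      obtain ⟨I, hIT, hωI⟩ := hω
      have hfil : Finset.univ.filter (fun j => Y j ω = sx) = I := hωI
      have : voteCount Y sx ω = I.card := by
        rw [voteCount, hfil]
      rw [Set.mem_setOf_eq, this]
      exact (Finset.mem_filter.1 hIT).2
    have hdisj : (↑T : Set (Finset (Fin M))).PairwiseDisjoint EV := by
      intro I _ J _ hIJ
      refine Set.disjoint_left.2 fun ω hI hJ => hIJ ?_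
      have hI' : Finset.univ.filter (fun j => Y j ω = sx) = I := hI
      have hJ' : Finset.univ.filter (fun j => Y j ω = sx) = J := hJ
      exact hI'.symm.trans hJ'
    have hsumT : ν (⋃ I ∈ T, EV I) = ∑ I ∈ T, ν (EV I) :=
      measure_biUnion_finset hdisj fun I _ => hEVmeas I
    have h1 : ∑ i ∈ Finset.Icc k M, (M.choose i : ℝ) * βmin ^ i * (1 - βmax) ^ (M - i)
        ≤ (ν {ω | k ≤ voteCount Y sx ω}).toReal := by
      have step1 : ∑ i ∈ Finset.Icc k M, (M.choose i : ℝ) * βmin ^ i * (1 - βmax) ^ (M - i)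
          = ∑ I ∈ T, βmin ^ I.card * (1 - βmax) ^ (M - I.card) := by
        rw [hTeq, Finset.sum_biUnion]
        · refine Finset.sum_congr rfl fun i hi => ?_
          rw [Finset.sum_congr rfl (fun I hI => by
            rw [(Finset.mem_powersetCard.1 hI).2])]
          rw [Finset.sum_const, Finset.card_powersetCard, Finset.card_univ, Fintype.card_fin,
            nsmul_eq_mul, mul_assoc]
        · intro i _ j _ hij
          refine Finset.disjoint_left.2 fun I hI hI' => hij ?_
          rw [← (Finset.mem_powersetCard.1 hI).2, ← (Finset.mem_powersetCard.1 hI').2]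
      rw [step1]
      calc ∑ I ∈ T, βmin ^ I.card * (1 - βmax) ^ (M - I.card)
          ≤ ∑ I ∈ T, (ν (EV I)).toReal := Finset.sum_le_sum fun I _ => hEVge I
        _ = (∑ I ∈ T, ν (EV I)).toReal :=
            (ENNReal.toReal_sum fun I _ => measure_ne_top ν _).symm
        _ = (ν (⋃ I ∈ T, EV I)).toReal := by rw [hsumT]
        _ ≤ (ν {ω | k ≤ voteCount Y sx ω}).toReal :=
            ENNReal.toReal_mono (measure_ne_top ν _) (measure_mono hGsub)
    -- the tie part
    set q : ℝ := (1 - βmin) / ((N : ℝ) - 1) with hq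
    have hq0 : 0 ≤ q := by
      apply div_nonneg
      · linarith [hβminmax, hβmax1]
      · linarith
    have hqN : q < 1 / N := by
      rw [hq, div_lt_div_iff₀ (by linarith) hN0]
      have : 1 / (N:ℝ) * N = 1 := by field_simp
      nlinarith [hA1, hN0]
    set Fbad : Set Ω := ⋃ s ∈ Finset.univ.erase sx, {ω | k ≤ voteCount Y s ω} with hFbad
    have hFs : ∀ s, s ≠ sx →
        ν {ω | k ≤ voteCount Y s ω} ≤ (M.choose k : ENNReal) * ENNReal.ofReal q ^ k := by
      intro s hs
      have hsub : {ω | k ≤ voteCount Y s ω}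
          ⊆ ⋃ I ∈ Finset.powersetCard k Finset.univ, ⋂ j ∈ I, Y j ⁻¹' ({s} : Set S) := by
        intro ω hω
        obtain ⟨I, hIsub, hIcard⟩ := Finset.exists_subset_card_eq hω
        simp only [Set.mem_iUnion]
        refine ⟨I, Finset.mem_powersetCard.2 ⟨Finset.subset_univ I, hIcard⟩, ?_⟩
        simp only [Set.mem_iInter, Set.mem_preimage, Set.mem_singleton_iff]
        intro j hj
        exact (Finset.mem_filter.1 (hIsub hj)).2
      calc ν {ω | k ≤ voteCount Y s ω}
          ≤ ∑ I ∈ Finset.powersetCard k Finset.univ, ν (⋂ j ∈ I, Y j ⁻¹' ({s} : Set S)) :=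
            le_trans (measure_mono hsub) (measure_biUnion_finset_le _ _)
        _ ≤ ∑ _I ∈ Finset.powersetCard k Finset.univ, ENNReal.ofReal q ^ k := by
            refine Finset.sum_le_sum fun I hI => ?_
            rw [ens_prod_biInter hindin]
            have : ∀ j ∈ I, ν (Y j ⁻¹' ({s} : Set S)) ≤ ENNReal.ofReal q := by
              intro j _
              rw [hpre, hin_other j s hs]
              apply ENNReal.ofReal_le_ofReal
              rw [hq]
              gcongr
              exact hminle j
            calc ∏ j ∈ I, ν (Y j ⁻¹' ({s} : Set S))
                ≤ ∏ _j ∈ I, ENNReal.ofReal q := Finset.prod_le_prod' this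
              _ = ENNReal.ofReal q ^ k := by
                  rw [Finset.prod_const, (Finset.mem_powersetCard.1 hI).2]
        _ = (M.choose k : ENNReal) * ENNReal.ofReal q ^ k := by
            rw [Finset.sum_const, Finset.card_powersetCard, Finset.card_univ, Fintype.card_fin,
              nsmul_eq_mul]
    have hFbound : ν Fbad ≤ ((N - 1 : ℕ) : ENNReal)
        * ((M.choose k : ENNReal) * ENNReal.ofReal q ^ k) := by
      calc ν Fbad ≤ ∑ s ∈ Finset.univ.erase sx, ν {ω | k ≤ voteCount Y s ω} :=
            measure_biUnion_finset_le _ _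
        _ ≤ ∑ _s ∈ Finset.univ.erase sx,
              ((M.choose k : ENNReal) * ENNReal.ofReal q ^ k) :=
            Finset.sum_le_sum fun s hsmem => hFs s (Finset.mem_erase.1 hsmem).1
        _ = ((N - 1 : ℕ) : ENNReal) * ((M.choose k : ENNReal) * ENNReal.ofReal q ^ k) := by
            rw [Finset.sum_const, Finset.card_erase_of_mem (Finset.mem_univ sx),
              Finset.card_univ, hcard, nsmul_eq_mul]
    have h2 : (ν Fbad).toReal < (M.choose (M / 2) : ℝ) / (N : ℝ) ^ (k - 1) := by
      have hBne : ((N - 1 : ℕ) : ENNReal) * ((M.choose k : ENNReal) * ENNReal.ofReal q ^ k)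
          ≠ ⊤ := by
        apply ENNReal.mul_ne_top (ENNReal.natCast_ne_top _)
        exact ENNReal.mul_ne_top (ENNReal.natCast_ne_top _)
          (ENNReal.pow_ne_top ENNReal.ofReal_ne_top)
      have htr : (ν Fbad).toReal ≤ ((N - 1 : ℕ) : ℝ) * ((M.choose k : ℝ) * q ^ k) := by
        have := ENNReal.toReal_mono hBne hFbound
        rwa [ENNReal.toReal_mul, ENNReal.toReal_mul, ENNReal.toReal_pow,
          ENNReal.toReal_natCast, ENNReal.toReal_natCast, ENNReal.toReal_ofReal hq0] at this
      have hcast : ((N - 1 : ℕ) : ℝ) = (N : ℝ) - 1 := by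
        have : 1 ≤ N := by omega
        push_cast [this]; ring
      have hmid : (0:ℝ) < (M.choose (M / 2) : ℝ) := by
        exact_mod_cast Nat.choose_pos (Nat.div_le_self M 2)
      have hstep : ((N - 1 : ℕ) : ℝ) * ((M.choose k : ℝ) * q ^ k)
          ≤ ((N:ℝ) - 1) * ((M.choose (M / 2) : ℝ) * (1 / N) ^ k) := by
        rw [hcast]
        have hck : (M.choose k : ℝ) ≤ (M.choose (M / 2) : ℝ) := by
          exact_mod_cast Nat.choose_le_middle k M
        have hqk : q ^ k ≤ (1 / (N:ℝ)) ^ k := pow_le_pow_left₀ hq0 hqN.le k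
        exact mul_le_mul_of_nonneg_left
          (mul_le_mul hck hqk (pow_nonneg hq0 k) hmid.le) (by linarith)
      have hstep2 : ((N:ℝ) - 1) * ((M.choose (M / 2) : ℝ) * (1 / N) ^ k)
          < (N:ℝ) * ((M.choose (M / 2) : ℝ) * (1 / N) ^ k) := by
        have hXpos : (0:ℝ) < (M.choose (M / 2) : ℝ) * (1 / N) ^ k := by positivity
        exact mul_lt_mul_of_pos_right (by linarith) hXpos
      have heq : (N:ℝ) * ((M.choose (M / 2) : ℝ) * (1 / N) ^ k)
          = (M.choose (M / 2) : ℝ) / (N : ℝ) ^ (k - 1) := by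
        have hpow : (N:ℝ) ^ k = (N:ℝ) ^ (k - 1) * N := by
          rw [← pow_succ, Nat.sub_add_cancel hk1]
        rw [one_div, inv_pow, hpow]
        field_simp
      linarith
    -- combine: ν G ≤ ν A + ν Fbad
    have hGAF : {ω | k ≤ voteCount Y sx ω} ⊆ A ∪ Fbad := by
      intro ω hω
      by_cases hF : ω ∈ Fbad
      · exact Or.inr hF
      · left
        refine ⟨hω, fun s hs => ?_⟩
        by_contra hns
        push_neg at hns
        refine absurd ?_ hF
        rw [hFbad]
        exact Set.mem_iUnion.2 ⟨s, Set.mem_iUnion.2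
          ⟨Finset.mem_erase.2 ⟨hs, Finset.mem_univ s⟩, le_trans hω hns⟩⟩
    have h3 : (ν {ω | k ≤ voteCount Y sx ω}).toReal ≤ (ν A).toReal + (ν Fbad).toReal := by
      have h4 : ν {ω | k ≤ voteCount Y sx ω} ≤ ν A + ν Fbad :=
        le_trans (measure_mono hGAF) (measure_union_le A Fbad)
      have := ENNReal.toReal_mono
        (ENNReal.add_ne_top.2 ⟨measure_ne_top ν A, measure_ne_top ν Fbad⟩ : ν A + ν Fbad ≠ ⊤) h4
      rwa [ENNReal.toReal_add (measure_ne_top ν A) (measure_ne_top ν Fbad)] at this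
    have hνA : (ν A).toReal >
        (∑ i ∈ Finset.Icc k M, (M.choose i : ℝ) * βmin ^ i * (1 - βmax) ^ (M - i))
          - (M.choose (M / 2) : ℝ) / (N : ℝ) ^ (k - 1) := by
      linarith
    -- transfer to μ
    have hmuA : α * (ν A).toReal ≤ (μ A).toReal := by
      have hc := cond_apply hXinM μ A
      have hXA : μ Xin * ν A = μ (Xin ∩ A) := by
        rw [hν, hc, ← mul_assoc, ENNReal.mul_inv_cancel hμXin0 (measure_ne_top μ Xin), one_mul]
      have : α * (ν A).toReal = (μ (Xin ∩ A)).toReal := by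
        rw [← hXA, ENNReal.toReal_mul, hμXin, ENNReal.toReal_ofReal hα0]
      rw [this]
      exact ENNReal.toReal_mono (measure_ne_top μ A) (measure_mono Set.inter_subset_right)
    calc α * ∑ i ∈ Finset.Icc k M, (M.choose i : ℝ) * βmin ^ i * (1 - βmax) ^ (M - i)
          - α * ((M.choose (M / 2) : ℝ) / (N : ℝ) ^ (k - 1))
        = α * ((∑ i ∈ Finset.Icc k M, (M.choose i : ℝ) * βmin ^ i * (1 - βmax) ^ (M - i))
            - (M.choose (M / 2) : ℝ) / (N : ℝ) ^ (k - 1)) := by ring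
      _ < α * (ν A).toReal := by
          exact mul_lt_mul_of_pos_left hνA h0
      _ ≤ (μ A).toReal := hmuA
end

section
/- Skip rate lower bound on out-of-distribution inputs: Under assumption (A3), the probability that the EnSolver skips an out-of-distribution input satisfies P(m(x) = s_skip | x ∈ X_out) > 1 − (N/(N−1))·E(M,N,τ), where k = M(1−τ)+1 and E(M,N,τ) = C(M,⌊M/2⌋)/N^{k−1}. -/
open MeasureTheory ProbabilityTheory Finset

/-- Skip rate lower bound on out-of-distribution inputs: under assumption (A3) (each of the
`M` independent base models predicts uniformly over the `N` possible strings), the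
probability that the EnSolver skips (i.e. every string receives fewer than `k` votes,
`k = M(1-τ)+1`) satisfies
`P(skip) > 1 - (N/(N-1)) E(M,N,τ)` where `E(M,N,τ) = C(M,⌊M/2⌋)/N^{k-1}`. -/
theorem skip_rate_ood_lower_bound {Ω S : Type*} [MeasurableSpace Ω] [MeasurableSpace S]
    [MeasurableSingletonClass S] [Fintype S] [DecidableEq S]
    (μ : Measure Ω) [IsProbabilityMeasure μ]
    (M N k : ℕ) (hN : 2 ≤ N) (hcard : Fintype.card S = N) (hk1 : 1 ≤ k) (hkM : k ≤ M)
    (Y : Fin M → Ω → S) (hYm : ∀ i, Measurable (Y i))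
    (hind : iIndepFun Y μ)
    (hunif : ∀ i s, μ {ω | Y i ω = s} = (N : ENNReal)⁻¹) :
    (μ {ω | ∀ s, voteCount Y s ω < k}).toReal
      > 1 - ((N : ℝ) / ((N : ℝ) - 1)) * ((M.choose (M / 2) : ℝ) / (N : ℝ) ^ (k - 1)) := by
  classical
  -- The "bad" event: some string gets at least k votes.
  set A : Set Ω := ⋃ s : S, ⋃ T ∈ Finset.powersetCard k (Finset.univ : Finset (Fin M)),
      ⋂ i ∈ T, Y i ⁻¹' {s} with hA
  have hmeasA : MeasurableSet A := by
    apply MeasurableSet.iUnion; intro s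
    apply MeasurableSet.biUnion (Set.to_countable _); intro T _
    exact MeasurableSet.biInter (Set.to_countable _) fun i _ =>
      (hYm i) (measurableSet_singleton s)
  -- The skip event is the complement of A.
  have hset : {ω | ∀ s, voteCount Y s ω < k} = Aᶜ := by
    ext ω
    simp only [Set.mem_setOf_eq, hA, Set.compl_iUnion, Set.mem_iInter, Set.mem_compl_iff,
      Set.mem_iUnion, Set.mem_iInter, not_exists]
    constructor
    · intro h s T hT hmem
      have hTsub : T ⊆ Finset.univ.filter fun i => Y i ω = s := by
        intro i hi
        simp only [Finset.mem_filter, Finset.mem_univ, true_and]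
        have := hmem i hi
        simpa using this
      have := Finset.card_le_card hTsub
      rw [Finset.mem_powersetCard] at hT
      have hlt := h s
      unfold voteCount at hlt
      omega
    · intro h s
      by_contra hcon
      push_neg at hcon
      unfold voteCount at hcon
      obtain ⟨T, hTsub, hTcard⟩ := Finset.exists_subset_card_eq hcon
      refine h s T (Finset.mem_powersetCard.mpr ⟨Finset.subset_univ T, hTcard⟩) ?_
      intro i hi
      have := hTsub hi
      simp only [Finset.mem_filter] at this
      simpa using this.2
  -- Probability of each intersection event.
  have hinter : ∀ (s : S) (T : Finset (Fin M)), T.card = k →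
      μ (⋂ i ∈ T, Y i ⁻¹' {s}) = ((N : ENNReal)⁻¹) ^ k := by
    intro s T hTcard
    have h := hind.meas_biInter (S := T) (s := fun i => Y i ⁻¹' {s})
      (fun i _ => ⟨{s}, measurableSet_singleton s, rfl⟩)
    rw [h]
    have : ∀ i, μ (Y i ⁻¹' {s}) = (N : ENNReal)⁻¹ := by
      intro i
      have := hunif i s
      simpa [Set.preimage, Set.mem_singleton_iff] using this
    rw [Finset.prod_congr rfl fun i _ => this i, Finset.prod_const, hTcard]
  -- Union bound.
  have hAbound : μ A ≤ (N : ENNReal) * (M.choose k : ENNReal) * ((N : ENNReal)⁻¹) ^ k := by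
    calc μ A ≤ ∑ s : S, μ (⋃ T ∈ Finset.powersetCard k (Finset.univ : Finset (Fin M)),
          ⋂ i ∈ T, Y i ⁻¹' {s}) := by
          rw [hA]
          exact (measure_iUnion_fintype_le μ _)
      _ ≤ ∑ s : S, ∑ T ∈ Finset.powersetCard k (Finset.univ : Finset (Fin M)),
            μ (⋂ i ∈ T, Y i ⁻¹' {s}) := by
          exact Finset.sum_le_sum fun s _ => measure_biUnion_finset_le _ _
      _ = ∑ s : S, ∑ T ∈ Finset.powersetCard k (Finset.univ : Finset (Fin M)),
            ((N : ENNReal)⁻¹) ^ k := by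
          refine Finset.sum_congr rfl fun s _ => Finset.sum_congr rfl fun T hT => ?_
          exact hinter s T (Finset.mem_powersetCard.mp hT).2
      _ = (N : ENNReal) * (M.choose k : ENNReal) * ((N : ENNReal)⁻¹) ^ k := by
          simp [Finset.sum_const, Finset.card_powersetCard, hcard, mul_assoc]
  -- Translate to reals.
  have hN0 : (0 : ℝ) < N := by positivity
  have hNne : (N : ENNReal) ≠ 0 := by exact Nat.cast_ne_zero.mpr (by omega)
  have hNtop : (N : ENNReal) ≠ ⊤ := ENNReal.natCast_ne_top N
  have hmu_compl : μ Aᶜ = 1 - μ A := by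
    rw [measure_compl hmeasA (measure_ne_top μ A), measure_univ]
  have hA1 : μ A ≤ 1 := prob_le_one
  have htoReal : (μ Aᶜ).toReal = 1 - (μ A).toReal := by
    rw [hmu_compl, ENNReal.toReal_sub_of_le hA1 ENNReal.one_ne_top, ENNReal.toReal_one]
  have hAreal : (μ A).toReal ≤ (N : ℝ) * (M.choose k : ℝ) * ((N : ℝ)⁻¹) ^ k := by
    have h1 : ((N : ENNReal) * (M.choose k : ENNReal) * ((N : ENNReal)⁻¹) ^ k).toReal
        = (N : ℝ) * (M.choose k : ℝ) * ((N : ℝ)⁻¹) ^ k := by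
      rw [ENNReal.toReal_mul, ENNReal.toReal_mul, ENNReal.toReal_pow, ENNReal.toReal_inv]
      simp
    rw [← h1]
    exact ENNReal.toReal_mono (by
      exact ENNReal.mul_ne_top (ENNReal.mul_ne_top hNtop (ENNReal.natCast_ne_top _))
        (ENNReal.pow_ne_top (by simp [hNne]))) hAbound
  rw [hset, htoReal]
  -- Final real-number inequality.
  have hkey : (N : ℝ) * (M.choose k : ℝ) * ((N : ℝ)⁻¹) ^ k
      < ((N : ℝ) / ((N : ℝ) - 1)) * ((M.choose (M / 2) : ℝ) / (N : ℝ) ^ (k - 1)) := by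
    have hN1 : (1 : ℝ) < N := by exact_mod_cast hN
    have hNm1 : (0 : ℝ) < (N : ℝ) - 1 := by linarith
    have hchoose : (M.choose k : ℝ) ≤ (M.choose (M / 2) : ℝ) := by
      exact_mod_cast Nat.choose_le_middle k M
    have hchoosepos : (0 : ℝ) < (M.choose (M / 2) : ℝ) := by
      exact_mod_cast Nat.choose_pos (Nat.div_le_self M 2)
    -- LHS = C(M,k) / N^(k-1)
    have hNk : (N : ℝ) * ((N : ℝ)⁻¹) ^ k = ((N : ℝ) ^ (k - 1))⁻¹ := by
      rw [inv_pow]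
      rw [show k = (k - 1) + 1 by omega, pow_succ]
      field_simp
      ring_nf
      simp
    have hLHS : (N : ℝ) * (M.choose k : ℝ) * ((N : ℝ)⁻¹) ^ k
        = (M.choose k : ℝ) / (N : ℝ) ^ (k - 1) := by
      rw [mul_comm (N : ℝ) (M.choose k : ℝ), mul_assoc, hNk, div_eq_mul_inv]
    rw [hLHS]
    have hpowpos : (0 : ℝ) < (N : ℝ) ^ (k - 1) := by positivity
    rw [div_lt_iff₀ hpowpos] at *
    have hfrac : (1 : ℝ) < (N : ℝ) / ((N : ℝ) - 1) := by
      rw [lt_div_iff₀ hNm1]; linarith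
    calc (M.choose k : ℝ) ≤ (M.choose (M / 2) : ℝ) := hchoose
      _ < ((N : ℝ) / ((N : ℝ) - 1)) * (M.choose (M / 2) : ℝ) := by
          nlinarith
      _ = ((N : ℝ) / ((N : ℝ) - 1)) * ((M.choose (M / 2) : ℝ) / (N : ℝ) ^ (k - 1))
            * (N : ℝ) ^ (k - 1) := by
          field_simp
  linarith [hAreal]
end

section
/- Skip rate lower bound on in-distribution inputs: Under assumptions (A1)–(A2), the probability that the EnSolver skips an in-distribution input satisfies P(m(x) = s_skip | x ∈ X_in) > ∑_{i=0}^{k−1} C(M,i) β_min^i (1−β_max)^{M−i} − E(M,N,τ), where k = M(1−τ)+1. -/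
open MeasureTheory ProbabilityTheory Finset

open scoped ENNReal

lemma prod_formula {Ω S : Type*} [MeasurableSpace Ω] [MeasurableSpace S]
    {M : ℕ} {Y : Fin M → Ω → S} {μ : MeasureTheory.Measure Ω}
    (hind : iIndepFun Y μ)
    (sets : Fin M → Set S) (hm : ∀ i, MeasurableSet (sets i)) (T : Finset (Fin M)) :
    μ (⋂ i ∈ T, Y i ⁻¹' sets i) = ∏ i ∈ T, μ (Y i ⁻¹' sets i) :=
  ProbabilityTheory.iIndepFun.measure_inter_preimage_eq_mul hind T (fun i _ => hm i)

/-- Skip rate lower bound on in-distribution inputs: under assumptions (A1)–(A2), the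
probability that the EnSolver skips an in-distribution input (i.e. every string receives
fewer than `k` votes, `k = M(1-τ)+1`) satisfies
`P(skip) > ∑_{i=0}^{k-1} C(M,i) β_min^i (1-β_max)^{M-i} - E(M,N,τ)`,
where `E(M,N,τ) = C(M,⌊M/2⌋)/N^{k-1}`. -/
theorem skip_rate_ind_lower_bound {Ω S : Type*} [MeasurableSpace Ω] [MeasurableSpace S]
    [MeasurableSingletonClass S] [Fintype S] [DecidableEq S]
    (μ : Measure Ω) [IsProbabilityMeasure μ]
    (M N k : ℕ) (hN : 2 ≤ N) (hcard : Fintype.card S = N) (hk1 : 1 ≤ k) (hkM : k ≤ M)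
    (Y : Fin M → Ω → S) (hYm : ∀ i, Measurable (Y i))
    (hind : iIndepFun Y μ)
    (sx : S) (β : Fin M → ℝ) (βmin βmax : ℝ)
    (hA1 : 1 / (N : ℝ) < βmin)
    (hsx : ∀ i, μ {ω | Y i ω = sx} = ENNReal.ofReal (β i))
    (hother : ∀ i s, s ≠ sx →
      μ {ω | Y i ω = s} = ENNReal.ofReal ((1 - β i) / ((N : ℝ) - 1)))
    (hminle : ∀ i, βmin ≤ β i) (hminmem : ∃ i, β i = βmin)
    (hmaxle : ∀ i, β i ≤ βmax) (hmaxmem : ∃ i, β i = βmax) :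
    (μ {ω | ∀ s, voteCount Y s ω < k}).toReal
      > ∑ i ∈ Finset.range k, (M.choose i : ℝ) * βmin ^ i * (1 - βmax) ^ (M - i)
        - (M.choose (M / 2) : ℝ) / (N : ℝ) ^ (k - 1) := by
  classical
  -- basic real facts
  have hN0 : (0:ℝ) < N := by positivity
  have hN1 : (1:ℝ) ≤ (N:ℝ) - 1 := by
    have : (2:ℝ) ≤ (N:ℝ) := by exact_mod_cast hN
    linarith
  have hNinv0 : (0:ℝ) < 1 / N := by positivity
  have hβmin0 : 0 ≤ βmin := le_of_lt (hNinv0.trans hA1)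
  have hβ0 : ∀ i, 0 ≤ β i := fun i => hβmin0.trans (hminle i)
  have hβ1 : ∀ i, β i ≤ 1 := by
    intro i
    have h := (hsx i) ▸ prob_le_one (μ := μ) (s := {ω | Y i ω = sx})
    exact ENNReal.ofReal_le_one.mp h
  have hβmin1 : βmin ≤ 1 := by obtain ⟨i, hi⟩ := hminmem; exact hi ▸ hβ1 i
  have hβmax1 : βmax ≤ 1 := by obtain ⟨i, hi⟩ := hmaxmem; exact hi ▸ hβ1 i
  have hβmax0 : 0 ≤ 1 - βmax := by linarith
  -- measure of single-value events
  have hmeas : ∀ (i : Fin M) (s : S), MeasurableSet (Y i ⁻¹' {s}) :=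
    fun i s => hYm i (measurableSet_singleton s)
  have hsx' : ∀ i, μ (Y i ⁻¹' {sx}) = ENNReal.ofReal (β i) := fun i => hsx i
  have hother' : ∀ (i : Fin M) (s : S), s ≠ sx →
      μ (Y i ⁻¹' {s}) = ENNReal.ofReal ((1 - β i) / ((N : ℝ) - 1)) :=
    fun i s hs => hother i s hs
  have hcompl : ∀ i, μ (Y i ⁻¹' {sx}ᶜ) = ENNReal.ofReal (1 - β i) := by
    intro i
    rw [Set.preimage_compl, measure_compl (hmeas i sx) (measure_ne_top μ _), measure_univ,
      hsx' i, ENNReal.ofReal_sub _ (hβ0 i), ENNReal.ofReal_one]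
  -- the elementary events
  set E : Finset (Fin M) → Set Ω :=
    fun I => ⋂ j ∈ (Finset.univ : Finset (Fin M)),
      Y j ⁻¹' (if j ∈ I then ({sx} : Set S) else {sx}ᶜ) with hEdef
  have hEmeas : ∀ I, MeasurableSet (E I) := by
    intro I
    refine Finset.measurableSet_biInter _ (fun j _ => ?_)
    by_cases h : j ∈ I <;> simp only [h, if_true, if_false] <;>
      [exact hmeas j sx; exact (hmeas j sx).compl]
  have hEfilter : ∀ (I : Finset (Fin M)) (ω : Ω), ω ∈ E I →
      (Finset.univ.filter fun j => Y j ω = sx) = I := by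
    intro I ω hω
    ext j
    simp only [Finset.mem_filter, Finset.mem_univ, true_and]
    have hj := Set.mem_iInter.mp (Set.mem_iInter.mp hω j) (Finset.mem_univ j)
    by_cases h : j ∈ I <;> simp only [h, if_true, if_false] at hj <;>
      simp_all [Set.mem_preimage]
  have hEdisj : ∀ I J : Finset (Fin M), I ≠ J → Disjoint (E I) (E J) := by
    intro I J hIJ
    rw [Set.disjoint_left]
    intro ω hI hJ
    exact hIJ ((hEfilter I ω hI).symm.trans (hEfilter J ω hJ))
  have hEμ : ∀ I : Finset (Fin M),
      μ (E I) = (∏ j ∈ I, ENNReal.ofReal (β j)) * ∏ j ∈ Iᶜ, ENNReal.ofReal (1 - β j) := by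
    intro I
    have hsets : ∀ j : Fin M, j ∈ (Finset.univ : Finset (Fin M)) →
        MeasurableSet (if j ∈ I then ({sx} : Set S) else {sx}ᶜ) := by
      intro j _
      by_cases h : j ∈ I <;> simp only [h, if_true, if_false]
      · exact measurableSet_singleton sx
      · exact (measurableSet_singleton sx).compl
    have h := ProbabilityTheory.iIndepFun.measure_inter_preimage_eq_mul hind Finset.univ hsets
    rw [hEdef]
    simp only []
    rw [h, ← Finset.prod_mul_prod_compl I
      (fun j => μ (Y j ⁻¹' (if j ∈ I then ({sx} : Set S) else {sx}ᶜ)))]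
    congr 1
    · exact Finset.prod_congr rfl (fun j hj => by rw [if_pos hj, hsx' j])
    · exact Finset.prod_congr rfl (fun j hj => by
        rw [if_neg (Finset.mem_compl.mp hj), hcompl j])
  have hEμ_ge : ∀ (i : ℕ) (I : Finset (Fin M)), I.card = i →
      ENNReal.ofReal (βmin ^ i * (1 - βmax) ^ (M - i)) ≤ μ (E I) := by
    intro i I hI
    rw [hEμ I]
    have hc : Iᶜ.card = M - i := by rw [Finset.card_compl, Fintype.card_fin, hI]
    calc ENNReal.ofReal (βmin ^ i * (1 - βmax) ^ (M - i))
        = ENNReal.ofReal (βmin ^ i) * ENNReal.ofReal ((1 - βmax) ^ (M - i)) :=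
          ENNReal.ofReal_mul (by positivity)
      _ = ENNReal.ofReal βmin ^ i * ENNReal.ofReal (1 - βmax) ^ (M - i) := by
          rw [ENNReal.ofReal_pow hβmin0, ENNReal.ofReal_pow hβmax0]
      _ ≤ (∏ j ∈ I, ENNReal.ofReal (β j)) * ∏ j ∈ Iᶜ, ENNReal.ofReal (1 - β j) := by
          have h1 : ENNReal.ofReal βmin ^ i ≤ ∏ j ∈ I, ENNReal.ofReal (β j) := by
            rw [show ENNReal.ofReal βmin ^ i = ∏ _j ∈ I, ENNReal.ofReal βmin by
              rw [Finset.prod_const, hI]]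
            exact Finset.prod_le_prod' (fun j _ => ENNReal.ofReal_le_ofReal (hminle j))
          have h2 : ENNReal.ofReal (1 - βmax) ^ (M - i)
              ≤ ∏ j ∈ Iᶜ, ENNReal.ofReal (1 - β j) := by
            rw [show ENNReal.ofReal (1 - βmax) ^ (M - i)
                = ∏ _j ∈ Iᶜ, ENNReal.ofReal (1 - βmax) by rw [Finset.prod_const, hc]]
            exact Finset.prod_le_prod' (fun j _ =>
              ENNReal.ofReal_le_ofReal (by linarith [hmaxle j]))
          exact mul_le_mul' h1 h2
  -- lower bound for P(A)
  set A : Set Ω := {ω | voteCount Y sx ω < k} with hAdef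
  have hA_ge : ∑ i ∈ Finset.range k, (M.choose i : ℝ) * βmin ^ i * (1 - βmax) ^ (M - i)
      ≤ (μ A).toReal := by
    set Q : Finset (Finset (Fin M)) :=
      (Finset.range k).biUnion
        (fun i => Finset.powersetCard i (Finset.univ : Finset (Fin M))) with hQ
    have hQdisj : Set.PairwiseDisjoint (↑Q : Set (Finset (Fin M))) E :=
      fun I _ J _ hIJ => hEdisj I J hIJ
    have hunion : μ (⋃ I ∈ Q, E I) = ∑ I ∈ Q, μ (E I) :=
      measure_biUnion_finset hQdisj (fun I _ => hEmeas I)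
    have hsubA : (⋃ I ∈ Q, E I) ⊆ A := by
      intro ω hω
      obtain ⟨I, hIQ, hωI⟩ := Set.mem_iUnion₂.mp hω
      obtain ⟨i, hik, hIc⟩ := Finset.mem_biUnion.mp hIQ
      have hc : I.card = i := (Finset.mem_powersetCard.mp hIc).2
      have : voteCount Y sx ω = I.card := by
        rw [voteCount, hEfilter I ω hωI]
      simp only [hAdef, Set.mem_setOf_eq]
      rw [this, hc]
      exact Finset.mem_range.mp hik
    have h1 : ∑ I ∈ Q, μ (E I) ≤ μ A := hunion ▸ measure_mono hsubA
    have h2 : ∑ i ∈ Finset.range k,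
        (M.choose i : ℝ≥0∞) * ENNReal.ofReal (βmin ^ i * (1 - βmax) ^ (M - i))
        ≤ ∑ I ∈ Q, μ (E I) := by
      have hfibdisj : Set.PairwiseDisjoint (↑(Finset.range k) : Set ℕ)
          (fun i => Finset.powersetCard i (Finset.univ : Finset (Fin M))) := by
        intro i _ j _ hij
        refine Finset.disjoint_left.mpr (fun I hI hJ => hij ?_)
        rw [← (Finset.mem_powersetCard.mp hI).2, ← (Finset.mem_powersetCard.mp hJ).2]
      rw [hQ, Finset.sum_biUnion hfibdisj]
      refine Finset.sum_le_sum (fun i _ => ?_)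
      calc (M.choose i : ℝ≥0∞) * ENNReal.ofReal (βmin ^ i * (1 - βmax) ^ (M - i))
          = ∑ _I ∈ Finset.powersetCard i (Finset.univ : Finset (Fin M)),
              ENNReal.ofReal (βmin ^ i * (1 - βmax) ^ (M - i)) := by
            rw [Finset.sum_const, Finset.card_powersetCard, Finset.card_univ,
              Fintype.card_fin, nsmul_eq_mul]
        _ ≤ ∑ I ∈ Finset.powersetCard i (Finset.univ : Finset (Fin M)), μ (E I) :=
            Finset.sum_le_sum (fun I hI =>
              hEμ_ge i I (Finset.mem_powersetCard.mp hI).2)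
    have h3 : ∑ i ∈ Finset.range k,
        (M.choose i : ℝ≥0∞) * ENNReal.ofReal (βmin ^ i * (1 - βmax) ^ (M - i)) ≤ μ A :=
      h2.trans h1
    have h4 := ENNReal.toReal_mono (measure_ne_top μ A) h3
    refine le_trans (le_of_eq ?_) h4
    rw [ENNReal.toReal_sum (by
      intro i _
      exact ENNReal.mul_ne_top (ENNReal.natCast_ne_top _) ENNReal.ofReal_ne_top)]
    refine Finset.sum_congr rfl (fun i _ => ?_)
    rw [ENNReal.toReal_mul, ENNReal.toReal_natCast, ENNReal.toReal_ofReal (by positivity),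
      mul_assoc]
  -- upper bound for P(B)
  set Bset : Set Ω := ⋃ s ∈ Finset.univ.erase sx, {ω | k ≤ voteCount Y s ω} with hBdef
  have hB_lt : (μ Bset).toReal < (M.choose (M / 2) : ℝ) / (N : ℝ) ^ (k - 1) := by
    set q : ℝ := (1 - βmin) / ((N : ℝ) - 1) with hqdef
    have hq0 : 0 ≤ q := div_nonneg (by linarith) (by linarith)
    have hqlt : q < 1 / N := by
      rw [hqdef, div_lt_div_iff₀ (by linarith) hN0]
      have h := (div_lt_iff₀ hN0).mp hA1
      nlinarith
    -- per-string bound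
    have hBs : ∀ s : S, s ≠ sx → μ {ω | k ≤ voteCount Y s ω}
        ≤ (M.choose k : ℝ≥0∞) * ENNReal.ofReal q ^ k := by
      intro s hs
      have hsubs : {ω | k ≤ voteCount Y s ω} ⊆
          ⋃ I ∈ Finset.powersetCard k (Finset.univ : Finset (Fin M)),
            (⋂ j ∈ I, Y j ⁻¹' {s}) := by
        intro ω hω
        obtain ⟨I, hIsub, hIcard⟩ := Finset.exists_subset_card_eq hω
        refine Set.mem_biUnion
          (Finset.mem_powersetCard.mpr ⟨Finset.subset_univ I, hIcard⟩) ?_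
        refine Set.mem_iInter₂.mpr (fun j hj => ?_)
        exact (Finset.mem_filter.mp (hIsub hj)).2
      calc μ {ω | k ≤ voteCount Y s ω}
          ≤ ∑ I ∈ Finset.powersetCard k (Finset.univ : Finset (Fin M)),
              μ (⋂ j ∈ I, Y j ⁻¹' {s}) :=
            le_trans (measure_mono hsubs) (measure_biUnion_finset_le _ _)
        _ ≤ ∑ _I ∈ Finset.powersetCard k (Finset.univ : Finset (Fin M)),
              ENNReal.ofReal q ^ k := by
            refine Finset.sum_le_sum (fun I hI => ?_)
            have hIcard : I.card = k := (Finset.mem_powersetCard.mp hI).2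
            rw [prod_formula hind (fun _ => {s}) (fun _ => measurableSet_singleton s) I]
            calc ∏ j ∈ I, μ (Y j ⁻¹' {s})
                = ∏ j ∈ I, ENNReal.ofReal ((1 - β j) / ((N : ℝ) - 1)) :=
                  Finset.prod_congr rfl (fun j _ => hother' j s hs)
              _ ≤ ∏ _j ∈ I, ENNReal.ofReal q :=
                  Finset.prod_le_prod' (fun j _ => ENNReal.ofReal_le_ofReal
                    ((div_le_div_iff_of_pos_right (by linarith : (0:ℝ) < (N:ℝ) - 1)).mpr (by linarith [hminle j])))
              _ = ENNReal.ofReal q ^ k := by rw [Finset.prod_const, hIcard]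
        _ = (M.choose k : ℝ≥0∞) * ENNReal.ofReal q ^ k := by
            rw [Finset.sum_const, Finset.card_powersetCard, Finset.card_univ,
              Fintype.card_fin, nsmul_eq_mul]
    have hBbound : μ Bset ≤ ((N - 1 : ℕ) : ℝ≥0∞) *
        ((M.choose k : ℝ≥0∞) * ENNReal.ofReal q ^ k) := by
      rw [hBdef]
      refine le_trans (measure_biUnion_finset_le _ _) ?_
      calc ∑ s ∈ Finset.univ.erase sx, μ {ω | k ≤ voteCount Y s ω}
          ≤ ∑ _s ∈ Finset.univ.erase sx,
              (M.choose k : ℝ≥0∞) * ENNReal.ofReal q ^ k :=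
            Finset.sum_le_sum (fun s hsmem =>
              hBs s (Finset.mem_erase.mp hsmem).1)
        _ = ((N - 1 : ℕ) : ℝ≥0∞) * ((M.choose k : ℝ≥0∞) * ENNReal.ofReal q ^ k) := by
            rw [Finset.sum_const, Finset.card_erase_of_mem (Finset.mem_univ sx),
              Finset.card_univ, hcard, nsmul_eq_mul]
    have htoReal : (μ Bset).toReal ≤ ((N : ℝ) - 1) * ((M.choose k : ℝ) * q ^ k) := by
      have hfin : ((N - 1 : ℕ) : ℝ≥0∞) * ((M.choose k : ℝ≥0∞) * ENNReal.ofReal q ^ k) ≠ ⊤ :=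
        ENNReal.mul_ne_top (ENNReal.natCast_ne_top _)
          (ENNReal.mul_ne_top (ENNReal.natCast_ne_top _)
            (ENNReal.pow_ne_top ENNReal.ofReal_ne_top))
      have h := ENNReal.toReal_mono hfin hBbound
      rw [ENNReal.toReal_mul, ENNReal.toReal_mul, ENNReal.toReal_natCast, ENNReal.toReal_natCast,
        ENNReal.toReal_pow, ENNReal.toReal_ofReal hq0] at h
      have hcast : ((N - 1 : ℕ) : ℝ) = (N : ℝ) - 1 := by
        have : (1:ℕ) ≤ N := le_trans (by norm_num) hN
        push_cast [this]
        ring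
      rwa [hcast] at h
    -- numeric strict inequality
    have hck : (0:ℝ) < (M.choose k : ℝ) := by
      exact_mod_cast Nat.choose_pos hkM
    have hcmid : (M.choose k : ℝ) ≤ (M.choose (M / 2) : ℝ) := by
      exact_mod_cast Nat.choose_le_middle k M
    have hNpow : (0:ℝ) < (1 / (N:ℝ)) ^ (k - 1) := by positivity
    have hkey : ((N : ℝ) - 1) * ((M.choose k : ℝ) * q ^ k)
        < (M.choose (M / 2) : ℝ) / (N : ℝ) ^ (k - 1) := by
      have hpowle : q ^ (k - 1) ≤ (1 / (N:ℝ)) ^ (k - 1) :=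
        pow_le_pow_left₀ hq0 hqlt.le _
      have hqk : q ^ k = q ^ (k - 1) * q := by
        conv_lhs => rw [show k = (k - 1) + 1 by omega]
        rw [pow_succ]
      have hA0 : (0:ℝ) ≤ ((N : ℝ) - 1) * (M.choose k : ℝ) :=
        mul_nonneg (by linarith) hck.le
      have h1 : ((N : ℝ) - 1) * ((M.choose k : ℝ) * q ^ k)
          ≤ ((N : ℝ) - 1) * (M.choose k : ℝ) * ((1 / (N:ℝ)) ^ (k - 1) * q) := by
        have hstep : q ^ (k - 1) * q ≤ (1 / (N:ℝ)) ^ (k - 1) * q :=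
          mul_le_mul_of_nonneg_right hpowle hq0
        calc ((N : ℝ) - 1) * ((M.choose k : ℝ) * q ^ k)
            = ((N : ℝ) - 1) * (M.choose k : ℝ) * (q ^ (k - 1) * q) := by rw [hqk]; ring
          _ ≤ _ := mul_le_mul_of_nonneg_left hstep hA0
      have hApos : (0:ℝ) < ((N : ℝ) - 1) * (M.choose k : ℝ) := by
        have h : (0:ℝ) < (N:ℝ) - 1 := by linarith
        exact mul_pos h hck
      have h2 : ((N : ℝ) - 1) * (M.choose k : ℝ) * ((1 / (N:ℝ)) ^ (k - 1) * q)
          < ((N : ℝ) - 1) * (M.choose k : ℝ) * ((1 / (N:ℝ)) ^ (k - 1) * (1 / N)) :=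
        mul_lt_mul_of_pos_left (mul_lt_mul_of_pos_left hqlt hNpow) hApos
      have h3 : ((N : ℝ) - 1) * (M.choose k : ℝ) * ((1 / (N:ℝ)) ^ (k - 1) * (1 / N))
          ≤ (M.choose (M / 2) : ℝ) / (N : ℝ) ^ (k - 1) := by
        have hfrac : ((N : ℝ) - 1) * (1 / N) ≤ 1 := by
          rw [mul_one_div, div_le_one hN0]
          linarith
        have hP : (1 / (N:ℝ)) ^ (k - 1) = 1 / ((N:ℝ) ^ (k - 1)) := one_div_pow _ _
        calc ((N : ℝ) - 1) * (M.choose k : ℝ) * ((1 / (N:ℝ)) ^ (k - 1) * (1 / N))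
            = (((N : ℝ) - 1) * (1 / N)) * ((M.choose k : ℝ) * (1 / (N:ℝ)) ^ (k - 1)) := by
              ring
          _ ≤ 1 * ((M.choose (M / 2) : ℝ) * (1 / (N:ℝ)) ^ (k - 1)) := by
              refine mul_le_mul hfrac ?_ (by positivity) (by norm_num)
              exact mul_le_mul_of_nonneg_right hcmid hNpow.le
          _ = (M.choose (M / 2) : ℝ) * (1 / ((N:ℝ) ^ (k - 1))) := by rw [one_mul, hP]
          _ = (M.choose (M / 2) : ℝ) / (N : ℝ) ^ (k - 1) := by rw [mul_one_div]
      linarith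
    linarith
  -- assembly
  have hsub : A ⊆ {ω | ∀ s, voteCount Y s ω < k} ∪ Bset := by
    intro ω hω
    by_cases hb : ω ∈ Bset
    · exact Or.inr hb
    · refine Or.inl (fun s => ?_)
      by_cases hs : s = sx
      · exact hs ▸ hω
      · by_contra hlt
        exact hb (Set.mem_biUnion (Finset.mem_erase.mpr ⟨hs, Finset.mem_univ s⟩)
          (not_lt.mp hlt))
  have hchain : (μ A).toReal ≤ (μ {ω | ∀ s, voteCount Y s ω < k}).toReal + (μ Bset).toReal := by
    have h1 : μ A ≤ μ {ω | ∀ s, voteCount Y s ω < k} + μ Bset :=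
      le_trans (measure_mono hsub) (measure_union_le _ _)
    have h2 := ENNReal.toReal_mono (ENNReal.add_ne_top.mpr ⟨measure_ne_top μ _, measure_ne_top μ _⟩) h1
    rwa [ENNReal.toReal_add (measure_ne_top μ _) (measure_ne_top μ _)] at h2
  linarith
end

section
/- Skip rate lower bound (Lemma 8): Under assumptions (A1)–(A3) and with k = M(1−τ)+1, the EnSolver m satisfies P(m(x) = s_skip) > α·∑_{i=0}^{k−1} C(M,i) β_min^i (1−β_max)^{M−i} + (1−α) − ((N−α)/(N−1))·E(M,N,τ). -/
open MeasureTheory ProbabilityTheory Finset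
open scoped ENNReal

set_option linter.unusedSectionVars false

section Aux

open scoped ENNReal

variable {Ω S : Type*} [MeasurableSpace Ω] [MeasurableSpace S]
  [MeasurableSingletonClass S] [DecidableEq S] {M : ℕ}

lemma ensolver_pre_eq (Y : Fin M → Ω → S) (i : Fin M) (s : S) :
    {ω | Y i ω = s} = Y i ⁻¹' {s} := by
  ext ω; simp

lemma ensolver_measurable_voteCount (Y : Fin M → Ω → S) (hYm : ∀ i, Measurable (Y i)) (s : S) :
    Measurable fun ω => voteCount Y s ω := by
  have : (fun ω => voteCount Y s ω) = fun ω => ∑ i, if Y i ω = s then 1 else 0 := by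
    funext ω; rw [voteCount, Finset.card_filter]
  rw [this]
  exact Finset.measurable_sum _ fun i _ =>
    Measurable.ite ((hYm i) (measurableSet_singleton s)) measurable_const measurable_const

lemma ensolver_vote_upper (ν : Measure Ω) (Y : Fin M → Ω → S)
    (hind : iIndepFun Y ν) (k : ℕ) (s : S) (p : ℝ≥0∞)
    (hp : ∀ i, ν (Y i ⁻¹' {s}) ≤ p) :
    ν {ω | k ≤ voteCount Y s ω} ≤ (M.choose k : ℝ≥0∞) * p ^ k := by
  have hsub : {ω | k ≤ voteCount Y s ω} ⊆
      ⋃ T ∈ Finset.powersetCard k (univ : Finset (Fin M)), ⋂ i ∈ T, Y i ⁻¹' {s} := by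
    intro ω hω
    obtain ⟨T, hTsub, hTcard⟩ :=
      Finset.exists_subset_card_eq (s := Finset.univ.filter fun i => Y i ω = s) (n := k) hω
    refine Set.mem_iUnion₂.2 ⟨T, ?_, ?_⟩
    · simp [Finset.mem_powersetCard, hTcard]
    · refine Set.mem_iInter₂.2 fun i hi => ?_
      have := hTsub hi
      simp only [Finset.mem_filter] at this
      simpa using this.2
  calc ν {ω | k ≤ voteCount Y s ω}
      ≤ ∑ T ∈ Finset.powersetCard k (univ : Finset (Fin M)), ν (⋂ i ∈ T, Y i ⁻¹' {s}) :=
        le_trans (measure_mono hsub) (measure_biUnion_finset_le _ _)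
    _ ≤ ∑ _T ∈ Finset.powersetCard k (univ : Finset (Fin M)), p ^ k := by
        refine Finset.sum_le_sum fun T hT => ?_
        rw [hind.meas_biInter (fun i _ => ⟨{s}, measurableSet_singleton s, rfl⟩)]
        have hcard : T.card = k := (Finset.mem_powersetCard.1 hT).2
        calc ∏ i ∈ T, ν (Y i ⁻¹' {s}) ≤ ∏ _i ∈ T, p :=
              Finset.prod_le_prod' fun i _ => hp i
          _ = p ^ k := by rw [Finset.prod_const, hcard]
    _ = (M.choose k : ℝ≥0∞) * p ^ k := by
        rw [Finset.sum_const, Finset.card_powersetCard, Finset.card_univ, Fintype.card_fin,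
          nsmul_eq_mul]

end Aux

set_option maxHeartbeats 2000000

/-- Skip rate lower bound (Lemma 8): under assumptions (A1)–(A3) and with `k = M(1-τ)+1`,
the EnSolver `m` satisfies
`P(m(x) = s_skip) > α ∑_{i=0}^{k-1} C(M,i) β_min^i (1-β_max)^{M-i} + (1-α)
  - ((N-α)/(N-1)) E(M,N,τ)`,
where `E(M,N,τ) = C(M,⌊M/2⌋)/N^{k-1}` and the EnSolver skips exactly when every string
receives fewer than `k` votes. -/
theorem skip_rate_lower_bound {Ω S : Type*} [MeasurableSpace Ω] [MeasurableSpace S]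
    [MeasurableSingletonClass S] [Fintype S] [DecidableEq S]
    (μ : Measure Ω) [IsProbabilityMeasure μ]
    (M N k : ℕ) (hM : 0 < M) (hN : 2 ≤ N) (hcard : Fintype.card S = N)
    (hk1 : 1 ≤ k) (hkM : k ≤ M)
    (Xin : Set Ω) (hXinM : MeasurableSet Xin)
    (α : ℝ) (hα0 : 0 ≤ α) (hα1 : α ≤ 1) (hμXin : μ Xin = ENNReal.ofReal α)
    (Y : Fin M → Ω → S) (hYm : ∀ i, Measurable (Y i))
    (sx : S) (β : Fin M → ℝ) (βmin βmax : ℝ)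
    (hindin : iIndepFun Y (μ[|Xin]))
    (hindout : iIndepFun Y (μ[|Xinᶜ]))
    (hin_sx : ∀ i, (μ[|Xin]) {ω | Y i ω = sx} = ENNReal.ofReal (β i))
    (hin_other : ∀ i s, s ≠ sx →
      (μ[|Xin]) {ω | Y i ω = s} = ENNReal.ofReal ((1 - β i) / ((N : ℝ) - 1)))
    (hout : ∀ i s, (μ[|Xinᶜ]) {ω | Y i ω = s} = (N : ENNReal)⁻¹)
    (hA1 : 1 / (N : ℝ) < βmin)
    (hminle : ∀ i, βmin ≤ β i) (hminmem : ∃ i, β i = βmin)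
    (hmaxle : ∀ i, β i ≤ βmax) (hmaxmem : ∃ i, β i = βmax) :
    (μ {ω | ∀ s, voteCount Y s ω < k}).toReal
      > α * ∑ i ∈ Finset.range k, (M.choose i : ℝ) * βmin ^ i * (1 - βmax) ^ (M - i)
        + (1 - α)
        - (((N : ℝ) - α) / ((N : ℝ) - 1))
          * ((M.choose (M / 2) : ℝ) / (N : ℝ) ^ (k - 1)) := by
  classical
  -- numeric basics
  have hN0 : (0:ℝ) < N := by exact_mod_cast (by omega : 0 < N)
  have hN1R : (1:ℝ) < N := by exact_mod_cast (by omega : 1 < N)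
  have hN1pos : (0:ℝ) < (N:ℝ) - 1 := by linarith
  have hβmin_pos : 0 < βmin := lt_trans (by positivity) hA1
  -- α ∈ (0,1)
  have hα_pos : 0 < α := by
    by_contra h
    push_neg at h
    have hz : μ Xin = 0 := by
      rw [hμXin, ENNReal.ofReal_eq_zero]; exact h
    have h0 : (μ[|Xin]) {ω | Y ⟨0, hM⟩ ω = sx} = 0 := by
      rw [cond_apply hXinM, hz]
      simp [measure_mono_null Set.inter_subset_left hz]
    rw [hin_sx ⟨0, hM⟩] at h0
    rw [ENNReal.ofReal_eq_zero] at h0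
    have := hminle ⟨0, hM⟩
    linarith
  have hXin_ne0 : μ Xin ≠ 0 := by
    rw [hμXin, Ne, ENNReal.ofReal_eq_zero]; push_neg; exact hα_pos
  have hXinc : μ Xinᶜ = ENNReal.ofReal (1 - α) := by
    rw [prob_compl_eq_one_sub hXinM, hμXin, ← ENNReal.ofReal_one,
      ← ENNReal.ofReal_sub _ hα0]
  have hα_lt1 : α < 1 := by
    by_contra h
    push_neg at h
    have h1 : α = 1 := le_antisymm hα1 h
    have hz : μ Xinᶜ = 0 := by rw [hXinc, h1]; simp
    have h0 : (μ[|Xinᶜ]) {ω | Y ⟨0, hM⟩ ω = sx} = 0 := by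
      rw [cond_apply hXinM.compl, hz]
      simp [measure_mono_null Set.inter_subset_left hz]
    rw [hout ⟨0, hM⟩ sx] at h0
    have : (N : ENNReal) ≠ ∞ := ENNReal.natCast_ne_top N
    simp [ENNReal.inv_eq_zero] at h0
  have hXinc_ne0 : μ Xinᶜ ≠ 0 := by
    rw [hXinc, Ne, ENNReal.ofReal_eq_zero]; push_neg; linarith
  haveI hP1 : IsProbabilityMeasure (μ[|Xin]) := cond_isProbabilityMeasure hXin_ne0
  haveI hP2 : IsProbabilityMeasure (μ[|Xinᶜ]) := cond_isProbabilityMeasure hXinc_ne0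
  set ν1 := μ[|Xin] with hν1
  set ν2 := μ[|Xinᶜ] with hν2
  -- β bounds
  have hβpos : ∀ i, 0 < β i := fun i => lt_of_lt_of_le hβmin_pos (hminle i)
  have hβ1 : ∀ i, β i ≤ 1 := by
    intro i
    have h := hin_sx i
    have hle : ν1 {ω | Y i ω = sx} ≤ 1 := prob_le_one
    rw [h] at hle
    exact_mod_cast (ENNReal.ofReal_le_one).1 hle
  obtain ⟨imax, himax⟩ := hmaxmem
  have hβmax1 : βmax ≤ 1 := himax ▸ hβ1 imax
  have hβminmax : βmin ≤ βmax := himax ▸ hminle imax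
  have hβmin1 : βmin ≤ 1 := le_trans hβminmax hβmax1
  -- the skip event
  set A := {ω | ∀ s : S, voteCount Y s ω < k} with hA
  have hAm : MeasurableSet A := by
    have : A = ⋂ s : S, (fun ω => voteCount Y s ω) ⁻¹' (Set.Iio k) := by
      ext ω; simp [hA]
    rw [this]
    exact MeasurableSet.iInter fun s =>
      (ensolver_measurable_voteCount Y hYm s) measurableSet_Iio
  -- decomposition
  have hsplit : (μ A).toReal = α * (ν1 A).toReal + (1 - α) * (ν2 A).toReal := by
    have h1 : μ Xin * ν1 A = μ (Xin ∩ A) := by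
      rw [hν1, cond_apply hXinM, ← mul_assoc,
        ENNReal.mul_inv_cancel hXin_ne0 (measure_ne_top μ Xin), one_mul]
    have h2 : μ Xinᶜ * ν2 A = μ (Xinᶜ ∩ A) := by
      rw [hν2, cond_apply hXinM.compl, ← mul_assoc,
        ENNReal.mul_inv_cancel hXinc_ne0 (measure_ne_top μ Xinᶜ), one_mul]
    have hAdec : μ A = μ Xin * ν1 A + μ Xinᶜ * ν2 A := by
      rw [h1, h2, Set.inter_comm Xin A, Set.inter_comm Xinᶜ A, ← Set.diff_eq]
      exact (measure_inter_add_diff A hXinM).symm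
    rw [hAdec, ENNReal.toReal_add, ENNReal.toReal_mul, ENNReal.toReal_mul,
      hμXin, hXinc, ENNReal.toReal_ofReal hα0, ENNReal.toReal_ofReal (by linarith)]
    · exact ENNReal.mul_ne_top (measure_ne_top μ Xin) (measure_ne_top ν1 A)
    · exact ENNReal.mul_ne_top (measure_ne_top μ Xinᶜ) (measure_ne_top ν2 A)
  -- out-of-distribution part
  have hout' : ∀ (i : Fin M) (s : S), ν2 (Y i ⁻¹' {s}) = (N : ℝ≥0∞)⁻¹ := fun i s => by
    rw [← ensolver_pre_eq]; exact hout i s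
  have hν2Ac : ν2 Aᶜ ≤ (N : ℝ≥0∞) * ((M.choose k : ℝ≥0∞) * ((N : ℝ≥0∞)⁻¹) ^ k) := by
    have hsub : Aᶜ ⊆ ⋃ s ∈ (Finset.univ : Finset S), {ω | k ≤ voteCount Y s ω} := by
      intro ω hω
      simp only [hA, Set.mem_compl_iff, Set.mem_setOf_eq, not_forall, not_lt] at hω
      obtain ⟨s, hs⟩ := hω
      exact Set.mem_biUnion (Finset.mem_univ s) hs
    calc ν2 Aᶜ ≤ ∑ s : S, ν2 {ω | k ≤ voteCount Y s ω} :=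
          le_trans (measure_mono hsub) (measure_biUnion_finset_le _ _)
      _ ≤ ∑ _s : S, (M.choose k : ℝ≥0∞) * ((N : ℝ≥0∞)⁻¹) ^ k :=
          Finset.sum_le_sum fun s _ =>
            ensolver_vote_upper ν2 Y hindout k s _ (fun i => le_of_eq (hout' i s))
      _ = _ := by rw [Finset.sum_const, Finset.card_univ, hcard, nsmul_eq_mul]
  have hpowk : (N:ℝ) ^ k = (N:ℝ) ^ (k-1) * N := by
    rw [← pow_succ]; congr 1; omega
  have hPpos : (0:ℝ) < (N:ℝ) ^ (k-1) := by positivity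
  have hchk : (M.choose k : ℝ) ≤ (M.choose (M/2) : ℝ) := by
    exact_mod_cast Nat.choose_le_middle k M
  have hC1 : (1:ℝ) ≤ (M.choose (M/2) : ℝ) := by
    exact_mod_cast Nat.succ_le_of_lt (Nat.choose_pos (Nat.div_le_self M 2))
  have hν2A : (ν2 A).toReal > 1 - ((N:ℝ)/((N:ℝ)-1)) * ((M.choose (M/2) : ℝ) / (N:ℝ)^(k-1)) := by
    have h1 : ν2 A = 1 - ν2 Aᶜ := by
      rw [← prob_compl_eq_one_sub hAm.compl, compl_compl]
    have h2 : (ν2 Aᶜ).toReal ≤ (N:ℝ) * ((M.choose k : ℝ) * ((N:ℝ)⁻¹) ^ k) := by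
      have hfin : (N : ℝ≥0∞) * ((M.choose k : ℝ≥0∞) * ((N : ℝ≥0∞)⁻¹) ^ k) ≠ ∞ := by
        refine ENNReal.mul_ne_top (ENNReal.natCast_ne_top N) (ENNReal.mul_ne_top
          (ENNReal.natCast_ne_top _) (ENNReal.pow_ne_top ?_))
        simp [ENNReal.inv_ne_top]
        positivity
      have := ENNReal.toReal_mono hfin hν2Ac
      simpa [ENNReal.toReal_mul, ENNReal.toReal_pow, ENNReal.toReal_inv] using this
    have hLHS : (N:ℝ) * ((M.choose k : ℝ) * ((N:ℝ)⁻¹) ^ k)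
        = (M.choose k : ℝ) / (N:ℝ)^(k-1) := by
      rw [inv_pow, hpowk]; field_simp
    have hkey : (M.choose k : ℝ) / (N:ℝ)^(k-1)
        < ((N:ℝ)/((N:ℝ)-1)) * ((M.choose (M/2) : ℝ) / (N:ℝ)^(k-1)) := by
      rw [div_mul_div_comm, div_lt_div_iff₀ hPpos (by positivity)]
      nlinarith [mul_le_mul_of_nonneg_right hchk hPpos.le,
        mul_pos (lt_of_lt_of_le zero_lt_one hC1) hPpos, hN1R]
    rw [h1, ENNReal.toReal_sub_of_le prob_le_one ENNReal.one_ne_top, ENNReal.toReal_one]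
    rw [hLHS] at h2
    linarith
  -- in-distribution part
  have h1βmax : (0:ℝ) ≤ 1 - βmax := by linarith
  set Cev := {ω | voteCount Y sx ω < k} with hCev
  set D := ⋃ s ∈ Finset.univ.erase sx, {ω | k ≤ voteCount Y s ω} with hD
  have hin_sx' : ∀ i, ν1 (Y i ⁻¹' {sx}) = ENNReal.ofReal (β i) := fun i => by
    rw [← ensolver_pre_eq]; exact hin_sx i
  -- upper bound on wrong-string high-vote events
  have hν1D : ν1 D ≤ ((N - 1 : ℕ) : ℝ≥0∞)
      * ((M.choose k : ℝ≥0∞) * (ENNReal.ofReal ((1 - βmin)/((N:ℝ)-1))) ^ k) := by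
    calc ν1 D ≤ ∑ s ∈ Finset.univ.erase sx, ν1 {ω | k ≤ voteCount Y s ω} :=
          measure_biUnion_finset_le _ _
      _ ≤ ∑ _s ∈ Finset.univ.erase sx,
            (M.choose k : ℝ≥0∞) * (ENNReal.ofReal ((1 - βmin)/((N:ℝ)-1))) ^ k := by
          refine Finset.sum_le_sum fun s hs => ?_
          refine ensolver_vote_upper ν1 Y hindin k s _ (fun i => ?_)
          rw [← ensolver_pre_eq, hin_other i s (Finset.ne_of_mem_erase hs)]
          apply ENNReal.ofReal_le_ofReal
          have : 1 - β i ≤ 1 - βmin := by linarith [hminle i]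
          exact div_le_div_of_nonneg_right this hN1pos.le
      _ = _ := by
          rw [Finset.sum_const, Finset.card_erase_of_mem (Finset.mem_univ sx),
            Finset.card_univ, hcard, nsmul_eq_mul]
  have hq0 : (0:ℝ) ≤ (1 - βmin)/((N:ℝ)-1) := div_nonneg (by linarith) hN1pos.le
  have hν1D_real : (ν1 D).toReal ≤ (M.choose (M/2) : ℝ) / (N:ℝ)^(k-1) := by
    have hfin : ((N - 1 : ℕ) : ℝ≥0∞)
        * ((M.choose k : ℝ≥0∞) * (ENNReal.ofReal ((1 - βmin)/((N:ℝ)-1))) ^ k) ≠ ∞ :=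
      ENNReal.mul_ne_top (ENNReal.natCast_ne_top _) (ENNReal.mul_ne_top
        (ENNReal.natCast_ne_top _) (ENNReal.pow_ne_top ENNReal.ofReal_ne_top))
    have h := ENNReal.toReal_mono hfin hν1D
    rw [ENNReal.toReal_mul, ENNReal.toReal_mul, ENNReal.toReal_pow,
      ENNReal.toReal_natCast, ENNReal.toReal_natCast, ENNReal.toReal_ofReal hq0] at h
    have hcast : ((N - 1 : ℕ) : ℝ) = (N:ℝ) - 1 := by
      have h1 : (1:ℕ) ≤ N := by omega
      push_cast [Nat.cast_sub h1]
      ring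
    rw [hcast] at h
    have hqle : (1 - βmin)/((N:ℝ)-1) ≤ 1/(N:ℝ) := by
      rw [div_le_div_iff₀ hN1pos hN0]
      have h1 : 1 < βmin * N := (div_lt_iff₀ hN0).1 hA1
      nlinarith
    have hqk : ((1 - βmin)/((N:ℝ)-1))^k ≤ (1/(N:ℝ))^k := pow_le_pow_left₀ hq0 hqle k
    have hstep : ((N:ℝ)-1) * ((M.choose k:ℝ) * ((1-βmin)/((N:ℝ)-1))^k)
        ≤ (N:ℝ) * ((M.choose (M/2):ℝ) * (1/(N:ℝ))^k) := by
      apply mul_le_mul (by linarith) ?_ (by positivity) (by positivity)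
      exact mul_le_mul hchk hqk (by positivity) (by positivity)
    have heq : (N:ℝ) * ((M.choose (M/2):ℝ) * (1/(N:ℝ))^k)
        = (M.choose (M/2):ℝ)/(N:ℝ)^(k-1) := by
      rw [div_pow, one_pow, hpowk]
      field_simp
    linarith
  -- exact-pattern events
  set Bset : Finset (Fin M) → Fin M → Set S :=
    fun T i => if i ∈ T then {sx} else {sx}ᶜ with hBset
  set Ev : Finset (Fin M) → Set Ω := fun T => ⋂ i, Y i ⁻¹' (Bset T i) with hEv
  have hBm : ∀ T i, MeasurableSet (Bset T i) := by
    intro T i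
    simp only [hBset]
    split
    · exact measurableSet_singleton sx
    · exact (measurableSet_singleton sx).compl
  have hEvm : ∀ T, MeasurableSet (Ev T) := fun T =>
    MeasurableSet.iInter fun i => (hYm i) (hBm T i)
  have hEvdisj : ∀ T T', T ≠ T' → Disjoint (Ev T) (Ev T') := by
    intro T T' hne
    rw [Set.disjoint_left]
    intro ω h1 h2
    have hex : ∃ i, (i ∈ T ∧ i ∉ T') ∨ (i ∉ T ∧ i ∈ T') := by
      by_contra hc
      push_neg at hc
      exact hne (Finset.ext fun i => by have := hc i; tauto)
    obtain ⟨i, hi⟩ := hex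
    have m1 : Y i ω ∈ Bset T i := Set.mem_iInter.1 h1 i
    have m2 : Y i ω ∈ Bset T' i := Set.mem_iInter.1 h2 i
    rcases hi with ⟨hiT, hiT'⟩ | ⟨hiT, hiT'⟩
    · simp only [hBset, if_pos hiT] at m1
      simp only [hBset, if_neg hiT'] at m2
      exact m2 m1
    · simp only [hBset, if_neg hiT] at m1
      simp only [hBset, if_pos hiT'] at m2
      exact m1 m2
  have hEvsub : ∀ T : Finset (Fin M), T.card < k → Ev T ⊆ Cev := by
    intro T hT ω hω
    have hfilter : (Finset.univ.filter fun i => Y i ω = sx) = T := by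
      ext i
      simp only [Finset.mem_filter, Finset.mem_univ, true_and]
      have m : Y i ω ∈ Bset T i := Set.mem_iInter.1 hω i
      by_cases hi : i ∈ T
      · simp only [hBset, if_pos hi, Set.mem_singleton_iff] at m
        exact ⟨fun _ => hi, fun _ => m⟩
      · simp only [hBset, if_neg hi, Set.mem_compl_iff, Set.mem_singleton_iff] at m
        exact ⟨fun h => absurd h m, fun h => absurd h hi⟩
    show voteCount Y sx ω < k
    rw [voteCount, hfilter]
    exact hT
  have hEvlow : ∀ T : Finset (Fin M),
      ENNReal.ofReal (βmin ^ T.card * (1 - βmax) ^ (M - T.card)) ≤ ν1 (Ev T) := by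
    intro T
    have hmeas : ν1 (Ev T) = ∏ i, ν1 (Y i ⁻¹' (Bset T i)) :=
      hindin.meas_iInter (fun i => ⟨Bset T i, hBm T i, rfl⟩)
    have hfac : ∀ i, ν1 (Y i ⁻¹' (Bset T i))
        = ENNReal.ofReal (if i ∈ T then β i else 1 - β i) := by
      intro i
      by_cases hi : i ∈ T
      · simp only [hBset, if_pos hi]
        exact hin_sx' i
      · simp only [hBset, if_neg hi]
        rw [Set.preimage_compl, prob_compl_eq_one_sub ((hYm i) (measurableSet_singleton sx)),
          hin_sx' i, ← ENNReal.ofReal_one, ← ENNReal.ofReal_sub _ (hβpos i).le]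
    rw [hmeas]
    have hprodeq : ∏ i, ν1 (Y i ⁻¹' (Bset T i))
        = ENNReal.ofReal (∏ i, (if i ∈ T then β i else 1 - β i)) := by
      rw [ENNReal.ofReal_prod_of_nonneg (fun i _ => by
        split
        · exact (hβpos i).le
        · linarith [hβ1 i])]
      exact Finset.prod_congr rfl fun i _ => hfac i
    rw [hprodeq]
    apply ENNReal.ofReal_le_ofReal
    have hsplitprod : (∏ i, (if i ∈ T then β i else 1 - β i))
        = (∏ i ∈ T, β i) * ∏ i ∈ Finset.univ \ T, (1 - β i) := by
      have e1 : Finset.univ.filter (fun i : Fin M => i ∈ T) = T := by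
        ext i; simp
      have e2 : Finset.univ.filter (fun i : Fin M => ¬ i ∈ T) = Finset.univ \ T := by
        ext i; simp
      rw [Finset.prod_ite, e1, e2]
    rw [hsplitprod]
    have h1 : βmin ^ T.card ≤ ∏ i ∈ T, β i := by
      rw [← Finset.prod_const]
      exact Finset.prod_le_prod (fun _ _ => hβmin_pos.le) (fun i _ => hminle i)
    have h2 : (1 - βmax) ^ (M - T.card) ≤ ∏ i ∈ Finset.univ \ T, (1 - β i) := by
      have hcardsd : (Finset.univ \ T).card = M - T.card := by
        rw [Finset.card_sdiff_of_subset (Finset.subset_univ T), Finset.card_univ, Fintype.card_fin]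
      rw [← hcardsd, ← Finset.prod_const]
      exact Finset.prod_le_prod (fun _ _ => h1βmax) (fun i _ => by linarith [hmaxle i])
    have hp1 : (0:ℝ) ≤ βmin ^ T.card := by positivity
    have hp2 : (0:ℝ) ≤ ∏ i ∈ T, β i := Finset.prod_nonneg fun i _ => (hβpos i).le
    nlinarith [pow_nonneg h1βmax (M - T.card)]
  -- summing over all small patterns
  set 𝒯 := (Finset.range k).biUnion
    (fun j => Finset.powersetCard j (Finset.univ : Finset (Fin M))) with h𝒯
  have hTcard : ∀ T ∈ 𝒯, T.card < k := by
    intro T hT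
    simp only [h𝒯, Finset.mem_biUnion, Finset.mem_range, Finset.mem_powersetCard] at hT
    obtain ⟨j, hj, -, hcardT⟩ := hT
    omega
  have h𝒯disj : Set.PairwiseDisjoint ↑(Finset.range k)
      (fun j => Finset.powersetCard j (Finset.univ : Finset (Fin M))) := by
    intro a _ b _ hab
    exact Finset.disjoint_left.2 fun T hTa hTb => hab
      ((Finset.mem_powersetCard.1 hTa).2.symm.trans (Finset.mem_powersetCard.1 hTb).2)
  have hν1Cev : (∑ j ∈ Finset.range k,
      (M.choose j : ℝ≥0∞) * ENNReal.ofReal (βmin ^ j * (1 - βmax) ^ (M - j))) ≤ ν1 Cev := by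
    calc (∑ j ∈ Finset.range k,
        (M.choose j : ℝ≥0∞) * ENNReal.ofReal (βmin ^ j * (1 - βmax) ^ (M - j)))
        = ∑ j ∈ Finset.range k, ∑ T ∈ Finset.powersetCard j (Finset.univ : Finset (Fin M)),
            ENNReal.ofReal (βmin ^ T.card * (1 - βmax) ^ (M - T.card)) := by
          refine Finset.sum_congr rfl fun j hj => ?_
          have hcongr : ∀ T ∈ Finset.powersetCard j (Finset.univ : Finset (Fin M)),
              ENNReal.ofReal (βmin ^ T.card * (1 - βmax) ^ (M - T.card))
              = ENNReal.ofReal (βmin ^ j * (1 - βmax) ^ (M - j)) := fun T hT => by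
            rw [(Finset.mem_powersetCard.1 hT).2]
          rw [Finset.sum_congr rfl hcongr, Finset.sum_const, Finset.card_powersetCard,
            Finset.card_univ, Fintype.card_fin, nsmul_eq_mul]
      _ = ∑ T ∈ 𝒯, ENNReal.ofReal (βmin ^ T.card * (1 - βmax) ^ (M - T.card)) :=
          (Finset.sum_biUnion h𝒯disj).symm
      _ ≤ ∑ T ∈ 𝒯, ν1 (Ev T) := Finset.sum_le_sum fun T _ => hEvlow T
      _ = ν1 (⋃ T ∈ 𝒯, Ev T) :=
          (measure_biUnion_finset (fun T _ T' _ hne => hEvdisj T T' hne)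
            (fun T _ => hEvm T)).symm
      _ ≤ ν1 Cev := measure_mono (Set.iUnion₂_subset fun T hT => hEvsub T (hTcard T hT))
  have hν1Cev_real : (∑ i ∈ Finset.range k,
      (M.choose i : ℝ) * βmin ^ i * (1 - βmax) ^ (M - i)) ≤ (ν1 Cev).toReal := by
    refine le_trans (le_of_eq ?_) (ENNReal.toReal_mono (measure_ne_top ν1 Cev) hν1Cev)
    rw [ENNReal.toReal_sum (fun j _ => ENNReal.mul_ne_top (ENNReal.natCast_ne_top _)
      ENNReal.ofReal_ne_top)]
    refine Finset.sum_congr rfl fun j hj => ?_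
    rw [ENNReal.toReal_mul, ENNReal.toReal_natCast, ENNReal.toReal_ofReal
      (mul_nonneg (pow_nonneg hβmin_pos.le _) (pow_nonneg h1βmax _)), mul_assoc]
  -- combine in-distribution
  have hν1A : (ν1 A).toReal ≥ (∑ i ∈ Finset.range k,
      (M.choose i : ℝ) * βmin ^ i * (1 - βmax) ^ (M - i))
      - (M.choose (M/2) : ℝ) / (N:ℝ)^(k-1) := by
    have hADsub : Cev \ D ⊆ A := by
      rintro ω ⟨h1, h2⟩
      intro s
      by_cases hs : s = sx
      · rw [hs]; exact h1
      · by_contra hlt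
        push_neg at hlt
        exact h2 (Set.mem_biUnion (Finset.mem_erase.2 ⟨hs, Finset.mem_univ s⟩) hlt)
    have hchain : ν1 Cev ≤ ν1 A + ν1 D := by
      calc ν1 Cev ≤ ν1 ((Cev \ D) ∪ D) := measure_mono (fun ω h => by
            by_cases hω : ω ∈ D
            · exact Or.inr hω
            · exact Or.inl ⟨h, hω⟩)
        _ ≤ ν1 (Cev \ D) + ν1 D := measure_union_le _ _
        _ ≤ ν1 A + ν1 D := add_le_add_left (measure_mono hADsub) _
    have hfin : ν1 A + ν1 D ≠ ∞ :=
      ENNReal.add_ne_top.2 ⟨measure_ne_top _ _, measure_ne_top _ _⟩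
    have h := ENNReal.toReal_mono hfin hchain
    rw [ENNReal.toReal_add (measure_ne_top _ _) (measure_ne_top _ _)] at h
    linarith
  -- final assembly
  rw [hsplit]
  have h1α : (0:ℝ) < 1 - α := by linarith
  have hfin1 : α * (ν1 A).toReal ≥ α * ((∑ i ∈ Finset.range k,
      (M.choose i : ℝ) * βmin ^ i * (1 - βmax) ^ (M - i))
      - (M.choose (M/2) : ℝ) / (N:ℝ)^(k-1)) := mul_le_mul_of_nonneg_left hν1A hα0
  have hfin2 : (1 - α) * (ν2 A).toReal > (1 - α)
      * (1 - ((N:ℝ)/((N:ℝ)-1)) * ((M.choose (M/2) : ℝ) / (N:ℝ)^(k-1))) :=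
    (mul_lt_mul_iff_right₀ h1α).2 hν2A
  have hRHSeq : α * ((∑ i ∈ Finset.range k,
      (M.choose i : ℝ) * βmin ^ i * (1 - βmax) ^ (M - i))
      - (M.choose (M/2) : ℝ) / (N:ℝ)^(k-1))
      + (1 - α) * (1 - ((N:ℝ)/((N:ℝ)-1)) * ((M.choose (M/2) : ℝ) / (N:ℝ)^(k-1)))
      = α * (∑ i ∈ Finset.range k, (M.choose i : ℝ) * βmin ^ i * (1 - βmax) ^ (M - i))
        + (1 - α) - (((N : ℝ) - α) / ((N : ℝ) - 1))
          * ((M.choose (M / 2) : ℝ) / (N : ℝ) ^ (k - 1)) := by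
    field_simp
    ring
  linarith
end

section
/- Success rate formula: If x_1, x_2, … are i.i.d. inputs and the EnSolver m on each independent input predicts correctly with probability c = P(m(x) = s_x) and skips with probability ρ = P(m(x) = s_skip) < 1, then the success rate of the limited-skip solver LEnSolver with maximum T skips equals R_s(m^T) = c·∑_{t=0}^{T} ρ^t = c·(1 − ρ^{T+1})/(1 − ρ). -/
open MeasureTheory ProbabilityTheory Finset

/-- Success rate formula: if the outcomes `Z_1, …, Z_{T+1}` of the EnSolver on i.i.d.
inputs are independent, with correct-prediction probability `c` and skip probability `ρ < 1`
on each input, then the success rate of the `T`-skip LEnSolver (the probability that, going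
through the inputs in order, all inputs before some `t` are skipped and input `t` is
answered correctly) equals `c ∑_{t=0}^{T} ρ^t = c (1 - ρ^{T+1})/(1 - ρ)`. -/
theorem success_rate_formula {Ω O : Type*} [MeasurableSpace Ω] [MeasurableSpace O]
    [MeasurableSingletonClass O]
    (μ : Measure Ω) [IsProbabilityMeasure μ]
    (T : ℕ) (Z : Fin (T + 1) → Ω → O) (hZm : ∀ t, Measurable (Z t))
    (hind : iIndepFun Z μ)
    (ok skip : O) (hne : ok ≠ skip)
    (c ρ : ℝ)
    (hc : ∀ t, (μ {ω | Z t ω = ok}).toReal = c)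
    (hρ : ∀ t, (μ {ω | Z t ω = skip}).toReal = ρ)
    (hρ1 : ρ < 1) :
    (μ (⋃ t : Fin (T + 1), {ω | (∀ i < t, Z i ω = skip) ∧ Z t ω = ok})).toReal
        = c * ∑ t ∈ Finset.range (T + 1), ρ ^ t
      ∧ c * ∑ t ∈ Finset.range (T + 1), ρ ^ t = c * (1 - ρ ^ (T + 1)) / (1 - ρ) := by
  classical
  constructor
  · set A : Fin (T + 1) → Set Ω := fun t => {ω | (∀ i < t, Z i ω = skip) ∧ Z t ω = ok} with hA
    -- rewrite each A t as a finite intersection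
    set g : Fin (T + 1) → Fin (T + 1) → Set Ω :=
      fun t i => Z i ⁻¹' (if i < t then {skip} else {ok}) with hg
    have hAeq : ∀ t, A t = ⋂ i ∈ Finset.Iic t, g t i := by
      intro t
      ext ω
      simp only [hA, hg, Set.mem_setOf_eq, Set.mem_iInter, Finset.mem_Iic, Set.mem_preimage]
      constructor
      · rintro ⟨h1, h2⟩ i hi
        by_cases hlt : i < t
        · simp [hlt, h1 i hlt]
        · have : i = t := le_antisymm hi (not_lt.mp hlt)
          simp [hlt, this, h2]
      · intro h
        refine ⟨fun i hi => ?_, ?_⟩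
        · have := h i hi.le
          simpa [hi] using this
        · have := h t le_rfl
          simpa using this
    have hAmeas : ∀ t, MeasurableSet (A t) := by
      intro t
      rw [hAeq t]
      exact Finset.measurableSet_biInter _ fun i _ =>
        (hZm i) (by measurability)
    have hmeasA : ∀ t : Fin (T + 1), (μ (A t)).toReal = c * ρ ^ (t : ℕ) := by
      intro t
      rw [hAeq t]
      rw [hind.meas_biInter (fun i _ => ?_)]
      · have : ∀ i ∈ Finset.Iic t, μ (g t i) ≠ ⊤ := fun i _ => measure_ne_top μ _
        rw [ENNReal.toReal_prod]
        have hsplit : Finset.Iic t = insert t (Finset.Iio t) := (Finset.Iio_insert t).symm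
        rw [hsplit, Finset.prod_insert (by simp)]
        have h1 : (μ (g t t)).toReal = c := by
          have : g t t = {ω | Z t ω = ok} := by simp [hg]; rfl
          rw [this, hc]
        have h2 : ∀ i ∈ Finset.Iio t, (μ (g t i)).toReal = ρ := by
          intro i hi
          have hi' : i < t := Finset.mem_Iio.mp hi
          have : g t i = {ω | Z i ω = skip} := by simp [hg, hi']; rfl
          rw [this, hρ]
        rw [h1, Finset.prod_congr rfl h2, Finset.prod_const, Fin.card_Iio]
      · refine ⟨(if i < t then {skip} else {ok}), ?_, rfl⟩
        split_ifs <;> exact measurableSet_singleton _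
    have key : ∀ s t : Fin (T + 1), s < t → Disjoint (A s) (A t) := by
      intro s t hlt
      refine Set.disjoint_left.mpr fun ω hs ht => ?_
      exact hne (hs.2 ▸ (ht.1 s hlt) ▸ rfl)
    have hdisj : Pairwise (Function.onFun Disjoint A) := by
      intro s t hst
      rcases hst.lt_or_gt with h | h
      · exact key s t h
      · exact (key t s h).symm
    rw [measure_iUnion hdisj hAmeas, tsum_fintype,
      ENNReal.toReal_sum (fun t _ => measure_ne_top μ _)]
    rw [Finset.sum_congr rfl fun t _ => hmeasA t]
    rw [Fin.sum_univ_eq_sum_range (fun t => c * ρ ^ t), ← Finset.mul_sum]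
  · rw [geom_sum_eq (ne_of_lt hρ1), ← neg_sub 1 (ρ ^ (T + 1)), ← neg_sub 1 ρ,
      neg_div_neg_eq, mul_div_assoc]
end

section
/- Success rate lower bound (Theorem 9): Under assumptions (A1)–(A3) and with k = M(1−τ)+1, define γ = α·∑_{i=k}^{M} C(M,i) β_min^i (1−β_max)^{M−i} − α·E(M,N,τ) and ρ = α·∑_{i=0}^{k−1} C(M,i) β_min^i (1−β_max)^{M−i} + (1−α) − ((N−α)/(N−1))·E(M,N,τ). If 0 ≤ ρ < 1, then the success rate of the LEnSolver with maximum number of skips T satisfies R_s(m^T) > γ·(1 − ρ^{T+1})/(1 − ρ). -/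
open MeasureTheory ProbabilityTheory Finset

section Aux

variable {Ω S : Type*} [MeasurableSpace Ω] [MeasurableSpace S]
    [MeasurableSingletonClass S] [DecidableEq S] {M : ℕ}
    (ν : Measure Ω) [IsProbabilityMeasure ν]
    (Y : Fin M → Ω → S)

/-- Decomposition of the vote-count event into exact vote patterns. -/
lemma voteCount_prob_eq (hYm : ∀ i, Measurable (Y i))
    (hind : iIndepFun Y ν) (s : S) (C : Finset ℕ) :
    (ν {ω | voteCount Y s ω ∈ C}).toReal
      = ∑ j ∈ C, ∑ I ∈ Finset.powersetCard j (univ : Finset (Fin M)),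
          ((∏ i ∈ I, (ν {ω | Y i ω = s}).toReal)
            * ∏ i ∈ Iᶜ, (1 - (ν {ω | Y i ω = s}).toReal)) := by
  classical
  set T : Finset (Fin M) → Fin M → Set S := fun I i => if i ∈ I then {s} else {s}ᶜ with hT
  set E : Finset (Fin M) → Set Ω := fun I => ⋂ i, Y i ⁻¹' T I i with hE
  have hTmeas : ∀ I i, MeasurableSet (T I i) := by
    intro I i; by_cases h : i ∈ I <;> simp [hT, h, (MeasurableSet.singleton s).compl]
  have hEmeas : ∀ I, MeasurableSet (E I) := fun I =>
    MeasurableSet.iInter fun i => (hYm i) (hTmeas I i)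
  have hEmem : ∀ I ω, ω ∈ E I ↔ ∀ i, Y i ω = s ↔ i ∈ I := by
    intro I ω
    simp only [hE, Set.mem_iInter, Set.mem_preimage, hT]
    constructor
    · intro h i
      constructor
      · intro he
        by_contra hi
        have := h i; simp only [hi, if_false] at this
        exact this he
      · intro hi
        have := h i; simpa only [hi, if_true, Set.mem_singleton_iff] using this
    · intro h i
      by_cases hi : i ∈ I
      · simp only [hi, if_true, Set.mem_singleton_iff]; exact (h i).2 hi
      · simp only [hi, if_false, Set.mem_compl_iff, Set.mem_singleton_iff]
        intro he; exact hi ((h i).1 he)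
  have hEval : ∀ I, ν (E I) = ∏ i, ν (Y i ⁻¹' T I i) := by
    intro I
    exact hind.meas_iInter (fun i => ⟨T I i, hTmeas I i, rfl⟩)
  -- event equality
  have hev : {ω | voteCount Y s ω ∈ C}
      = ⋃ I ∈ C.biUnion (fun j => Finset.powersetCard j (univ : Finset (Fin M))), E I := by
    ext ω
    simp only [Set.mem_setOf_eq, Set.mem_iUnion, Finset.mem_biUnion, Finset.mem_powersetCard]
    constructor
    · intro h
      refine ⟨univ.filter (fun i => Y i ω = s), ⟨voteCount Y s ω, h, ?_, rfl⟩, ?_⟩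
      · exact Finset.filter_subset _ _
      · rw [hEmem]; intro i; simp
    · rintro ⟨I, ⟨j, hj, hsub, hcard⟩, hmem⟩
      rw [hEmem] at hmem
      have : univ.filter (fun i => Y i ω = s) = I := by
        ext i; simp [hmem i]
      rw [voteCount, this, hcard]; exact hj
  have hpre : ∀ i, Y i ⁻¹' ({s} : Set S) = {ω | Y i ω = s} := fun i => rfl
  have hdisj : ∀ I, I ∈ C.biUnion (fun j => Finset.powersetCard j (univ : Finset (Fin M))) →
      ∀ J, J ∈ C.biUnion (fun j => Finset.powersetCard j (univ : Finset (Fin M))) →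
      I ≠ J → Disjoint (E I) (E J) := by
    intro I _ J _ hIJ
    rw [Set.disjoint_left]
    intro ω hI hJ
    rw [hEmem] at hI hJ
    apply hIJ
    ext i
    rw [← hI i, hJ i]
  have hmeas : ν {ω | voteCount Y s ω ∈ C}
      = ∑ I ∈ C.biUnion (fun j => Finset.powersetCard j (univ : Finset (Fin M))), ν (E I) := by
    rw [hev]
    exact measure_biUnion_finset hdisj (fun I _ => hEmeas I)
  rw [hmeas, ENNReal.toReal_sum (fun I _ => measure_ne_top ν _)]
  rw [Finset.sum_biUnion]
  · apply Finset.sum_congr rfl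
    intro j hj
    apply Finset.sum_congr rfl
    intro I hI
    rw [hEval]
    rw [ENNReal.toReal_prod]
    rw [← Finset.prod_mul_prod_compl I]
    congr 1
    · apply Finset.prod_congr rfl
      intro i hi
      simp only [hT, hi, if_true, hpre]
    · apply Finset.prod_congr rfl
      intro i hi
      rw [Finset.mem_compl] at hi
      simp only [hT, hi, if_false]
      have hc : (Y i ⁻¹' ({s} : Set S))ᶜ = Y i ⁻¹' ({s}ᶜ : Set S) := by
        rw [Set.preimage_compl]
      rw [← hc, measure_compl ((hYm i) (MeasurableSet.singleton s)) (measure_ne_top ν _),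
        measure_univ, ENNReal.toReal_sub_of_le (prob_le_one) (by simp), ENNReal.toReal_one, hpre]
  · intro j hj j' hj' hjj'
    simp only [Function.onFun]
    rw [Finset.disjoint_left]
    intro I hI hI'
    rw [Finset.mem_powersetCard] at hI hI'
    exact hjj' (hI.2 ▸ hI'.2 ▸ rfl)


lemma prob_toReal_le_one {A : Set Ω} : (ν A).toReal ≤ 1 := by
  have h := prob_le_one (μ := ν) (s := A)
  simpa using ENNReal.toReal_mono ENNReal.one_ne_top h

/-- Upper bound on vote-count probabilities. -/
lemma voteCount_prob_le (hYm : ∀ i, Measurable (Y i))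
    (hind : iIndepFun Y ν) (s : S) (C : Finset ℕ)
    (q : ℝ) (hq : ∀ i, (ν {ω | Y i ω = s}).toReal ≤ q) :
    (ν {ω | voteCount Y s ω ∈ C}).toReal ≤ ∑ j ∈ C, (M.choose j : ℝ) * q ^ j := by
  rw [voteCount_prob_eq ν Y hYm hind s C]
  apply Finset.sum_le_sum
  intro j hj
  have hcount : ((Finset.powersetCard j (univ : Finset (Fin M))).card : ℝ) = (M.choose j : ℝ) := by
    rw [Finset.card_powersetCard, Finset.card_univ, Fintype.card_fin]
  calc ∑ I ∈ Finset.powersetCard j (univ : Finset (Fin M)),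
        ((∏ i ∈ I, (ν {ω | Y i ω = s}).toReal)
          * ∏ i ∈ Iᶜ, (1 - (ν {ω | Y i ω = s}).toReal))
      ≤ ∑ I ∈ Finset.powersetCard j (univ : Finset (Fin M)), q ^ j := by
        apply Finset.sum_le_sum
        intro I hI
        rw [Finset.mem_powersetCard] at hI
        have h1 : (∏ i ∈ I, (ν {ω | Y i ω = s}).toReal) ≤ q ^ j := by
          rw [← hI.2]
          rw [← Finset.prod_const]
          exact Finset.prod_le_prod (fun i _ => ENNReal.toReal_nonneg) (fun i _ => hq i)
        have h2 : (∏ i ∈ Iᶜ, (1 - (ν {ω | Y i ω = s}).toReal)) ≤ 1 := by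
          apply Finset.prod_le_one
          · intro i _; linarith [prob_toReal_le_one ν (A := {ω | Y i ω = s})]
          · intro i _; linarith [ENNReal.toReal_nonneg (a := ν {ω | Y i ω = s})]
        have h3 : 0 ≤ ∏ i ∈ Iᶜ, (1 - (ν {ω | Y i ω = s}).toReal) :=
          Finset.prod_nonneg fun i _ => by
            linarith [prob_toReal_le_one ν (A := {ω | Y i ω = s})]
        calc (∏ i ∈ I, (ν {ω | Y i ω = s}).toReal)
              * ∏ i ∈ Iᶜ, (1 - (ν {ω | Y i ω = s}).toReal)
            ≤ (∏ i ∈ I, (ν {ω | Y i ω = s}).toReal) * 1 := by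
              apply mul_le_mul_of_nonneg_left h2
              exact Finset.prod_nonneg fun i _ => ENNReal.toReal_nonneg
          _ = ∏ i ∈ I, (ν {ω | Y i ω = s}).toReal := mul_one _
          _ ≤ q ^ j := h1
    _ = (M.choose j : ℝ) * q ^ j := by rw [Finset.sum_const, nsmul_eq_mul, hcount]

/-- Lower bound on vote-count probabilities. -/
lemma voteCount_prob_ge (hYm : ∀ i, Measurable (Y i))
    (hind : iIndepFun Y ν) (s : S) (C : Finset ℕ)
    (a b : ℝ) (ha0 : 0 ≤ a) (hb0 : 0 ≤ b)
    (ha : ∀ i, a ≤ (ν {ω | Y i ω = s}).toReal)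
    (hb : ∀ i, (ν {ω | Y i ω = s}).toReal ≤ 1 - b) :
    ∑ j ∈ C, (M.choose j : ℝ) * a ^ j * b ^ (M - j)
      ≤ (ν {ω | voteCount Y s ω ∈ C}).toReal := by
  rw [voteCount_prob_eq ν Y hYm hind s C]
  apply Finset.sum_le_sum
  intro j hj
  have hcount : ((Finset.powersetCard j (univ : Finset (Fin M))).card : ℝ) = (M.choose j : ℝ) := by
    rw [Finset.card_powersetCard, Finset.card_univ, Fintype.card_fin]
  calc (M.choose j : ℝ) * a ^ j * b ^ (M - j)
      = ∑ I ∈ Finset.powersetCard j (univ : Finset (Fin M)), a ^ j * b ^ (M - j) := by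
        rw [Finset.sum_const, nsmul_eq_mul, hcount, mul_assoc]
    _ ≤ ∑ I ∈ Finset.powersetCard j (univ : Finset (Fin M)),
        ((∏ i ∈ I, (ν {ω | Y i ω = s}).toReal)
          * ∏ i ∈ Iᶜ, (1 - (ν {ω | Y i ω = s}).toReal)) := by
        apply Finset.sum_le_sum
        intro I hI
        rw [Finset.mem_powersetCard] at hI
        have hcardc : Iᶜ.card = M - j := by
          rw [Finset.card_compl, Fintype.card_fin, hI.2]
        have h1 : a ^ j ≤ ∏ i ∈ I, (ν {ω | Y i ω = s}).toReal := by
          rw [← hI.2, ← Finset.prod_const]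
          exact Finset.prod_le_prod (fun i _ => ha0) (fun i _ => ha i)
        have h2 : b ^ (M - j) ≤ ∏ i ∈ Iᶜ, (1 - (ν {ω | Y i ω = s}).toReal) := by
          rw [← hcardc, ← Finset.prod_const]
          exact Finset.prod_le_prod (fun i _ => hb0) (fun i _ => by linarith [hb i])
        exact mul_le_mul h1 h2 (by positivity) (Finset.prod_nonneg fun i _ => ENNReal.toReal_nonneg)

end Aux

/-- The key combinatorial bound: `(N-1) ∑_{j=k}^{M} C(M,j) N^{-j} ≤ C(M,⌊M/2⌋)/N^{k-1}`. -/
lemma key_comb (M N k : ℕ) (hN : 2 ≤ N) (hk1 : 1 ≤ k) (hkM : k ≤ M) :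
    ((N : ℝ) - 1) * ∑ j ∈ Finset.Icc k M, (M.choose j : ℝ) * (1 / (N : ℝ)) ^ j
      ≤ (M.choose (M / 2) : ℝ) / (N : ℝ) ^ (k - 1) := by
  have hN0 : (0 : ℝ) < N := by positivity
  have hN1 : (1 : ℝ) < N := by exact_mod_cast hN
  set x : ℝ := 1 / (N : ℝ) with hx
  have hx0 : 0 ≤ x := by positivity
  have hx1 : x < 1 := by rw [hx]; rw [div_lt_one hN0]; exact hN1
  have h1 : ∑ j ∈ Finset.Icc k M, (M.choose j : ℝ) * x ^ j
      ≤ (M.choose (M / 2) : ℝ) * ∑ j ∈ Finset.Icc k M, x ^ j := by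
    rw [Finset.mul_sum]
    apply Finset.sum_le_sum
    intro j hj
    apply mul_le_mul_of_nonneg_right _ (by positivity)
    exact_mod_cast Nat.choose_le_middle j M
  have h2 : ∑ j ∈ Finset.Icc k M, x ^ j ≤ x ^ k / (1 - x) := by
    have : Finset.Icc k M = Finset.Ico k (M + 1) := by
      rw [Finset.Ico_add_one_right_eq_Icc]
    rw [this]
    exact geom_sum_Ico_le_of_lt_one hx0 hx1
  have h3 : x ^ k / (1 - x) = x ^ (k - 1) / ((N : ℝ) - 1) := by
    have hk : k = (k - 1) + 1 := (Nat.succ_pred_eq_of_pos hk1).symm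
    have h1x : 1 - x = ((N : ℝ) - 1) / N := by
      rw [hx]; field_simp
    have hN1' : ((N : ℝ) - 1) ≠ 0 := by linarith
    have hxx : x / (1 - x) = 1 / ((N : ℝ) - 1) := by
      rw [h1x, hx]
      rw [div_div_div_comm, div_self hN0.ne', div_one]
    conv_lhs => rw [hk]
    rw [pow_succ, mul_div_assoc, hxx, mul_one_div]
  have hmid : (0 : ℝ) ≤ (M.choose (M / 2) : ℝ) := by positivity
  calc ((N : ℝ) - 1) * ∑ j ∈ Finset.Icc k M, (M.choose j : ℝ) * x ^ j
      ≤ ((N : ℝ) - 1) * ((M.choose (M / 2) : ℝ) * (x ^ k / (1 - x))) := by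
        apply mul_le_mul_of_nonneg_left _ (by linarith)
        exact le_trans h1 (mul_le_mul_of_nonneg_left h2 hmid)
    _ = (M.choose (M / 2) : ℝ) * (((N : ℝ) - 1) * (x ^ (k - 1) / ((N : ℝ) - 1))) := by
        rw [h3]; ring
    _ = (M.choose (M / 2) : ℝ) * x ^ (k - 1) := by
        rw [mul_div_cancel₀]
        linarith
    _ = (M.choose (M / 2) : ℝ) / (N : ℝ) ^ (k - 1) := by
        rw [hx, div_pow, one_pow, mul_one_div]

/-- Success rate lower bound (Theorem 9): under assumptions (A1)–(A3) and with
`k = M(1-τ)+1`, set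
`γ = α ∑_{i=k}^{M} C(M,i) β_min^i (1-β_max)^{M-i} - α E(M,N,τ)` and
`ρ = α ∑_{i=0}^{k-1} C(M,i) β_min^i (1-β_max)^{M-i} + (1-α) - ((N-α)/(N-1)) E(M,N,τ)`,
where `E(M,N,τ) = C(M,⌊M/2⌋)/N^{k-1}`. If `0 ≤ ρ < 1`, then the success rate of the
LEnSolver with at most `T` skips, `R_s(m^T) = c ∑_{t=0}^{T} r^t` (with `c` the EnSolver's
correct-prediction rate and `r` its skip rate), satisfies
`R_s(m^T) > γ (1 - ρ^{T+1})/(1 - ρ)`. -/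
theorem success_rate_lower_bound {Ω S : Type*} [MeasurableSpace Ω] [MeasurableSpace S]
    [MeasurableSingletonClass S] [Fintype S] [DecidableEq S]
    (μ : Measure Ω) [IsProbabilityMeasure μ]
    (M N k T : ℕ) (hM : 0 < M) (hN : 2 ≤ N) (hcard : Fintype.card S = N)
    (hk1 : 1 ≤ k) (hkM : k ≤ M)
    (Xin : Set Ω) (hXinM : MeasurableSet Xin)
    (α : ℝ) (hα0 : 0 ≤ α) (hα1 : α ≤ 1) (hμXin : μ Xin = ENNReal.ofReal α)
    (Y : Fin M → Ω → S) (hYm : ∀ i, Measurable (Y i))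
    (sx : S) (β : Fin M → ℝ) (βmin βmax : ℝ)
    (hindin : iIndepFun Y (μ[|Xin]))
    (hindout : iIndepFun Y (μ[|Xinᶜ]))
    (hin_sx : ∀ i, (μ[|Xin]) {ω | Y i ω = sx} = ENNReal.ofReal (β i))
    (hin_other : ∀ i s, s ≠ sx →
      (μ[|Xin]) {ω | Y i ω = s} = ENNReal.ofReal ((1 - β i) / ((N : ℝ) - 1)))
    (hout : ∀ i s, (μ[|Xinᶜ]) {ω | Y i ω = s} = (N : ENNReal)⁻¹)
    (hA1 : 1 / (N : ℝ) < βmin)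
    (hminle : ∀ i, βmin ≤ β i) (hminmem : ∃ i, β i = βmin)
    (hmaxle : ∀ i, β i ≤ βmax) (hmaxmem : ∃ i, β i = βmax)
    (γ ρ : ℝ)
    (hγdef : γ = α * ∑ i ∈ Finset.Icc k M,
          (M.choose i : ℝ) * βmin ^ i * (1 - βmax) ^ (M - i)
        - α * ((M.choose (M / 2) : ℝ) / (N : ℝ) ^ (k - 1)))
    (hρdef : ρ = α * ∑ i ∈ Finset.range k,
          (M.choose i : ℝ) * βmin ^ i * (1 - βmax) ^ (M - i)
        + (1 - α)
        - (((N : ℝ) - α) / ((N : ℝ) - 1))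
          * ((M.choose (M / 2) : ℝ) / (N : ℝ) ^ (k - 1)))
    (hρ0 : 0 ≤ ρ) (hρ1 : ρ < 1) :
    (μ {ω | k ≤ voteCount Y sx ω ∧
          ∀ s, s ≠ sx → voteCount Y s ω < voteCount Y sx ω}).toReal
        * ∑ t ∈ Finset.range (T + 1), (μ {ω | ∀ s, voteCount Y s ω < k}).toReal ^ t
      > γ * (1 - ρ ^ (T + 1)) / (1 - ρ) := by
  classical
  -- basic numeric facts
  have hN0 : (0 : ℝ) < N := by positivity
  have hN1R : (1 : ℝ) < N := by exact_mod_cast hN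
  have hNinv0 : (0 : ℝ) < 1 / N := by positivity
  have hβmin0 : 0 < βmin := lt_trans hNinv0 hA1
  set i0 : Fin M := ⟨0, hM⟩ with hi0
  -- μ Xin is neither 0 nor 1
  have hμXin0 : μ Xin ≠ 0 := by
    intro h
    have hc := cond_apply hXinM μ {ω | Y i0 ω = sx}
    rw [hin_sx i0] at hc
    have hz : μ (Xin ∩ {ω | Y i0 ω = sx}) = 0 :=
      le_antisymm (le_trans (measure_mono Set.inter_subset_left) h.le) zero_le
    rw [hz, mul_zero] at hc
    rw [ENNReal.ofReal_eq_zero] at hc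
    have := hminle i0
    linarith
  have hμXinC0 : μ Xinᶜ ≠ 0 := by
    intro h
    have hc := cond_apply hXinM.compl μ {ω | Y i0 ω = sx}
    rw [hout i0 sx] at hc
    have hz : μ (Xinᶜ ∩ {ω | Y i0 ω = sx}) = 0 :=
      le_antisymm (le_trans (measure_mono Set.inter_subset_left) h.le) zero_le
    rw [hz, mul_zero] at hc
    have : ((N : ENNReal))⁻¹ ≠ 0 := by
      simp [ENNReal.inv_ne_zero]
    exact this hc
  haveI hPin : IsProbabilityMeasure (μ[|Xin]) := cond_isProbabilityMeasure hμXin0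
  haveI hPout : IsProbabilityMeasure (μ[|Xinᶜ]) := cond_isProbabilityMeasure hμXinC0
  have hαpos : 0 < α := by
    by_contra h
    push_neg at h
    exact hμXin0 (by rw [hμXin, ENNReal.ofReal_eq_zero.2 h])
  have hμXinCval : μ Xinᶜ = ENNReal.ofReal (1 - α) := by
    rw [prob_compl_eq_one_sub hXinM, hμXin, ← ENNReal.ofReal_one, ← ENNReal.ofReal_sub _ hα0]
  have hα1' : α < 1 := by
    by_contra h
    push_neg at h
    apply hμXinC0
    rw [hμXinCval, ENNReal.ofReal_eq_zero]
    linarith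
  -- bounds on β
  have hβle1 : ∀ i, β i ≤ 1 := by
    intro i
    have h := prob_le_one (μ := μ[|Xin]) (s := {ω | Y i ω = sx})
    rw [hin_sx i] at h
    exact (ENNReal.ofReal_le_one).1 h
  have hβmax1 : βmax ≤ 1 := by
    obtain ⟨i, hi⟩ := hmaxmem
    rw [← hi]; exact hβle1 i
  have hβminmax : βmin ≤ βmax := le_trans (hminle i0) (hmaxle i0)
  have hβmin1 : βmin ≤ 1 := le_trans hβminmax hβmax1
  -- probability values in real form
  have pin_sx : ∀ i, ((μ[|Xin]) {ω | Y i ω = sx}).toReal = β i := by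
    intro i
    rw [hin_sx i, ENNReal.toReal_ofReal (le_of_lt (lt_of_lt_of_le hβmin0 (hminle i)))]
  have pin_other : ∀ i s, s ≠ sx →
      ((μ[|Xin]) {ω | Y i ω = s}).toReal = (1 - β i) / ((N : ℝ) - 1) := by
    intro i s hs
    rw [hin_other i s hs, ENNReal.toReal_ofReal]
    apply div_nonneg (by linarith [hβle1 i]) (by linarith)
  have pout : ∀ i s, ((μ[|Xinᶜ]) {ω | Y i ω = s}).toReal = 1 / (N : ℝ) := by
    intro i s
    rw [hout i s, ← ENNReal.ofReal_natCast, ← ENNReal.ofReal_inv_of_pos hN0, ENNReal.toReal_ofReal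
      (by positivity), one_div]
  -- key real constants
  set qmax : ℝ := (1 - βmin) / ((N : ℝ) - 1) with hqmax
  set Shigh : ℝ := ∑ j ∈ Finset.Icc k M, (M.choose j : ℝ) * βmin ^ j * (1 - βmax) ^ (M - j)
    with hShigh
  set Slow : ℝ := ∑ j ∈ Finset.range k, (M.choose j : ℝ) * βmin ^ j * (1 - βmax) ^ (M - j)
    with hSlow
  set F : ℝ := ∑ j ∈ Finset.Icc k M, (M.choose j : ℝ) * (1 / (N : ℝ)) ^ j with hF
  set Q : ℝ := ∑ j ∈ Finset.Icc k M, (M.choose j : ℝ) * qmax ^ j with hQ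
  set Emnk : ℝ := (M.choose (M / 2) : ℝ) / (N : ℝ) ^ (k - 1) with hEmnk
  have hqmax0 : 0 ≤ qmax := div_nonneg (by linarith) (by linarith)
  have hqmaxlt : qmax < 1 / N := by
    rw [hqmax, div_lt_div_iff₀ (by linarith) hN0]
    have := hA1
    rw [div_lt_iff₀ hN0] at this
    nlinarith
  have hQF : Q < F := by
    apply Finset.sum_lt_sum
    · intro j hj
      apply mul_le_mul_of_nonneg_left _ (by positivity)
      exact pow_le_pow_left₀ hqmax0 hqmaxlt.le j
    · refine ⟨k, Finset.mem_Icc.2 ⟨le_refl k, hkM⟩, ?_⟩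
      apply mul_lt_mul_of_pos_left _ (by exact_mod_cast Nat.choose_pos hkM)
      exact pow_lt_pow_left₀ hqmaxlt hqmax0 (by omega)
  have hQ0 : 0 ≤ Q := Finset.sum_nonneg fun j _ => by positivity
  have hFE : ((N : ℝ) - 1) * F ≤ Emnk := key_comb M N k hN hk1 hkM
  have hF0 : 0 ≤ F := Finset.sum_nonneg fun j _ => by positivity
  -- probability bounds from the auxiliary lemmas
  have hDge : Shigh ≤ ((μ[|Xin]) {ω | voteCount Y sx ω ∈ Finset.Icc k M}).toReal := by
    apply voteCount_prob_ge (μ[|Xin]) Y hYm hindin sx _ βmin (1 - βmax) hβmin0.le (by linarith)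
    · intro i; rw [pin_sx i]; exact hminle i
    · intro i; rw [pin_sx i]; linarith [hmaxle i]
  have hLowge : Slow ≤ ((μ[|Xin]) {ω | voteCount Y sx ω ∈ Finset.range k}).toReal := by
    apply voteCount_prob_ge (μ[|Xin]) Y hYm hindin sx _ βmin (1 - βmax) hβmin0.le (by linarith)
    · intro i; rw [pin_sx i]; exact hminle i
    · intro i; rw [pin_sx i]; linarith [hmaxle i]
  have hUin : ∀ s, s ≠ sx →
      ((μ[|Xin]) {ω | voteCount Y s ω ∈ Finset.Icc k M}).toReal ≤ Q := by
    intro s hs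
    apply voteCount_prob_le (μ[|Xin]) Y hYm hindin s _ qmax
    intro i
    rw [pin_other i s hs, hqmax]
    apply div_le_div_of_nonneg_right _ (by linarith)
    · linarith [hminle i]
  have hUout : ∀ s, ((μ[|Xinᶜ]) {ω | voteCount Y s ω ∈ Finset.Icc k M}).toReal ≤ F := by
    intro s
    apply voteCount_prob_le (μ[|Xinᶜ]) Y hYm hindout s _ (1 / (N : ℝ))
    intro i
    rw [pout i s]
  -- the target events
  set Ain : Set Ω := {ω | k ≤ voteCount Y sx ω ∧
      ∀ s, s ≠ sx → voteCount Y s ω < voteCount Y sx ω} with hAin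
  set R : Set Ω := {ω | ∀ s, voteCount Y s ω < k} with hR
  have hVle : ∀ s ω, voteCount Y s ω ≤ M := by
    intro s ω
    rw [voteCount]
    calc (Finset.univ.filter fun i => Y i ω = s).card ≤ (Finset.univ : Finset (Fin M)).card :=
          Finset.card_filter_le _ _
      _ = M := by simp
  -- subset relations
  have hsub1 : {ω | voteCount Y sx ω ∈ Finset.Icc k M}
      ⊆ Ain ∪ ⋃ s ∈ Finset.univ.erase sx, {ω | voteCount Y s ω ∈ Finset.Icc k M} := by
    intro ω hω
    rw [Set.mem_setOf_eq, Finset.mem_Icc] at hω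
    by_cases h : ∀ s, s ≠ sx → voteCount Y s ω < k
    · left
      exact ⟨hω.1, fun s hs => lt_of_lt_of_le (h s hs) hω.1⟩
    · right
      push_neg at h
      obtain ⟨s, hs, hks⟩ := h
      refine Set.mem_biUnion (Finset.mem_erase.2 ⟨hs, Finset.mem_univ s⟩) ?_
      rw [Set.mem_setOf_eq, Finset.mem_Icc]
      exact ⟨hks, hVle s ω⟩
  have hsub2 : {ω | voteCount Y sx ω ∈ Finset.range k}
      ⊆ R ∪ ⋃ s ∈ Finset.univ.erase sx, {ω | voteCount Y s ω ∈ Finset.Icc k M} := by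
    intro ω hω
    rw [Set.mem_setOf_eq, Finset.mem_range] at hω
    by_cases h : ∀ s, s ≠ sx → voteCount Y s ω < k
    · left
      intro s
      by_cases hs : s = sx
      · rw [hs]; exact hω
      · exact h s hs
    · right
      push_neg at h
      obtain ⟨s, hs, hks⟩ := h
      refine Set.mem_biUnion (Finset.mem_erase.2 ⟨hs, Finset.mem_univ s⟩) ?_
      rw [Set.mem_setOf_eq, Finset.mem_Icc]
      exact ⟨hks, hVle s ω⟩
  have hsub3 : (Set.univ : Set Ω)
      ⊆ R ∪ ⋃ s ∈ (Finset.univ : Finset S), {ω | voteCount Y s ω ∈ Finset.Icc k M} := by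
    intro ω _
    by_cases h : ∀ s, voteCount Y s ω < k
    · left; exact h
    · right
      push_neg at h
      obtain ⟨s, hks⟩ := h
      refine Set.mem_biUnion (Finset.mem_univ s) ?_
      rw [Set.mem_setOf_eq, Finset.mem_Icc]
      exact ⟨hks, hVle s ω⟩
  -- union bound step
  have hstep : ∀ (ν : Measure Ω), IsFiniteMeasure ν → ∀ (D A : Set Ω) (t : Finset S),
      (D ⊆ A ∪ ⋃ s ∈ t, {ω | voteCount Y s ω ∈ Finset.Icc k M}) →
      (ν D).toReal ≤ (ν A).toReal
        + ∑ s ∈ t, (ν {ω | voteCount Y s ω ∈ Finset.Icc k M}).toReal := by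
    intro ν hν D A t hsub
    haveI := hν
    have h1 : ν D ≤ ν A + ∑ s ∈ t, ν {ω | voteCount Y s ω ∈ Finset.Icc k M} :=
      le_trans (measure_mono hsub) (le_trans (measure_union_le _ _)
        (add_le_add_right (measure_biUnion_finset_le t _) _))
    have hsne : (∑ s ∈ t, ν {ω | voteCount Y s ω ∈ Finset.Icc k M}) ≠ ⊤ :=
      ENNReal.sum_ne_top.2 fun s _ => measure_ne_top ν _
    have hfin : (ν A + ∑ s ∈ t, ν {ω | voteCount Y s ω ∈ Finset.Icc k M}) ≠ ⊤ :=
      ENNReal.add_ne_top.2 ⟨measure_ne_top ν _, hsne⟩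
    have h2 := ENNReal.toReal_mono hfin h1
    rwa [ENNReal.toReal_add (measure_ne_top ν _) hsne,
      ENNReal.toReal_sum (fun s _ => measure_ne_top ν _)] at h2
  -- cardinality of erase
  have hcard_erase : ((Finset.univ.erase sx).card : ℝ) = (N : ℝ) - 1 := by
    rw [Finset.card_erase_of_mem (Finset.mem_univ sx), Finset.card_univ, hcard]
    rw [Nat.cast_sub (by omega), Nat.cast_one]
  -- lower bounds on the conditional probabilities of the target events
  have hAin_ge : Shigh - ((N : ℝ) - 1) * Q ≤ ((μ[|Xin]) Ain).toReal := by
    have h1 := hstep (μ[|Xin]) inferInstance _ Ain (Finset.univ.erase sx) hsub1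
    have h2 : ∑ s ∈ Finset.univ.erase sx,
        ((μ[|Xin]) {ω | voteCount Y s ω ∈ Finset.Icc k M}).toReal ≤ ((N : ℝ) - 1) * Q := by
      calc ∑ s ∈ Finset.univ.erase sx,
            ((μ[|Xin]) {ω | voteCount Y s ω ∈ Finset.Icc k M}).toReal
          ≤ ∑ s ∈ Finset.univ.erase sx, Q :=
            Finset.sum_le_sum fun s hs => hUin s (Finset.mem_erase.1 hs).1
        _ = ((N : ℝ) - 1) * Q := by rw [Finset.sum_const, nsmul_eq_mul, hcard_erase]
    linarith
  have hRin_ge : Slow - ((N : ℝ) - 1) * Q ≤ ((μ[|Xin]) R).toReal := by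
    have h1 := hstep (μ[|Xin]) inferInstance _ R (Finset.univ.erase sx) hsub2
    have h2 : ∑ s ∈ Finset.univ.erase sx,
        ((μ[|Xin]) {ω | voteCount Y s ω ∈ Finset.Icc k M}).toReal ≤ ((N : ℝ) - 1) * Q := by
      calc ∑ s ∈ Finset.univ.erase sx,
            ((μ[|Xin]) {ω | voteCount Y s ω ∈ Finset.Icc k M}).toReal
          ≤ ∑ s ∈ Finset.univ.erase sx, Q :=
            Finset.sum_le_sum fun s hs => hUin s (Finset.mem_erase.1 hs).1
        _ = ((N : ℝ) - 1) * Q := by rw [Finset.sum_const, nsmul_eq_mul, hcard_erase]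
    linarith
  have hRout_ge : 1 - (N : ℝ) * F ≤ ((μ[|Xinᶜ]) R).toReal := by
    have h1 := hstep (μ[|Xinᶜ]) inferInstance _ R (Finset.univ : Finset S) hsub3
    have huniv : ((μ[|Xinᶜ]) (Set.univ : Set Ω)).toReal = 1 := by
      rw [measure_univ, ENNReal.toReal_one]
    have h2 : ∑ s ∈ (Finset.univ : Finset S),
        ((μ[|Xinᶜ]) {ω | voteCount Y s ω ∈ Finset.Icc k M}).toReal ≤ (N : ℝ) * F := by
      calc ∑ s ∈ (Finset.univ : Finset S),
            ((μ[|Xinᶜ]) {ω | voteCount Y s ω ∈ Finset.Icc k M}).toReal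
          ≤ ∑ s ∈ (Finset.univ : Finset S), F := Finset.sum_le_sum fun s _ => hUout s
        _ = (N : ℝ) * F := by
            rw [Finset.sum_const, nsmul_eq_mul, Finset.card_univ, hcard]
    rw [huniv] at h1
    linarith
  -- conditional decomposition
  have hcondXin : ∀ t : Set Ω, μ (Xin ∩ t) = μ Xin * (μ[|Xin]) t := by
    intro t
    rw [cond_apply hXinM, ← mul_assoc, ENNReal.mul_inv_cancel hμXin0 (measure_ne_top μ Xin),
      one_mul]
  have hcondXinC : ∀ t : Set Ω, μ (Xinᶜ ∩ t) = μ Xinᶜ * (μ[|Xinᶜ]) t := by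
    intro t
    rw [cond_apply hXinM.compl, ← mul_assoc,
      ENNReal.mul_inv_cancel hμXinC0 (measure_ne_top μ Xinᶜ), one_mul]
  have htoRealXin : ∀ t : Set Ω, (μ (Xin ∩ t)).toReal = α * ((μ[|Xin]) t).toReal := by
    intro t
    rw [hcondXin t, ENNReal.toReal_mul, hμXin, ENNReal.toReal_ofReal hα0]
  have htoRealXinC : ∀ t : Set Ω, (μ (Xinᶜ ∩ t)).toReal = (1 - α) * ((μ[|Xinᶜ]) t).toReal := by
    intro t
    rw [hcondXinC t, ENNReal.toReal_mul, hμXinCval, ENNReal.toReal_ofReal (by linarith)]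
  -- bound on c
  have hc_ge : α * ((μ[|Xin]) Ain).toReal ≤ (μ Ain).toReal := by
    rw [← htoRealXin Ain]
    exact ENNReal.toReal_mono (measure_ne_top μ _) (measure_mono Set.inter_subset_right)
  -- decomposition of r
  have hr_eq : (μ R).toReal
      = α * ((μ[|Xin]) R).toReal + (1 - α) * ((μ[|Xinᶜ]) R).toReal := by
    have h1 : μ (R ∩ Xin) + μ (R \ Xin) = μ R := measure_inter_add_diff R hXinM
    have h2 : R ∩ Xin = Xin ∩ R := Set.inter_comm _ _
    have h3 : R \ Xin = Xinᶜ ∩ R := by rw [Set.diff_eq, Set.inter_comm]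
    rw [← h1, h2, h3, ENNReal.toReal_add (measure_ne_top μ _) (measure_ne_top μ _),
      htoRealXin, htoRealXinC]
  -- strict bounds c > γ and r > ρ
  have hQltE : ((N : ℝ) - 1) * Q < Emnk := by
    have : ((N : ℝ) - 1) * Q < ((N : ℝ) - 1) * F :=
      mul_lt_mul_of_pos_left hQF (by linarith)
    linarith
  have hcγ : γ < (μ Ain).toReal := by
    have h1 : α * (Shigh - ((N : ℝ) - 1) * Q) ≤ α * ((μ[|Xin]) Ain).toReal :=
      mul_le_mul_of_nonneg_left hAin_ge hα0
    have h2 : α * (((N : ℝ) - 1) * Q) < α * Emnk :=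
      mul_lt_mul_of_pos_left hQltE hαpos
    have h1r : α * (Shigh - ((N : ℝ) - 1) * Q)
        = α * Shigh - α * (((N : ℝ) - 1) * Q) := by ring
    rw [hγdef]
    linarith [h1, h2, hc_ge, h1r]
  have hrρ : ρ < (μ R).toReal := by
    have h1 : α * (Slow - ((N : ℝ) - 1) * Q) ≤ α * ((μ[|Xin]) R).toReal :=
      mul_le_mul_of_nonneg_left hRin_ge hα0
    have h2 : (1 - α) * (1 - (N : ℝ) * F) ≤ (1 - α) * ((μ[|Xinᶜ]) R).toReal :=
      mul_le_mul_of_nonneg_left hRout_ge (by linarith)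
    have h3 : α * (((N : ℝ) - 1) * Q) < α * (((N : ℝ) - 1) * F) :=
      mul_lt_mul_of_pos_left (mul_lt_mul_of_pos_left hQF (by linarith)) hαpos
    have h4 : ((N : ℝ) - α) * F ≤ (((N : ℝ) - α) / ((N : ℝ) - 1)) * Emnk := by
      have hpos : (0 : ℝ) ≤ ((N : ℝ) - α) / ((N : ℝ) - 1) := by
        apply div_nonneg <;> linarith
      have h5 := mul_le_mul_of_nonneg_left hFE hpos
      calc ((N : ℝ) - α) * F = (((N : ℝ) - α) / ((N : ℝ) - 1)) * (((N : ℝ) - 1) * F) := by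
            rw [div_mul_eq_mul_div, eq_div_iff (by linarith : ((N : ℝ) - 1) ≠ 0)]
            ring
        _ ≤ (((N : ℝ) - α) / ((N : ℝ) - 1)) * Emnk := h5
    have h5 : α * (((N : ℝ) - 1) * F) + (1 - α) * ((N : ℝ) * F) = ((N : ℝ) - α) * F := by
      ring
    have h6 : (1 - α) * (1 - (N : ℝ) * F) = (1 - α) - (1 - α) * ((N : ℝ) * F) := by ring
    have h7 : α * (Slow - ((N : ℝ) - 1) * Q) = α * Slow - α * (((N : ℝ) - 1) * Q) := by ring
    rw [hρdef, hr_eq]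
    linarith [h1, h2, h3, h4, h5, h6, h7]
  -- final assembly
  have hc0 : 0 ≤ (μ Ain).toReal := ENNReal.toReal_nonneg
  have hsum_le : ∑ t ∈ Finset.range (T + 1), ρ ^ t
      ≤ ∑ t ∈ Finset.range (T + 1), (μ R).toReal ^ t :=
    Finset.sum_le_sum fun t _ => pow_le_pow_left₀ hρ0 hrρ.le t
  have hsum_pos : (0 : ℝ) < ∑ t ∈ Finset.range (T + 1), ρ ^ t := by
    have h1 : (1 : ℝ) = ρ ^ 0 := (pow_zero ρ).symm
    have h2 : ρ ^ 0 ≤ ∑ t ∈ Finset.range (T + 1), ρ ^ t :=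
      Finset.single_le_sum (f := fun t => ρ ^ t) (fun t _ => pow_nonneg hρ0 t)
        (Finset.mem_range.2 (by omega))
    linarith
  have hgeom : ∑ t ∈ Finset.range (T + 1), ρ ^ t = (1 - ρ ^ (T + 1)) / (1 - ρ) := by
    rw [geom_sum_eq (ne_of_lt hρ1), div_eq_div_iff (by linarith) (by linarith)]
    ring
  rw [mul_div_assoc, ← hgeom]
  calc γ * ∑ t ∈ Finset.range (T + 1), ρ ^ t
      < (μ Ain).toReal * ∑ t ∈ Finset.range (T + 1), ρ ^ t :=
        mul_lt_mul_of_pos_right hcγ hsum_pos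
    _ ≤ (μ Ain).toReal * ∑ t ∈ Finset.range (T + 1), (μ R).toReal ^ t :=
        mul_le_mul_of_nonneg_left hsum_le hc0
end
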